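/- arXiv:2002.08231 — 12 statements merged into one kernel-verified Lean document; each statement's English description precedes it below -/
import Mathlib

section
/- Let A ∈ F^{k×k} be a lower-triangular totally-non-singular matrix over a field F and let x ∈ F^k be a nonzero vector with ℓ = split(0^k, x). Define C_x = {j ∈ [k] : x_j ≠ 0} and R_x = {i ∈ [k] : i > ℓ and (Ax)_i = 0}. Then |C_x| > |R_x|. -/
/-- A lower-triangular matrix is *totally non-singular* if every square submatrix
`A[I|J]` with row indices `I = {i₁ < ⋯ < i_r}` and column indices `J = {j₁ < ⋯ < j_r}`
satisfying `i_s ≥ j_s` for all `s` is non-singular. -/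
def TotallyNonSingular {F : Type*} [Field F] {n : ℕ} (A : Matrix (Fin n) (Fin n) F) : Prop :=
  ∀ (r : ℕ) (I J : Fin r → Fin n), StrictMono I → StrictMono J →
    (∀ s : Fin r, J s ≤ I s) → (A.submatrix I J).det ≠ 0

/-- The number of elements of `s` below the `t`-th element of `s` is `t`. -/
private lemma filter_lt_orderEmbOfFin_card {k : ℕ} {s : Finset (Fin k)} {m : ℕ}
    (h : s.card = m) (t : Fin m) :
    (s.filter fun a => a < s.orderEmbOfFin h t).card = t.val := by
  have he : s.filter (fun a => a < s.orderEmbOfFin h t)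
      = (Finset.Iio t).image (s.orderEmbOfFin h) := by
    ext a
    simp only [Finset.mem_filter, Finset.mem_image, Finset.mem_Iio]
    constructor
    · rintro ⟨has, hlt⟩
      have : a ∈ Set.range (s.orderEmbOfFin h) := by
        rw [Finset.range_orderEmbOfFin]; exact has
      obtain ⟨u, rfl⟩ := this
      exact ⟨u, (s.orderEmbOfFin h).lt_iff_lt.mp hlt, rfl⟩
    · rintro ⟨u, hu, rfl⟩
      exact ⟨Finset.orderEmbOfFin_mem s h u, (s.orderEmbOfFin h).lt_iff_lt.mpr hu⟩
  rw [he, Finset.card_image_of_injective _ (s.orderEmbOfFin h).injective, Fin.card_Iio]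

/-- If at most `t` elements of `s` lie below `c`, then the `t`-th element of `s` is `≥ c`. -/
private lemma le_orderEmbOfFin_of_card_filter_le {k : ℕ} {s : Finset (Fin k)} {m : ℕ}
    (h : s.card = m) (t : Fin m) (c : Fin k)
    (hc : (s.filter fun a => a < c).card ≤ t.val) :
    c ≤ s.orderEmbOfFin h t := by
  by_contra hlt
  push_neg at hlt
  have hsub : (Finset.Iic t).image (s.orderEmbOfFin h) ⊆ s.filter fun a => a < c := by
    intro a ha
    simp only [Finset.mem_image, Finset.mem_Iic] at ha
    obtain ⟨u, hu, rfl⟩ := ha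
    exact Finset.mem_filter.mpr ⟨Finset.orderEmbOfFin_mem s h u,
      lt_of_le_of_lt ((s.orderEmbOfFin h).le_iff_le.mpr hu) hlt⟩
  have hcard := Finset.card_le_card hsub
  rw [Finset.card_image_of_injective _ (s.orderEmbOfFin h).injective, Fin.card_Iic] at hcard
  omega

private lemma sum_orderEmbOfFin' {k m : ℕ} {M : Type*} [AddCommMonoid M] (s : Finset (Fin k))
    (h : s.card = m) (f : Fin k → M) :
    ∑ u : Fin m, f (s.orderEmbOfFin h u) = ∑ a ∈ s, f a := by
  have himg : Finset.univ.image (s.orderEmbOfFin h) = s := by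
    ext a
    simp only [Finset.mem_image, Finset.mem_univ, true_and]
    constructor
    · rintro ⟨u, rfl⟩; exact Finset.orderEmbOfFin_mem s h u
    · intro has
      have : a ∈ Set.range (s.orderEmbOfFin h) := by
        rw [Finset.range_orderEmbOfFin]; exact has
      obtain ⟨u, rfl⟩ := this
      exact ⟨u, rfl⟩
  have hsum := Finset.sum_image
    (f := f) (g := s.orderEmbOfFin h) (s := (Finset.univ : Finset (Fin m)))
    (fun a _ b _ hab => (s.orderEmbOfFin h).injective hab)
  rw [himg] at hsum
  exact hsum.symm

/-- If `A` is lower-triangular and totally non-singular, `x ≠ 0` has split `ℓ` with `0`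
(i.e. `x_i = 0` for `i < ℓ` and `x_ℓ ≠ 0`), `C_x = {j : x_j ≠ 0}` and
`R_x = {i : i ≥ ℓ (0-based, i.e. i > ℓ 1-based) and (Ax)_i = 0}`, then `|C_x| > |R_x|`. -/
theorem card_support_gt_card_zeros {F : Type*} [Field F] [DecidableEq F] {k : ℕ}
    (A : Matrix (Fin k) (Fin k) F)
    (hlow : ∀ i j : Fin k, i < j → A i j = 0)
    (htns : TotallyNonSingular A)
    (x : Fin k → F) (ℓ : ℕ) (hℓ : ℓ < k)
    (hsplit : ∀ i : Fin k, i.val < ℓ → x i = 0)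
    (hxℓ : x ⟨ℓ, hℓ⟩ ≠ 0) :
    (Finset.univ.filter fun i : Fin k => ℓ ≤ i.val ∧ A.mulVec x i = 0).card
      < (Finset.univ.filter fun j : Fin k => x j ≠ 0).card := by
  have key : ∀ b : ℕ, b ≤ k → ℓ < b →
      (Finset.univ.filter fun i : Fin k =>
          ℓ ≤ i.val ∧ A.mulVec x i = 0 ∧ i.val < b).card
        < (Finset.univ.filter fun j : Fin k => x j ≠ 0 ∧ j.val < b).card := by
    intro b
    induction b using Nat.strong_induction_on with
    | _ b IH =>
      intro hbk hℓb
      by_contra hcon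
      push_neg at hcon
      set C' := Finset.univ.filter (fun j : Fin k => x j ≠ 0 ∧ j.val < b) with hC'
      set R' := Finset.univ.filter (fun i : Fin k =>
          ℓ ≤ i.val ∧ A.mulVec x i = 0 ∧ i.val < b) with hR'
      have hmemC : ∀ a : Fin k, a ∈ C' ↔ x a ≠ 0 ∧ a.val < b := by
        intro a; rw [hC', Finset.mem_filter]; simp
      have hmemR : ∀ a : Fin k, a ∈ R' ↔ ℓ ≤ a.val ∧ A.mulVec x a = 0 ∧ a.val < b := by
        intro a; rw [hR', Finset.mem_filter]; simp
      obtain ⟨S, hSR, hScard⟩ := Finset.exists_subset_card_eq hcon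
      set m := C'.card with hm
      have hℓC : (⟨ℓ, hℓ⟩ : Fin k) ∈ C' := (hmemC _).mpr ⟨hxℓ, hℓb⟩
      have hmpos : 0 < m := Finset.card_pos.mpr ⟨_, hℓC⟩
      set J := C'.orderEmbOfFin hm.symm with hJ
      set I := S.orderEmbOfFin hScard with hI
      have hJmem : ∀ t : Fin m, J t ∈ C' := fun t => Finset.orderEmbOfFin_mem C' hm.symm t
      have hImem : ∀ t : Fin m, I t ∈ S := fun t => Finset.orderEmbOfFin_mem S hScard t
      -- J 0 = ℓ
      have hJ0 : J ⟨0, hmpos⟩ = (⟨ℓ, hℓ⟩ : Fin k) := by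
        have h1 : ℓ ≤ (J ⟨0, hmpos⟩).val := by
          by_contra hlt
          push_neg at hlt
          exact ((hmemC _).mp (hJmem ⟨0, hmpos⟩)).1 (hsplit _ hlt)
        have h2 : J ⟨0, hmpos⟩ ≤ (⟨ℓ, hℓ⟩ : Fin k) := by
          rw [hJ, Finset.orderEmbOfFin_zero hm.symm hmpos]
          exact Finset.min'_le _ _ hℓC
        exact le_antisymm h2 h1
      -- every element of S is ≥ ℓ
      have hSge : ∀ a ∈ S, ℓ ≤ a.val := fun a ha => ((hmemR a).mp (hSR ha)).1
      -- staircase condition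
      have hIJ : ∀ t : Fin m, J t ≤ I t := by
        intro t
        apply le_orderEmbOfFin_of_card_filter_le
        rcases Nat.eq_zero_or_pos t.val with h0 | hpos
        · have ht0 : t = ⟨0, hmpos⟩ := Fin.ext h0
          rw [ht0, hJ0]
          have hemp : S.filter (fun a => a < (⟨ℓ, hℓ⟩ : Fin k)) = ∅ := by
            apply Finset.filter_eq_empty_iff.mpr
            intro a ha hlt
            rw [Fin.lt_def] at hlt
            simp only [Fin.val_mk] at hlt
            have := hSge a ha
            omega
          rw [hemp]
          simp
        · -- t ≥ 1 : use the induction hypothesis with cutoff (J t).val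
          have hJtb : (J t).val < b := ((hmemC _).mp (hJmem t)).2
          have hℓJt : ℓ < (J t).val := by
            have hlt : J ⟨0, hmpos⟩ < J t := by
              apply (C'.orderEmbOfFin hm.symm).lt_iff_lt.mpr
              rw [Fin.lt_def]
              simpa using hpos
            rw [hJ0, Fin.lt_def] at hlt
            simpa using hlt
          have hIHt := IH (J t).val hJtb (le_of_lt (J t).isLt) hℓJt
          have hRt : Finset.univ.filter (fun i : Fin k =>
              ℓ ≤ i.val ∧ A.mulVec x i = 0 ∧ i.val < (J t).val)
              = R'.filter (fun a => a < J t) := by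
            ext a
            simp only [Finset.mem_filter, Finset.mem_univ, true_and, hmemR, Fin.lt_def]
            constructor
            · rintro ⟨h1, h2, h4⟩; exact ⟨⟨h1, h2, lt_trans h4 hJtb⟩, h4⟩
            · rintro ⟨⟨h1, h2, _⟩, h4⟩; exact ⟨h1, h2, h4⟩
          have hCt : Finset.univ.filter (fun j : Fin k => x j ≠ 0 ∧ j.val < (J t).val)
              = C'.filter (fun a => a < J t) := by
            ext a
            simp only [Finset.mem_filter, Finset.mem_univ, true_and, hmemC, Fin.lt_def]
            constructor
            · rintro ⟨h1, h4⟩; exact ⟨⟨h1, lt_trans h4 hJtb⟩, h4⟩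
            · rintro ⟨⟨h1, _⟩, h4⟩; exact ⟨h1, h4⟩
          rw [hRt, hCt] at hIHt
          have hcnt : (C'.filter (fun a => a < J t)).card = t.val :=
            filter_lt_orderEmbOfFin_card hm.symm t
          have hsub : (S.filter (fun a => a < J t)).card
              ≤ (R'.filter (fun a => a < J t)).card :=
            Finset.card_le_card (Finset.filter_subset_filter _ hSR)
          omega
      -- the singular submatrix
      have hdet : (A.submatrix (fun t => I t) (fun t => J t)).det ≠ 0 :=
        htns m _ _ (S.orderEmbOfFin hScard).strictMono (C'.orderEmbOfFin hm.symm).strictMono hIJ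
      apply hdet
      rw [← Matrix.exists_mulVec_eq_zero_iff]
      refine ⟨fun u => x (J u), ?_, ?_⟩
      · intro hv0
        have h0 := congrFun hv0 ⟨0, hmpos⟩
        rw [hJ0] at h0
        exact hxℓ h0
      · funext t
        obtain ⟨hIℓ, hIax, hIb⟩ := (hmemR _).mp (hSR (hImem t))
        have h1 : ∑ u : Fin m, A (I t) (J u) * x (J u) = ∑ c ∈ C', A (I t) c * x c :=
          sum_orderEmbOfFin' C' hm.symm (fun c => A (I t) c * x c)
        have h2 : ∑ c ∈ C', A (I t) c * x c = ∑ c : Fin k, A (I t) c * x c := by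
          apply Finset.sum_subset (Finset.subset_univ _)
          intro c _ hc
          rw [hmemC] at hc
          push_neg at hc
          by_cases hxc : x c = 0
          · rw [hxc, mul_zero]
          · have hbc : b ≤ c.val := hc hxc
            rw [hlow (I t) c (by rw [Fin.lt_def]; omega), zero_mul]
        have h3 : ∑ c : Fin k, A (I t) c * x c = 0 := by
          rw [← hIax]
          simp [Matrix.mulVec, dotProduct]
        simp only [Matrix.mulVec, dotProduct, Matrix.submatrix_apply, Pi.zero_apply]
        rw [h1, h2, h3]
  have h := key k le_rfl hℓ
  have e1 : (Finset.univ.filter fun i : Fin k =>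
      ℓ ≤ i.val ∧ A.mulVec x i = 0 ∧ i.val < k)
      = Finset.univ.filter fun i : Fin k => ℓ ≤ i.val ∧ A.mulVec x i = 0 := by
    ext i
    simp [i.isLt]
  have e2 : (Finset.univ.filter fun j : Fin k => x j ≠ 0 ∧ j.val < k)
      = Finset.univ.filter fun j : Fin k => x j ≠ 0 := by
    ext j
    simp [j.isLt]
  rwa [e1, e2] at h
end

section
/- Let A ∈ F^{n×n} be a lower-triangular totally-non-singular matrix over a field F. For every k ≤ n and every nonzero x ∈ F^k with ℓ = split(0^k, x), the string y ∈ (F^2)^k given by y_i = (x_i, (A^{(k)}x)_i) has Hamming weight over the alphabet F (i.e., counting nonzero F-coordinates among the 2k coordinates) strictly greater than k − ℓ. Consequently the n-truncated tree code TC_A : F^(≤n) → (F^2)^(≤n) defined by x ↦ (x_i, (A^{(k)}x)_i)_{i ≤ k} has distance greater than 1/2. -/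
open Finset


lemma pudlak_key {F : Type*} [Field F] [DecidableEq F] {k : ℕ}
    (B : Matrix (Fin k) (Fin k) F)
    (hB : ∀ (r : ℕ) (I J : Fin r → Fin k), StrictMono I → StrictMono J →
      (∀ s : Fin r, J s ≤ I s) → (B.submatrix I J).det ≠ 0)
    (hlow : ∀ i j : Fin k, i < j → B i j = 0)
    (x : Fin k → F) (ℓ : Fin k) (hxℓ : x ℓ ≠ 0) (hx0 : ∀ j : Fin k, j < ℓ → x j = 0)
    (Z : Finset (Fin k)) (hZℓ : ∀ z ∈ Z, ℓ < z) (hZ : ∀ z ∈ Z, B.mulVec x z = 0) :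
    ∀ m : ℕ, ℓ.val < m →
      (Z.filter (fun z => z.val < m)).card <
      (univ.filter (fun j : Fin k => x j ≠ 0 ∧ j.val < m)).card := by
  intro m
  induction m using Nat.strong_induction_on with
  | _ m IH =>
  intro hm
  set S : Finset (Fin k) := univ.filter (fun j : Fin k => x j ≠ 0 ∧ j.val < m) with hSdef
  have hℓS : ℓ ∈ S := by simp [hSdef, hxℓ, hm]
  by_contra hcon
  push_neg at hcon
  set s := S.card with hs
  have hspos : 0 < s := card_pos.mpr ⟨ℓ, hℓS⟩
  obtain ⟨T, hTsub, hTcard⟩ := Finset.exists_subset_card_eq hcon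
  -- enumerations
  let Jf : Fin s → Fin k := fun t => ((S.orderIsoOfFin rfl) t : Fin k)
  let If : Fin s → Fin k := fun t => ((T.orderIsoOfFin hTcard) t : Fin k)
  have hJmono : StrictMono Jf := fun a b h => (S.orderIsoOfFin rfl).strictMono h
  have hImono : StrictMono If := fun a b h => (T.orderIsoOfFin hTcard).strictMono h
  have hJS : ∀ t, Jf t ∈ S := fun t => ((S.orderIsoOfFin rfl) t).2
  have hIT : ∀ t, If t ∈ T := fun t => ((T.orderIsoOfFin hTcard) t).2
  have hIZ : ∀ t, If t ∈ Z := fun t => (mem_filter.mp (hTsub (hIT t))).1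
  have hIm : ∀ t, (If t).val < m := fun t => (mem_filter.mp (hTsub (hIT t))).2
  -- the surjectivity of Jf onto S
  have hJsurj : ∀ a ∈ S, ∃ t, Jf t = a := by
    intro a ha
    exact ⟨(S.orderIsoOfFin rfl).symm ⟨a, ha⟩,
      congrArg Subtype.val ((S.orderIsoOfFin rfl).apply_symm_apply ⟨a, ha⟩)⟩
  -- key ordering claim
  have hIJ : ∀ t : Fin s, Jf t ≤ If t := by
    intro t
    by_contra hc
    push_neg at hc  -- If t < Jf t
    rcases eq_or_lt_of_le (le_of_not_gt fun h => (mem_filter.mp (hJS t)).2.1 (hx0 _ h))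
        with hcase | hcase
    · -- ℓ = Jf t : then If t < ℓ contradicts hZℓ
      exact absurd (hZℓ _ (hIZ t)) (not_lt.mpr (le_of_lt (hcase ▸ hc)))
    · -- ℓ < Jf t : use IH at m' = (Jf t).val
      have hmlt : (Jf t).val < m := (mem_filter.mp (hJS t)).2.2
      have hIH := IH (Jf t).val hmlt hcase
      -- RHS of IH equals S.filter (· < Jf t), which has card t.val
      have hset : univ.filter (fun j : Fin k => x j ≠ 0 ∧ j.val < (Jf t).val)
          = S.filter (fun a => a < Jf t) := by
        ext a
        simp only [mem_filter, mem_univ, true_and, hSdef, Fin.lt_def]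
        constructor
        · rintro ⟨h1, h2⟩; exact ⟨⟨h1, h2.trans hmlt⟩, h2⟩
        · rintro ⟨⟨h1, _⟩, h2⟩; exact ⟨h1, h2⟩
      have hcardS : (S.filter (fun a => a < Jf t)).card = t.val := by
        have himg : S.filter (fun a => a < Jf t)
            = (univ.filter (fun u : Fin s => u < t)).image Jf := by
          ext a
          simp only [mem_filter, mem_image, mem_univ, true_and]
          constructor
          · rintro ⟨ha, halt⟩
            obtain ⟨u, rfl⟩ := hJsurj a ha
            exact ⟨u, hJmono.lt_iff_lt.mp halt, rfl⟩
          · rintro ⟨u, hu, rfl⟩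
            exact ⟨hJS u, hJmono hu⟩
        rw [himg, Finset.card_image_of_injective _ hJmono.injective]
        have : (univ.filter (fun u : Fin s => u < t)) = Finset.Iio t := by ext u; simp
        rw [this, Fin.card_Iio]
      -- LHS of IH is at least t.val + 1
      have hlb : t.val + 1 ≤ (Z.filter (fun z => z.val < (Jf t).val)).card := by
        have himg : ((univ.filter (fun u : Fin s => u ≤ t)).image If)
            ⊆ Z.filter (fun z => z.val < (Jf t).val) := by
          intro a ha
          simp only [mem_image, mem_filter, mem_univ, true_and] at ha ⊢
          obtain ⟨u, hu, rfl⟩ := ha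
          refine ⟨hIZ u, ?_⟩
          have : If u ≤ If t := hImono.le_iff_le.mpr hu
          exact lt_of_le_of_lt this hc
        calc t.val + 1 = ((univ.filter (fun u : Fin s => u ≤ t)).image If).card := by
              rw [Finset.card_image_of_injective _ hImono.injective]
              have : (univ.filter (fun u : Fin s => u ≤ t)) = Finset.Iic t := by ext u; simp
              rw [this, Fin.card_Iic]
          _ ≤ _ := Finset.card_le_card himg
      rw [hset, hcardS] at hIH
      omega
  -- determinant contradiction
  have hdet := hB s If Jf hImono hJmono hIJ
  have hmv : (B.submatrix If Jf).mulVec (fun t => x (Jf t)) = 0 := by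
    funext t
    have hsum : ∑ u : Fin s, B (If t) (Jf u) * x (Jf u) = ∑ j ∈ S, B (If t) j * x j := by
      have hSimg : S = univ.image Jf := by
        ext a
        simp only [mem_image, mem_univ, true_and]
        exact ⟨fun ha => (hJsurj a ha).imp (fun u hu => hu), fun ⟨u, hu⟩ => hu ▸ hJS u⟩
      rw [hSimg, Finset.sum_image (fun a _ b _ h => hJmono.injective h)]
    have hfull : ∑ j ∈ S, B (If t) j * x j = ∑ j : Fin k, B (If t) j * x j := by
      apply Finset.sum_subset (subset_univ S)
      intro j _ hj
      simp only [hSdef, mem_filter, mem_univ, true_and, not_and, not_lt] at hj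
      by_cases hxj : x j = 0
      · rw [hxj, mul_zero]
      · have : If t < j := by
          rw [Fin.lt_def]; exact lt_of_lt_of_le (hIm t) (hj hxj)
        rw [hlow _ _ this, zero_mul]
    have hz : ∑ j : Fin k, B (If t) j * x j = 0 := by
      have := hZ _ (hIZ t)
      simpa [Matrix.mulVec, dotProduct] using this
    simp only [Matrix.mulVec, dotProduct, Matrix.submatrix_apply, Pi.zero_apply]
    exact hsum.trans (hfull.trans hz)
  have := Matrix.eq_zero_of_mulVec_eq_zero hdet hmv
  have h0 : x (Jf ⟨0, hspos⟩) = 0 := congrFun this ⟨0, hspos⟩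
  exact (mem_filter.mp (hJS ⟨0, hspos⟩)).2.1 h0



/-- Pudlák's MDS tree code: if `A ∈ F^{n×n}` is lower-triangular and totally non-singular,
then for every `k ≤ n`: (a) every nonzero `x ∈ F^k` with split `ℓ` has
`F`-weight of `(x_i, (A^{(k)}x)_i)_i` (counting nonzero `F`-coordinates) greater than `k − ℓ`;
and (b) the `n`-truncated tree code `x ↦ (x_i, (A^{(k)}x)_i)_i` has distance `> 1/2`. -/
theorem mds_tree_code_distance_half {F : Type*} [Field F] [DecidableEq F] {n : ℕ}
    (A : Matrix (Fin n) (Fin n) F)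
    (hlow : ∀ i j : Fin n, i < j → A i j = 0)
    (htns : TotallyNonSingular A)
    (k : ℕ) (hk : k ≤ n) :
    (∀ (x : Fin k → F) (ℓ : ℕ) (hℓ : ℓ < k),
      (∀ i : Fin k, i.val < ℓ → x i = 0) → x ⟨ℓ, hℓ⟩ ≠ 0 →
      ((k : ℝ) - ℓ) <
        ((Finset.univ.filter fun i : Fin k => x i ≠ 0).card : ℝ) +
        ((Finset.univ.filter fun i : Fin k =>
          (A.submatrix (Fin.castLE hk) (Fin.castLE hk)).mulVec x i ≠ 0).card : ℝ))
    ∧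
    (∀ (x x' : Fin k → F) (ℓ : ℕ) (hℓ : ℓ < k),
      (∀ i : Fin k, i.val < ℓ → x i = x' i) → x ⟨ℓ, hℓ⟩ ≠ x' ⟨ℓ, hℓ⟩ →
      (1 / 2 : ℝ) * ((k : ℝ) - ℓ) <
        hammingDist
          (fun i : Fin k => (x i, (A.submatrix (Fin.castLE hk) (Fin.castLE hk)).mulVec x i))
          (fun i : Fin k => (x' i, (A.submatrix (Fin.castLE hk) (Fin.castLE hk)).mulVec x' i))) := by
  set B := A.submatrix (Fin.castLE hk) (Fin.castLE hk) with hBdef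
  have hcastlt : ∀ a b : Fin k, a < b → Fin.castLE hk a < Fin.castLE hk b := by
    intro a b h; exact h
  have hBtns : ∀ (r : ℕ) (I J : Fin r → Fin k), StrictMono I → StrictMono J →
      (∀ s : Fin r, J s ≤ I s) → (B.submatrix I J).det ≠ 0 := by
    intro r I J hI hJ hIJ
    have : B.submatrix I J = A.submatrix (Fin.castLE hk ∘ I) (Fin.castLE hk ∘ J) := by
      rw [hBdef, Matrix.submatrix_submatrix]
    rw [this]
    exact htns r _ _ (fun a b h => hcastlt _ _ (hI h)) (fun a b h => hcastlt _ _ (hJ h))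
      (fun s => hIJ s)
  have hBlow : ∀ i j : Fin k, i < j → B i j = 0 := by
    intro i j h
    exact hlow _ _ (hcastlt _ _ h)
  have hBdiag : ∀ i : Fin k, B i i ≠ 0 := by
    intro i
    have := hBtns 1 (fun _ => i) (fun _ => i)
      (fun a b h => absurd (Subsingleton.elim a b) (ne_of_lt h))
      (fun a b h => absurd (Subsingleton.elim a b) (ne_of_lt h))
      (fun _ => le_refl _)
    simpa [Matrix.det_fin_one] using this
  have parta : ∀ (x : Fin k → F) (ℓ : ℕ) (hℓ : ℓ < k),
      (∀ i : Fin k, i.val < ℓ → x i = 0) → x ⟨ℓ, hℓ⟩ ≠ 0 →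
      ((k : ℝ) - ℓ) <
        ((Finset.univ.filter fun i : Fin k => x i ≠ 0).card : ℝ) +
        ((Finset.univ.filter fun i : Fin k => B.mulVec x i ≠ 0).card : ℝ) := by
    intro x ℓ hℓ hx0 hxℓ
    set ℓ' : Fin k := ⟨ℓ, hℓ⟩ with hℓ'def
    have hx0' : ∀ j : Fin k, j < ℓ' → x j = 0 := fun j hj => hx0 j hj
    have hBxℓ : B.mulVec x ℓ' ≠ 0 := by
      have hsum : B.mulVec x ℓ' = B ℓ' ℓ' * x ℓ' := by
        rw [Matrix.mulVec, dotProduct]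
        apply Finset.sum_eq_single ℓ'
        · intro b _ hb
          rcases lt_or_gt_of_ne hb with h | h
          · rw [hx0' b h, mul_zero]
          · rw [hBlow _ _ h, zero_mul]
        · intro h; exact absurd (mem_univ ℓ') h
      rw [hsum]
      exact mul_ne_zero (hBdiag ℓ') hxℓ
    set Z : Finset (Fin k) := univ.filter (fun i : Fin k => ℓ' < i ∧ B.mulVec x i = 0)
      with hZdef
    have hkey := pudlak_key B hBtns hBlow x ℓ' hxℓ hx0' Z
      (fun z hz => (mem_filter.mp hz).2.1) (fun z hz => (mem_filter.mp hz).2.2) k hℓ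
    simp only [Fin.is_lt, and_true, Finset.filter_true] at hkey
    set S : Finset (Fin k) := univ.filter (fun i : Fin k => x i ≠ 0)
    set T : Finset (Fin k) := univ.filter (fun i : Fin k => B.mulVec x i ≠ 0) with hTdef
    have hsub : univ.filter (fun i : Fin k => ℓ' ≤ i) ⊆ T ∪ Z := by
      intro i hi
      have hi' : ℓ' ≤ i := (mem_filter.mp hi).2
      by_cases h : B.mulVec x i = 0
      · have hne : i ≠ ℓ' := fun he => hBxℓ (he ▸ h)
        exact mem_union_right _ (mem_filter.mpr ⟨mem_univ _,
          lt_of_le_of_ne hi' (Ne.symm hne), h⟩)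
      · exact mem_union_left _ (mem_filter.mpr ⟨mem_univ _, h⟩)
    have hcard1 : (univ.filter (fun i : Fin k => ℓ' ≤ i)).card = k - ℓ := by
      have : univ.filter (fun i : Fin k => ℓ' ≤ i) = Finset.Ici ℓ' := by
        ext i; simp
      rw [this, Fin.card_Ici]
    have hnat : k - ℓ < S.card + T.card := by
      have h1 : k - ℓ ≤ T.card + Z.card := by
        rw [← hcard1]
        exact le_trans (card_le_card hsub) (card_union_le _ _)
      omega
    have : ((k - ℓ : ℕ) : ℝ) < ((S.card : ℕ) : ℝ) + ((T.card : ℕ) : ℝ) := by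
      exact_mod_cast hnat
    rwa [Nat.cast_sub hℓ.le] at this
  refine ⟨parta, ?_⟩
  intro x x' ℓ hℓ h1 h2
  have hd := parta (x - x') ℓ hℓ
    (fun i hi => by simp [sub_eq_zero, h1 i hi])
    (by simp [sub_ne_zero, h2])
  set H : Finset (Fin k) :=
    univ.filter (fun i : Fin k => (x i, B.mulVec x i) ≠ (x' i, B.mulVec x' i)) with hHdef
  have hham : hammingDist (fun i : Fin k => (x i, B.mulVec x i))
      (fun i : Fin k => (x' i, B.mulVec x' i)) = H.card := by
    rw [hammingDist]
  have hc1 : (univ.filter fun i : Fin k => (x - x') i ≠ 0).card ≤ H.card := by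
    apply card_le_card
    intro i hi
    simp only [hHdef, mem_filter, mem_univ, true_and, Pi.sub_apply, sub_ne_zero, ne_eq,
      Prod.mk.injEq, not_and] at hi ⊢
    exact fun h => absurd h hi
  have hc2 : (univ.filter fun i : Fin k => B.mulVec (x - x') i ≠ 0).card ≤ H.card := by
    apply card_le_card
    intro i hi
    simp only [hHdef, mem_filter, mem_univ, true_and, Matrix.mulVec_sub, Pi.sub_apply,
      sub_ne_zero, ne_eq, Prod.mk.injEq, not_and] at hi ⊢
    exact fun _ => hi
  have hc1' : ((univ.filter fun i : Fin k => (x - x') i ≠ 0).card : ℝ) ≤ (H.card : ℝ) :=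
    Nat.cast_le.mpr hc1
  have hc2' : ((univ.filter fun i : Fin k => B.mulVec (x - x') i ≠ 0).card : ℝ) ≤ (H.card : ℝ) :=
    Nat.cast_le.mpr hc2
  rw [hham]
  linarith
end

section
/- Let A ∈ F^{2n×2n} be a lower-triangular totally-non-singular matrix over a field F. For x ∈ F^k (k ≤ n), let x' ∈ F^{2k} be obtained by replacing each symbol x_i by the pair (x_i, 0). Then for every nonzero x ∈ F^k with ℓ = split(0^k, x), the vector y' = A^{(2k)}x' ∈ F^{2k} has Hamming weight over F strictly greater than k − ℓ = (2k − 2ℓ)/2; hence the n-truncated tree code x ↦ A^{(2k)}x', viewed as a map F^(≤n) → (F^2)^(≤n), has distance greater than 1/2. -/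
/-- `x' ∈ F^{2k}` obtained from `x ∈ F^k` by replacing each symbol `x_i` by the pair `(x_i, 0)`. -/
def doubled {F : Type*} [Zero F] {k : ℕ} (x : Fin k → F) : Fin (2 * k) → F :=
  fun p => if p.val % 2 = 0 then x ⟨p.val / 2, by omega⟩ else 0

/-!
Let `u ∈ F^N` with `u c ≠ 0`. In every window `[c, q]`, the zeros of `A *ᵥ u` are fewer than the
nonzero entries of `u` up to `q`. In a shortest window where this fails, list the nonzero positions
`J` of `u` and as many of the first zeros `I` of `A *ᵥ u`; minimality forces `J s ≤ I s`, so
`A[I|J]` is non-singular, while lower-triangularity shows that it maps `u ∘ J ≠ 0` to zero.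

For `u = x'` with split `ℓ`, `u` has at most `k - ℓ` nonzero entries and the window `[2ℓ, 2k)` has
`2(k - ℓ)` positions, so `A^{(2k)} x'` has more than `k - ℓ` nonzero entries. Pairing coordinates
at most halves Hamming distances, and linearity turns the distance into a weight.
-/

open Finset Matrix

namespace Finset

variable {α : Type*} [LinearOrder α]

theorem succ_le_card_filter_le_of_orderEmbedding {Z : Finset α} {r : ℕ} (e : Fin r ↪o α)
    (he : ∀ t, e t ∈ Z) (s : Fin r) : s.val + 1 ≤ #(Z.filter (· ≤ e s)) := by
  calc s.val + 1 = #((Iic s).map e.toEmbedding) := by simp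
    _ ≤ #(Z.filter (· ≤ e s)) := card_le_card fun a ha => by
      obtain ⟨t, ht, rfl⟩ := mem_map.mp ha
      exact mem_filter.mpr ⟨he t, e.monotone (mem_Iic.mp ht)⟩

theorem card_filter_lt_orderEmbOfFin_le (S : Finset α) {r : ℕ} (h : #S = r) (s : Fin r) :
    #(S.filter (· < S.orderEmbOfFin h s)) ≤ s := by
  calc #(S.filter (· < S.orderEmbOfFin h s))
      ≤ #((Iio s).map (S.orderEmbOfFin h).toEmbedding) := card_le_card fun a ha => by
        obtain ⟨haS, has⟩ := mem_filter.mp ha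
        obtain ⟨t, rfl⟩ : a ∈ Set.range (S.orderEmbOfFin h) := by
          rwa [range_orderEmbOfFin]
        exact mem_map_of_mem _ (mem_Iio.mpr ((S.orderEmbOfFin h).lt_iff_lt.mp has))
    _ = s := by simp

end Finset

section TotallyNonSingular

variable {F : Type*} [Field F]

theorem TotallyNonSingular.submatrix {m n : ℕ} {A : Matrix (Fin n) (Fin n) F}
    (hA : TotallyNonSingular A) {e : Fin m → Fin n} (he : StrictMono e) :
    TotallyNonSingular (A.submatrix e e) := by
  intro r I J hI hJ hJI
  rw [Matrix.submatrix_submatrix]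
  exact hA r (e ∘ I) (e ∘ J) (he.comp hI) (he.comp hJ) fun s => he.monotone (hJI s)

variable {N : ℕ} {A : Matrix (Fin N) (Fin N) F}

theorem TotallyNonSingular.apply_eq_zero_of_mulVec_apply_eq_zero
    (hlow : ∀ i j : Fin N, i < j → A i j = 0) (hA : TotallyNonSingular A)
    {r : ℕ} {I J : Fin r → Fin N} (hI : StrictMono I) (hJ : StrictMono J)
    (hJI : ∀ s, J s ≤ I s) {u : Fin N → F} (hu : ∀ j, u j ≠ 0 → j ∈ Set.range J ∨ ∀ s, I s < j)
    (hAu : ∀ s, (A *ᵥ u) (I s) = 0) (s : Fin r) : u (J s) = 0 := by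
  have hsub : A.submatrix I J *ᵥ (u ∘ J) = 0 := by
    funext t
    rw [Pi.zero_apply, ← hAu t]
    refine Fintype.sum_of_injective J hJ.injective _ _ (fun j hj => ?_) fun _ => rfl
    rcases eq_or_ne (u j) 0 with h | h
    · rw [h, mul_zero]
    · exact mul_eq_zero_of_left (hlow _ _ ((hu j h).resolve_left hj t)) _
  exact congrFun (Matrix.eq_zero_of_mulVec_eq_zero (hA r I J hI hJ hJI) hsub) s

variable [DecidableEq F]

theorem TotallyNonSingular.card_filter_mulVec_eq_zero_lt
    (hlow : ∀ i j : Fin N, i < j → A i j = 0) (hA : TotallyNonSingular A)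
    {u : Fin N → F} {c : Fin N} (hc : u c ≠ 0) {q : Fin N} (hcq : c ≤ q) :
    #((Icc c q).filter fun p => (A *ᵥ u) p = 0) < #((Iic q).filter fun j => u j ≠ 0) := by
  induction q using WellFoundedLT.induction with
  | _ q ih =>
  set Z := (Icc c q).filter fun p => (A *ᵥ u) p = 0
  set S := (Iic q).filter fun j => u j ≠ 0
  by_contra! hSZ
  set J := S.orderEmbOfFin rfl
  set I := Z.orderEmbOfCardLe hSZ
  have hIZ : ∀ s, I s ∈ Z := Z.orderEmbOfCardLe_mem hSZ
  have hJS : ∀ s, J s ∈ S := S.orderEmbOfFin_mem rfl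
  -- Were some `I s < J s`, the window ending at `I s` would already contain `s + 1` zeros of
  -- `A *ᵥ u` but at most `s` nonzeros of `u`.
  have hJI : ∀ s, J s ≤ I s := by
    intro s
    by_contra! hIJ
    have hIq : I s < q := hIJ.trans_le (mem_Iic.mp (mem_filter.mp (hJS s)).1)
    have hcI : c ≤ I s := (mem_Icc.mp (mem_filter.mp (hIZ s)).1).1
    have hzeros : #(Z.filter (· ≤ I s)) ≤ #((Icc c (I s)).filter fun p => (A *ᵥ u) p = 0) :=
      card_le_card fun p hp => by
        simp only [Z, mem_filter, mem_Icc] at hp ⊢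
        exact ⟨⟨hp.1.1.1, hp.2⟩, hp.1.2⟩
    have hsupp : #((Iic (I s)).filter fun j => u j ≠ 0) ≤ #(S.filter (· < J s)) :=
      card_le_card fun j hj => by
        simp only [S, mem_filter, mem_Iic] at hj ⊢
        exact ⟨⟨hj.1.trans hIq.le, hj.2⟩, hj.1.trans_lt hIJ⟩
    have hle : s.val + 1 ≤ #(Z.filter (· ≤ I s)) :=
      succ_le_card_filter_le_of_orderEmbedding I hIZ s
    have hlt : #(S.filter (· < J s)) ≤ s := card_filter_lt_orderEmbOfFin_le S rfl s
    have := ih (I s) hIq hcI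
    omega
  have hcS : c ∈ S := mem_filter.mpr ⟨mem_Iic.mpr hcq, hc⟩
  have hS : 0 < #S := card_pos.mpr ⟨c, hcS⟩
  refine (mem_filter.mp (hJS ⟨0, hS⟩)).2 (hA.apply_eq_zero_of_mulVec_apply_eq_zero hlow I.strictMono
    J.strictMono hJI (fun j hj => ?_) (fun s => (mem_filter.mp (hIZ s)).2) _)
  by_cases hjq : j ≤ q
  · left
    rw [range_orderEmbOfFin]
    exact mem_filter.mpr ⟨mem_Iic.mpr hjq, hj⟩
  · exact Or.inr fun s => (mem_Icc.mp (mem_filter.mp (hIZ s)).1).2.trans_lt (not_le.mp hjq)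

theorem TotallyNonSingular.lt_add_hammingNorm_add_hammingNorm_mulVec
    (hlow : ∀ i j : Fin N, i < j → A i j = 0) (hA : TotallyNonSingular A)
    {u : Fin N → F} {c : Fin N} (hc : u c ≠ 0) :
    N < c + hammingNorm u + hammingNorm (A *ᵥ u) := by
  set q : Fin N := ⟨N - 1, Nat.sub_one_lt_of_lt c.isLt⟩
  have hcq : c ≤ q := Fin.le_def.mpr (Nat.le_sub_one_of_lt c.isLt)
  have hwindow := hA.card_filter_mulVec_eq_zero_lt hlow hc hcq
  have hsplit : #((Icc c q).filter fun p => (A *ᵥ u) p = 0)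
      + #((Icc c q).filter fun p => ¬(A *ᵥ u) p = 0) = N - c := by
    rw [card_filter_add_card_filter_not, Fin.card_Icc]
    have := c.isLt
    simp only [q]
    omega
  have hsupp : #((Iic q).filter fun j => u j ≠ 0) ≤ hammingNorm u :=
    card_le_card (filter_subset_filter _ (subset_univ _))
  have hnonzero : #((Icc c q).filter fun p => ¬(A *ᵥ u) p = 0) ≤ hammingNorm (A *ᵥ u) :=
    card_le_card (filter_subset_filter _ (subset_univ _))
  omega

end TotallyNonSingular

section Doubled

variable {F : Type*} {k : ℕ}

theorem doubled_two_mul [Zero F] (x : Fin k → F) (i : Fin k) :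
    doubled x ⟨2 * i.val, by omega⟩ = x i := by
  simp [doubled]

theorem doubled_eq_zero_of_odd [Zero F] (x : Fin k → F) {p : Fin (2 * k)} (hp : p.val % 2 = 1) :
    doubled x p = 0 := by
  simp [doubled, hp]

theorem doubled_sub [AddGroup F] (x y : Fin k → F) : doubled (x - y) = doubled x - doubled y := by
  funext p
  by_cases hp : p.val % 2 = 0 <;> simp [doubled, hp]

theorem hammingNorm_doubled [Zero F] [DecidableEq F] (x : Fin k → F) :
    hammingNorm (doubled x) = hammingNorm x := by
  symm
  refine card_nbij (fun i => ⟨2 * i.val, by omega⟩) (fun i hi => ?_) (fun i _ j _ hij => ?_)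
    (fun p hp => ?_)
  · simpa [doubled_two_mul] using hi
  · simpa [Fin.ext_iff] using hij
  · have hp0 : doubled x p ≠ 0 := by simpa using hp
    have heven : p.val % 2 = 0 := by
      by_contra h
      exact hp0 (doubled_eq_zero_of_odd x (by omega))
    refine ⟨⟨p.val / 2, by omega⟩, ?_, Fin.ext (by simp; omega)⟩
    have hx : doubled x p = x ⟨p.val / 2, by omega⟩ := by simp [doubled, heven]
    simpa [← hx] using hp0

end Doubled

theorem hammingNorm_le_sub_of_forall_lt_eq_zero {F : Type*} [Zero F] [DecidableEq F] {k ℓ : ℕ}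
    {x : Fin k → F} (hx : ∀ i : Fin k, i.val < ℓ → x i = 0) : hammingNorm x ≤ k - ℓ := by
  rw [← Nat.card_Ico]
  refine card_le_card_of_injOn Fin.val (fun i hi => ?_) Fin.val_injective.injOn
  have hi0 : x i ≠ 0 := by simpa using hi
  exact mem_Ico.mpr ⟨not_lt.mp fun h => hi0 (hx i h), i.isLt⟩

theorem TotallyNonSingular.lt_add_hammingNorm_mulVec_doubled {F : Type*} [Field F] [DecidableEq F]
    {k : ℕ} {B : Matrix (Fin (2 * k)) (Fin (2 * k)) F}
    (hlow : ∀ i j : Fin (2 * k), i < j → B i j = 0) (hB : TotallyNonSingular B)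
    {x : Fin k → F} {ℓ : ℕ} (hℓ : ℓ < k) (hx : ∀ i : Fin k, i.val < ℓ → x i = 0)
    (hxℓ : x ⟨ℓ, hℓ⟩ ≠ 0) : k < ℓ + hammingNorm (B *ᵥ doubled x) := by
  have hc : doubled x ⟨2 * ℓ, by omega⟩ ≠ 0 := by rwa [doubled_two_mul x ⟨ℓ, hℓ⟩]
  have hbound := hB.lt_add_hammingNorm_add_hammingNorm_mulVec hlow hc
  have hsupp := hammingNorm_le_sub_of_forall_lt_eq_zero hx
  rw [hammingNorm_doubled] at hbound
  simp only at hbound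
  omega

def pairUp {β : Type*} {k : ℕ} (y : Fin (2 * k) → β) : Fin k → β × β :=
  fun i => (y ⟨2 * i.val, by omega⟩, y ⟨2 * i.val + 1, by omega⟩)

theorem hammingDist_le_two_mul_hammingDist_pairUp {β : Type*} [DecidableEq β] {k : ℕ}
    (y y' : Fin (2 * k) → β) : hammingDist y y' ≤ 2 * hammingDist (pairUp y) (pairUp y') := by
  set T := univ.filter fun i => pairUp y i ≠ pairUp y' i
  have hcover : (univ.filter fun p => y p ≠ y' p) ⊆
      T.image (fun i => ⟨2 * i.val, by omega⟩) ∪ T.image (fun i => ⟨2 * i.val + 1, by omega⟩) := by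
    intro p hp
    have hyp : y p ≠ y' p := (mem_filter.mp hp).2
    set i : Fin k := ⟨p.val / 2, by omega⟩
    rcases Nat.mod_two_eq_zero_or_one p.val with h | h
    · have hpi : p = ⟨2 * i.val, by omega⟩ := Fin.ext (by simp only [i]; omega)
      refine mem_union_left _ (mem_image.mpr ⟨i, mem_filter.mpr ⟨mem_univ _, ?_⟩, hpi.symm⟩)
      simp [pairUp, ← hpi, hyp]
    · have hpi : p = ⟨2 * i.val + 1, by omega⟩ := Fin.ext (by simp only [i]; omega)
      refine mem_union_right _ (mem_image.mpr ⟨i, mem_filter.mpr ⟨mem_univ _, ?_⟩, hpi.symm⟩)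
      simp [pairUp, ← hpi, hyp]
  calc hammingDist y y' ≤ #T + #T := (card_le_card hcover).trans
        ((card_union_le _ _).trans (add_le_add card_image_le card_image_le))
    _ = 2 * hammingDist (pairUp y) (pairUp y') := (two_mul _).symm

/-- The alternate MDS construction: for a lower-triangular totally non-singular
`A ∈ F^{2n×2n}`, and `k ≤ n`:
(a) for every nonzero `x ∈ F^k` with split `ℓ`, the vector `y' = A^{(2k)}x'` has
Hamming weight over `F` strictly greater than `k − ℓ`;
(b) hence the tree code `x ↦ A^{(2k)}x'`, viewed as mapping to `(F²)^k` (pairing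
consecutive coordinates), has distance `> 1/2`. -/
theorem alternate_mds_tree_code_distance_half {F : Type*} [Field F] [DecidableEq F] {n : ℕ}
    (A : Matrix (Fin (2 * n)) (Fin (2 * n)) F)
    (hlow : ∀ i j : Fin (2 * n), i < j → A i j = 0)
    (htns : TotallyNonSingular A)
    (k : ℕ) (hk : k ≤ n) :
    (∀ (x : Fin k → F) (ℓ : ℕ) (hℓ : ℓ < k),
      (∀ i : Fin k, i.val < ℓ → x i = 0) → x ⟨ℓ, hℓ⟩ ≠ 0 →
      ((k : ℝ) - ℓ) <
        ((Finset.univ.filter fun p : Fin (2 * k) =>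
          (A.submatrix (Fin.castLE (by omega)) (Fin.castLE (by omega))).mulVec (doubled x) p ≠ 0).card : ℝ))
    ∧
    (∀ (x x' : Fin k → F) (ℓ : ℕ) (hℓ : ℓ < k),
      (∀ i : Fin k, i.val < ℓ → x i = x' i) → x ⟨ℓ, hℓ⟩ ≠ x' ⟨ℓ, hℓ⟩ →
      (1 / 2 : ℝ) * ((k : ℝ) - ℓ) <
        hammingDist
          (fun i : Fin k =>
            ((A.submatrix (Fin.castLE (by omega)) (Fin.castLE (by omega))).mulVec (doubled x)
                (⟨2 * i.val, by omega⟩ : Fin (2 * k)),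
             (A.submatrix (Fin.castLE (by omega)) (Fin.castLE (by omega))).mulVec (doubled x)
                (⟨2 * i.val + 1, by omega⟩ : Fin (2 * k))))
          (fun i : Fin k =>
            ((A.submatrix (Fin.castLE (by omega)) (Fin.castLE (by omega))).mulVec (doubled x')
                (⟨2 * i.val, by omega⟩ : Fin (2 * k)),
             (A.submatrix (Fin.castLE (by omega)) (Fin.castLE (by omega))).mulVec (doubled x')
                (⟨2 * i.val + 1, by omega⟩ : Fin (2 * k))))) := by
  have h2 : 2 * k ≤ 2 * n := by omega
  set B := A.submatrix (Fin.castLE h2) (Fin.castLE h2)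
  have hB : TotallyNonSingular B := htns.submatrix (Fin.strictMono_castLE h2)
  have hlowB : ∀ i j : Fin (2 * k), i < j → B i j = 0 := fun i j hij => hlow _ _ hij
  refine ⟨fun x ℓ hℓ hx hxℓ => ?_, fun x x' ℓ hℓ hxx' hne => ?_⟩
  · have hweight : (k : ℝ) < ℓ + hammingNorm (B *ᵥ doubled x) := by
      exact_mod_cast hB.lt_add_hammingNorm_mulVec_doubled hlowB hℓ hx hxℓ
    change (k : ℝ) - ℓ < hammingNorm (B *ᵥ doubled x)
    linarith
  · have hweight := hB.lt_add_hammingNorm_mulVec_doubled hlowB (x := x' - x) hℓ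
      (fun i hi => sub_eq_zero.mpr (hxx' i hi).symm) (sub_ne_zero.mpr hne.symm)
    rw [doubled_sub, mulVec_sub, sub_eq_neg_add, ← hammingDist_eq_hammingNorm] at hweight
    have hpair := hammingDist_le_two_mul_hammingDist_pairUp (B *ᵥ doubled x) (B *ᵥ doubled x')
    have hdist : (k : ℝ) <
        ℓ + 2 * hammingDist (pairUp (B *ᵥ doubled x)) (pairUp (B *ᵥ doubled x')) := by
      exact_mod_cast hweight.trans_le (Nat.add_le_add_left hpair ℓ)
    change (1 / 2 : ℝ) * (k - ℓ) < hammingDist (pairUp (B *ᵥ doubled x)) (pairUp (B *ᵥ doubled x'))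
    linarith
end

section
/- Let r, s ≥ 1 be integers and let A ∈ F^{(r+s)n×(r+s)n} be a lower-triangular totally-non-singular matrix over a field F. For x ∈ (F^s)^k (k ≤ n), let x' ∈ F^{(r+s)k} be obtained by replacing each block x_i ∈ F^s by the vector in F^{r+s} obtained by appending r zeros. Then the n-truncated tree code TC_{A,(s,r)} : (F^s)^(≤n) → (F^{r+s})^(≤n) defined by x ↦ A^{((r+s)k)}x' (output viewed as k blocks in F^{r+s}) has distance greater than r/(r+s); that is, for every nonzero x ∈ (F^s)^k with ℓ = split(0, x), the number of blocks i ∈ [k] on which A^{((r+s)k)}x' is nonzero exceeds (r/(r+s))·(k − ℓ). -/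
/-- `x' ∈ F^{(r+s)k}` obtained from `x ∈ (F^s)^k` by appending `r` zeros to each block. -/
def padBlocks {F : Type*} [Zero F] (r s k : ℕ) (x : Fin k → (Fin s → F)) :
    Fin ((r + s) * k) → F :=
  fun p =>
    if h : p.val % (r + s) < s then
      x ⟨p.val / (r + s), Nat.div_lt_of_lt_mul p.isLt⟩ ⟨p.val % (r + s), h⟩
    else 0

theorem blockIdx_lt {r s k : ℕ} (i : Fin k) (t : Fin (r + s)) :
    i.val * (r + s) + t.val < (r + s) * k :=
  calc i.val * (r + s) + t.val < i.val * (r + s) + (r + s) := Nat.add_lt_add_left t.isLt _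
    _ = (i.val + 1) * (r + s) := by ring
    _ ≤ k * (r + s) := Nat.mul_le_mul_right _ i.isLt
    _ = (r + s) * k := Nat.mul_comm _ _

/-!
Let `I` be the positions of the vanishing output blocks and `J` the support of `x'`. If `B` is
totally non-singular and on every suffix `J` has at most as many elements as `I`, then pairing `J`
with the last `#J` elements of `I` gives a square submatrix allowed in the definition, so `x'`
vanishes on `J`. By lower-triangularity this applies to a prefix `[0, p)` as soon as the excess
`#I - #J` on `[c, N)` is smallest at `c = p` among all `c ≤ p`. If too few output blocks were
nonzero, the excess at the block boundaries up to the split `ℓ` would be at least its final value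
`0`, so a minimiser over the later boundaries is such a `p` (blocks lie inside or outside `I`,
so boundaries suffice), and `x'` would vanish on block `ℓ`.
-/

open Finset Matrix

theorem Finset.orderEmbOfFin_le_of_card_filter_le {α : Type*} [LinearOrder α] {I J : Finset α}
    (hdom : ∀ c, #{j ∈ J | c ≤ j} ≤ #{i ∈ I | c ≤ i}) (hcard : #J ≤ #I) (t : Fin #J) :
    J.orderEmbOfFin rfl t ≤ I.orderEmbOfFin rfl ⟨#I - #J + t, by omega⟩ := by
  by_contra! hlt
  set c := J.orderEmbOfFin rfl t
  have hJc : #J - t ≤ #{j ∈ J | c ≤ j} := by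
    rw [← Fin.card_Ici t, ← card_map (J.orderEmbOfFin rfl).toEmbedding]
    refine card_le_card fun j hj => ?_
    obtain ⟨u, hu, rfl⟩ := mem_map.mp hj
    exact mem_filter.mpr
      ⟨orderEmbOfFin_mem _ _ _, (J.orderEmbOfFin rfl).monotone (mem_Ici.mp hu)⟩
  have hIc : #{i ∈ I | c ≤ i} ≤ #I - 1 - (#I - #J + t) := by
    rw [← Fin.card_Ioi ⟨#I - #J + t, by omega⟩,
      ← card_map (I.orderEmbOfFin rfl).toEmbedding]
    refine card_le_card fun i hi => ?_
    obtain ⟨hiI, hci⟩ := mem_filter.mp hi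
    obtain ⟨u, rfl⟩ : i ∈ Set.range (I.orderEmbOfFin rfl) := by simpa using hiI
    exact mem_map_of_mem _ (mem_Ioi.mpr ((I.orderEmbOfFin rfl).lt_iff_lt.mp (hlt.trans_le hci)))
  have := hdom c
  omega

theorem exists_mem_Ioc_forall_le_of_le {g : ℕ → ℤ} {a b : ℕ} (hab : a < b)
    (h : ∀ c ≤ a, g b ≤ g c) : ∃ p, a < p ∧ p ≤ b ∧ ∀ c ≤ p, g p ≤ g c := by
  obtain ⟨p, hp, hmin⟩ := exists_min_image (Ioc a b) g ⟨b, mem_Ioc.mpr ⟨hab, le_rfl⟩⟩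
  obtain ⟨hap, hpb⟩ := mem_Ioc.mp hp
  refine ⟨p, hap, hpb, fun c hc => ?_⟩
  by_cases hca : c ≤ a
  · exact (hmin b (mem_Ioc.mpr ⟨hab, le_rfl⟩)).trans (h c hca)
  · exact hmin c (mem_Ioc.mpr ⟨by omega, hc.trans hpb⟩)

theorem card_filter_div_mod (d k : ℕ) (P Q : ℕ → Prop) [DecidablePred P] [DecidablePred Q] :
    #{q : Fin (d * k) | P (q.val / d) ∧ Q (q.val % d)} =
      #{b ∈ range k | P b} * #{e ∈ range d | Q e} := by
  rw [← card_product]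
  refine card_nbij (fun q => (q.val / d, q.val % d)) (fun q hq => ?_) (fun q _ q' _ h => ?_)
    (fun be hbe => ?_)
  · have hd : 0 < d := Nat.pos_of_ne_zero fun h => by simpa [h] using q.isLt
    simp only [coe_filter, mem_univ, true_and, Set.mem_ofPred_eq, coe_product, Set.mem_prod,
      mem_range] at hq ⊢
    exact ⟨⟨Nat.div_lt_of_lt_mul q.isLt, hq.1⟩, Nat.mod_lt _ hd, hq.2⟩
  · obtain ⟨hdiv, hmod⟩ : q.val / d = q'.val / d ∧ q.val % d = q'.val % d :=
      Prod.ext_iff.mp h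
    exact Fin.ext (by rw [← Nat.div_add_mod q.val d, ← Nat.div_add_mod q'.val d, hdiv, hmod])
  · obtain ⟨b, e⟩ := be
    simp only [coe_product, coe_filter, mem_range, Set.mem_prod, Set.mem_ofPred_eq] at hbe
    obtain ⟨⟨hbk, hb⟩, hed, he⟩ := hbe
    obtain ⟨hdiv, hmod⟩ : (b * d + e) / d = b ∧ (b * d + e) % d = e :=
      (Nat.div_mod_unique (by omega)).mpr ⟨by ring, hed⟩
    have hlt : b * d + e < d * k := by nlinarith
    exact ⟨⟨b * d + e, hlt⟩, by simp [hdiv, hmod, hb, he], by simp [hdiv, hmod]⟩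

theorem card_filter_block_ge (d k ℓ : ℕ) (P : ℕ → Prop) [DecidablePred P] :
    #{i ∈ ({i | P (i.val / d)} : Finset (Fin (d * k))) | d * ℓ ≤ i.val} =
      d * #{b ∈ Ico ℓ k | P b} := by
  rcases Nat.eq_zero_or_pos d with rfl | hd
  · exact (Nat.eq_zero_of_le_zero ((card_le_univ _).trans (by simp))).trans (zero_mul _).symm
  calc _ = #{q : Fin (d * k) | (ℓ ≤ q.val / d ∧ P (q.val / d)) ∧ True} := by
        congr 1
        ext i
        simp only [mem_filter, mem_univ, true_and, and_true, Nat.le_div_iff_mul_le hd, mul_comm]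
        tauto
    _ = #{b ∈ range k | ℓ ≤ b ∧ P b} * #{e ∈ range d | True} :=
        card_filter_div_mod d k (fun b => ℓ ≤ b ∧ P b) fun _ => True
    _ = d * #{b ∈ Ico ℓ k | P b} := by
        rw [mul_comm, filter_true, card_range]
        congr 2
        ext b
        simp only [mem_filter, mem_Ico, mem_range]
        tauto

theorem card_le_of_forall_mem_block {d k s ℓ : ℕ} {J : Finset (Fin (d * k))}
    (hJ : ∀ j ∈ J, ℓ ≤ j.val / d ∧ j.val % d < s) : #J ≤ s * (k - ℓ) :=
  calc #J ≤ #{q : Fin (d * k) | ℓ ≤ q.val / d ∧ q.val % d < s} :=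
        card_le_card fun j hj => by simpa using hJ j hj
    _ = #{b ∈ range k | ℓ ≤ b} * #{e ∈ range d | e < s} :=
        card_filter_div_mod d k (ℓ ≤ ·) (· < s)
    _ ≤ (k - ℓ) * s := by
        gcongr
        · exact (card_le_card fun b hb => by simp at hb ⊢; omega).trans (Nat.card_Ico ℓ k).le
        · exact (card_le_card fun e he => by simp at he ⊢; omega).trans (card_range s).le
    _ = s * (k - ℓ) := mul_comm _ _

def suffixExcess {N : ℕ} (I J : Finset (Fin N)) (c : ℕ) : ℤ :=
  #{i ∈ I | c ≤ i.val} - #{j ∈ J | c ≤ j.val}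

theorem card_filter_le_eq_add {N : ℕ} (I : Finset (Fin N)) {c p : ℕ} (hcp : c ≤ p) :
    #{i ∈ I | c ≤ i.val} =
      #{i ∈ {i ∈ I | i.val < p} | c ≤ i.val} + #{i ∈ I | p ≤ i.val} := by
  rw [← card_filter_add_card_filter_not (s := {i ∈ I | c ≤ i.val}) fun i => i.val < p]
  simp only [filter_filter, not_lt]
  congr 2 <;> ext i <;> simp only [mem_filter] <;> grind

theorem suffixExcess_sub_suffixExcess {N : ℕ} (I J : Finset (Fin N)) {c p : ℕ} (hcp : c ≤ p) :
    suffixExcess I J c - suffixExcess I J p =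
      (#{i ∈ {i ∈ I | i.val < p} | c ≤ i.val} : ℤ) -
        #{j ∈ {j ∈ J | j.val < p} | c ≤ j.val} := by
  simp only [suffixExcess, card_filter_le_eq_add I hcp, card_filter_le_eq_add J hcp]
  push_cast
  ring

theorem suffixExcess_eq_zero_of_le {N : ℕ} (I J : Finset (Fin N)) {c : ℕ} (hc : N ≤ c) :
    suffixExcess I J c = 0 := by
  have hempty : ∀ X : Finset (Fin N), {x ∈ X | c ≤ x.val} = ∅ := fun X =>
    filter_eq_empty_iff.mpr fun x _ => not_le.mpr (x.isLt.trans_le hc)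
  simp only [suffixExcess, hempty, card_empty, sub_self]

theorem suffixExcess_le_of_forall_mem {N : ℕ} {I J : Finset (Fin N)} {c c' : ℕ}
    (hcc' : c ≤ c')
    (hI : ∀ i : Fin N, c ≤ i.val → i.val < c' → i ∈ I) :
    suffixExcess I J c' ≤ suffixExcess I J c := by
  have hsub :
      {j ∈ {j ∈ J | j.val < c'} | c ≤ j.val} ⊆ {i ∈ {i ∈ I | i.val < c'} | c ≤ i.val} :=
    fun j hj => by
      simp only [mem_filter] at hj ⊢
      exact ⟨⟨hI j hj.2 hj.1.2, hj.1.2⟩, hj.2⟩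
  have := suffixExcess_sub_suffixExcess I J hcc'
  have := card_le_card hsub
  omega

theorem suffixExcess_le_of_forall_not_mem {N : ℕ} {I J : Finset (Fin N)} {c c' : ℕ}
    (hc'c : c' ≤ c)
    (hI : ∀ i : Fin N, c' ≤ i.val → i.val < c → i ∉ I) :
    suffixExcess I J c' ≤ suffixExcess I J c := by
  have hempty : {i ∈ {i ∈ I | i.val < c} | c' ≤ i.val} = ∅ :=
    filter_eq_empty_iff.mpr fun i hi hc' => hI i hc' (mem_filter.mp hi).2 (mem_filter.mp hi).1
  have := suffixExcess_sub_suffixExcess I J hc'c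
  rw [hempty, card_empty] at this
  omega

theorem suffixExcess_le_of_forall_le_block {N d m : ℕ} (P : ℕ → Prop) [DecidablePred P]
    {J : Finset (Fin N)}
    (hm : ∀ b ≤ m, suffixExcess {i | P (i.val / d)} J (d * m) ≤
      suffixExcess {i | P (i.val / d)} J (d * b)) :
    ∀ c ≤ d * m, suffixExcess {i | P (i.val / d)} J (d * m) ≤
      suffixExcess {i | P (i.val / d)} J c := by
  intro c hc
  rcases Nat.eq_zero_or_pos d with rfl | hd
  · rw [show c = 0 by simpa using hc]
    simp
  set b := c / d
  have hblock : ∀ i : ℕ, d * b ≤ i → i < d * (b + 1) → i / d = b := fun i h₁ h₂ =>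
    Nat.div_eq_of_lt_le (by rwa [mul_comm]) (by rwa [mul_comm])
  have hbc : d * b ≤ c := Nat.mul_div_le c d
  have hcb : c < d * (b + 1) := Nat.lt_mul_div_succ c hd
  by_cases hmb : m ≤ b
  · rw [le_antisymm hc (le_trans (Nat.mul_le_mul_left d hmb) hbc)]
  by_cases hPb : P b
  · refine (hm (b + 1) (by omega)).trans (suffixExcess_le_of_forall_mem hcb.le fun i hci hid => ?_)
    simpa [hblock i (hbc.trans hci) hid] using hPb
  · refine (hm b (by omega)).trans (suffixExcess_le_of_forall_not_mem hbc fun i hbi hic hi => ?_)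
    simp only [mem_filter, mem_univ, true_and] at hi
    exact hPb (hblock i hbi (hic.trans hcb) ▸ hi)

section

variable {F : Type*} [Field F]

theorem TotallyNonSingular.submatrix_castLE {N M : ℕ} {A : Matrix (Fin N) (Fin N) F}
    (hA : TotallyNonSingular A) (h : M ≤ N) :
    TotallyNonSingular (A.submatrix (Fin.castLE h) (Fin.castLE h)) := by
  intro q I J hI hJ hJI
  rw [submatrix_submatrix]
  exact hA q _ _ ((Fin.strictMono_castLE h).comp hI) ((Fin.strictMono_castLE h).comp hJ)
    fun t => (Fin.strictMono_castLE h).monotone (hJI t)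

theorem TotallyNonSingular.eq_zero_of_card_filter_le {N : ℕ} {B : Matrix (Fin N) (Fin N) F}
    (hB : TotallyNonSingular B) {v : Fin N → F} {I J : Finset (Fin N)}
    (hJ : ∀ j ∉ J, v j = 0) (hI : ∀ i ∈ I, (B *ᵥ v) i = 0)
    (hdom : ∀ c, #{j ∈ J | c ≤ j} ≤ #{i ∈ I | c ≤ i}) : ∀ j ∈ J, v j = 0 := by
  intro j hj
  have hcard : #J ≤ #I := by
    have := hdom (J.min' ⟨j, hj⟩)
    rw [filter_true_of_mem fun j hj => J.min'_le j hj] at this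
    exact this.trans (card_filter_le _ _)
  set cols := J.orderEmbOfFin rfl
  let rows : Fin #J → Fin N := fun t => I.orderEmbOfFin rfl ⟨#I - #J + t, by omega⟩
  have hrows : StrictMono rows := fun a b hab =>
    (I.orderEmbOfFin rfl).strictMono (Fin.mk_lt_mk.mpr (Nat.add_lt_add_left hab _))
  have hdet := hB _ rows cols hrows cols.strictMono (orderEmbOfFin_le_of_card_filter_le hdom hcard)
  have hker : B.submatrix rows cols *ᵥ (v ∘ cols) = 0 := by
    funext t
    rw [Pi.zero_apply, ← hI (rows t) (orderEmbOfFin_mem _ _ _)]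
    simp only [mulVec, dotProduct, submatrix_apply, Function.comp_apply]
    rw [← sum_subset (subset_univ J) fun j _ hj => by rw [hJ j hj, mul_zero]]
    exact (sum_map univ cols.toEmbedding fun j => B (rows t) j * v j).symm.trans
      (by rw [map_orderEmbOfFin_univ])
  obtain ⟨t, rfl⟩ : j ∈ Set.range cols := by rwa [range_orderEmbOfFin]
  exact congrFun (eq_zero_of_mulVec_eq_zero hdet hker) t

theorem TotallyNonSingular.eq_zero_of_suffixExcess_le {N : ℕ} {B : Matrix (Fin N) (Fin N) F}
    (hB : TotallyNonSingular B) (hlow : ∀ i j, i < j → B i j = 0) {v : Fin N → F}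
    {I J : Finset (Fin N)} (hJ : ∀ j ∉ J, v j = 0) (hI : ∀ i ∈ I, (B *ᵥ v) i = 0)
    {p : ℕ}
    (hp : ∀ c ≤ p, suffixExcess I J p ≤ suffixExcess I J c) :
    ∀ j ∈ J, j.val < p → v j = 0 := by
  -- Rows below `p` do not see the columns from `p` on, so `v` may be cut off at `p`.
  let w : Fin N → F := fun j => if j.val < p then v j else 0
  have hBw : ∀ i : Fin N, i.val < p → (B *ᵥ w) i = (B *ᵥ v) i := fun i hi => by
    change ∑ j, B i j * w j = ∑ j, B i j * v j
    refine sum_congr rfl fun j _ => ?_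
    by_cases hj : j.val < p
    · simp only [w, if_pos hj]
    · rw [hlow i j (by rw [Fin.lt_def]; omega), zero_mul, zero_mul]
  have hw := hB.eq_zero_of_card_filter_le (v := w) (I := {i ∈ I | i.val < p})
    (J := {j ∈ J | j.val < p})
    (fun j hj => by
      by_cases hjp : j.val < p
      · simp only [w, if_pos hjp]
        exact hJ j fun hjJ => hj (mem_filter.mpr ⟨hjJ, hjp⟩)
      · simp only [w, if_neg hjp])
    (fun i hi => by
      rw [hBw i (mem_filter.mp hi).2]
      exact hI i (mem_filter.mp hi).1)
    (fun c => by
      simp only [Fin.le_def]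
      by_cases hcp : c.val ≤ p
      · have := suffixExcess_sub_suffixExcess I J hcp
        have := hp c hcp
        omega
      · rw [filter_eq_empty_iff.mpr fun j hj hcj => hcp (hcj.trans (mem_filter.mp hj).2.le)]
        exact Nat.zero_le _)
  intro j hj hjp
  simpa [w, hjp] using hw j (mem_filter.mpr ⟨hj, hjp⟩)

theorem TotallyNonSingular.mul_card_vanishing_blocks_lt [DecidableEq F] {d k s ℓ : ℕ}
    {B : Matrix (Fin (d * k)) (Fin (d * k)) F} (hB : TotallyNonSingular B)
    (hlow : ∀ i j, i < j → B i j = 0) {v : Fin (d * k) → F}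
    (hsupp : ∀ j, v j ≠ 0 → ℓ ≤ j.val / d ∧ j.val % d < s)
    (hv : ∃ j, j.val / d = ℓ ∧ v j ≠ 0) :
    d * #{b ∈ Ico ℓ k | ∀ i : Fin (d * k), i.val / d = b → (B *ᵥ v) i = 0} <
      s * (k - ℓ) := by
  obtain ⟨j₀, hj₀ℓ, hj₀⟩ := hv
  have hd : 0 < d := Nat.pos_of_ne_zero fun h => by simpa [h] using j₀.isLt
  have hℓk : ℓ < k := hj₀ℓ ▸ Nat.div_lt_of_lt_mul j₀.isLt
  by_contra! hZ
  set P : ℕ → Prop := fun b => ∀ i : Fin (d * k), i.val / d = b → (B *ᵥ v) i = 0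
  set I : Finset (Fin (d * k)) := {i | P (i.val / d)}
  set J : Finset (Fin (d * k)) := {j | v j ≠ 0}
  have hI : ∀ i ∈ I, (B *ᵥ v) i = 0 := fun i hi => (mem_filter.mp hi).2 i rfl
  have hJ : ∀ j ∉ J, v j = 0 := fun j hj => by simpa [J] using hj
  have hstart : ∀ b ≤ ℓ, suffixExcess I J (d * k) ≤ suffixExcess I J (d * b) := by
    intro b hb
    have hIb : d * #{b ∈ Ico ℓ k | P b} ≤ #{i ∈ I | d * b ≤ i.val} :=
      (card_filter_block_ge d k ℓ P).symm.trans_le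
        (card_le_card (monotone_filter_right _ fun _ _ => (Nat.mul_le_mul_left d hb).trans))
    have hJb : #{j ∈ J | d * b ≤ j.val} ≤ s * (k - ℓ) :=
      (card_filter_le _ _).trans
        (card_le_of_forall_mem_block fun j hj => hsupp j (mem_filter.mp hj).2)
    have hZ' : s * (k - ℓ) ≤ d * #{b ∈ Ico ℓ k | P b} := hZ
    rw [suffixExcess_eq_zero_of_le I J le_rfl, suffixExcess]
    omega
  obtain ⟨m, hℓm, -, hmin⟩ :=
    exists_mem_Ioc_forall_le_of_le (g := fun b => suffixExcess I J (d * b)) hℓk hstart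
  have hj₀m : j₀.val < d * m :=
    ((Nat.div_lt_iff_lt_mul hd).mp (hj₀ℓ ▸ hℓm)).trans_eq (mul_comm m d)
  exact hj₀ (hB.eq_zero_of_suffixExcess_le hlow hJ hI (suffixExcess_le_of_forall_le_block P hmin)
    j₀ (by simpa [J] using hj₀) hj₀m)

end

theorem padBlocks_mul_add {M : Type*} [Zero M] {r s k : ℕ} (x : Fin k → Fin s → M) (i : Fin k)
    (e : Fin s) (h : i.val * (r + s) + e.val < (r + s) * k) :
    padBlocks r s k x ⟨i.val * (r + s) + e.val, h⟩ = x i e := by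
  obtain ⟨hdiv, hmod⟩ : (i.val * (r + s) + e.val) / (r + s) = i.val ∧
      (i.val * (r + s) + e.val) % (r + s) = e.val :=
    (Nat.div_mod_unique (by omega)).mpr ⟨by ring, by omega⟩
  unfold padBlocks
  rw [dif_pos (show (i.val * (r + s) + e.val) % (r + s) < s by rw [hmod]; exact e.isLt)]
  congr 1 <;> ext <;> simp only [hdiv, hmod]

theorem padBlocks_ne_zero {M : Type*} [Zero M] {r s k ℓ : ℕ} {x : Fin k → Fin s → M}
    (hx : ∀ i : Fin k, i.val < ℓ → x i = 0) {j : Fin ((r + s) * k)}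
    (hj : padBlocks r s k x j ≠ 0) : ℓ ≤ j.val / (r + s) ∧ j.val % (r + s) < s := by
  unfold padBlocks at hj
  split_ifs at hj with hs
  · refine ⟨not_lt.mp fun hlt => hj ?_, hs⟩
    rw [hx _ hlt]
    rfl
  · exact absurd rfl hj

theorem exists_padBlocks_ne_zero {M : Type*} [Zero M] {r s k : ℕ} {x : Fin k → Fin s → M}
    {i : Fin k} (hx : x i ≠ 0) :
    ∃ j : Fin ((r + s) * k), j.val / (r + s) = i.val ∧ padBlocks r s k x j ≠ 0 := by
  obtain ⟨e, he⟩ := Function.ne_iff.mp hx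
  have hj : i.val * (r + s) + e.val < (r + s) * k := blockIdx_lt i (e.castLE (by omega))
  refine ⟨⟨_, hj⟩, ((Nat.div_mod_unique (c := e.val) (by omega)).mpr ⟨by ring, by omega⟩).1,
    ?_⟩
  rwa [padBlocks_mul_add x i e hj]

theorem sub_le_card_vanishing_blocks_add {M : Type*} [Zero M] [DecidableEq M] {r s k : ℕ}
    (y : Fin ((r + s) * k) → M) (ℓ : ℕ) :
    k - ℓ ≤ #{b ∈ Ico ℓ k | ∀ i : Fin ((r + s) * k), i.val / (r + s) = b → y i = 0} +
      #{i : Fin k | ∃ t : Fin (r + s),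
        y ⟨i.val * (r + s) + t.val, blockIdx_lt i t⟩ ≠ 0} := by
  set Z := {b ∈ Ico ℓ k | ∀ i : Fin ((r + s) * k), i.val / (r + s) = b → y i = 0}
  set S : Finset (Fin k) :=
    {i | ∃ t : Fin (r + s), y ⟨i.val * (r + s) + t.val, blockIdx_lt i t⟩ ≠ 0}
  have hcover : Ico ℓ k ⊆ Z ∪ S.image Fin.val := fun b hb => by
    by_cases hbZ : b ∈ Z
    · exact mem_union_left _ hbZ
    obtain ⟨i, hib, hi⟩ : ∃ i : Fin ((r + s) * k), i.val / (r + s) = b ∧ y i ≠ 0 := by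
      simpa [Z, hb] using hbZ
    refine mem_union_right _ (mem_image.mpr ⟨⟨b, (mem_Ico.mp hb).2⟩, mem_filter.mpr
      ⟨mem_univ _, ⟨i.val % (r + s), Nat.mod_lt _ (Nat.pos_of_mul_pos_right i.pos)⟩, ?_⟩,
      rfl⟩)
    convert hi
    exact hib ▸ Nat.div_add_mod' i.val (r + s)
  calc k - ℓ = #(Ico ℓ k) := (Nat.card_Ico ℓ k).symm
    _ ≤ #Z + #(S.image Fin.val) := (card_le_card hcover).trans (card_union_le _ _)
    _ ≤ #Z + #S := Nat.add_le_add_left card_image_le _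

theorem mds_tree_code_distance_r_over_r_plus_s_general
    {F : Type*} [Field F] [DecidableEq F] {n : ℕ} (r s : ℕ)
    (A : Matrix (Fin ((r + s) * n)) (Fin ((r + s) * n)) F)
    (hlow : ∀ i j : Fin ((r + s) * n), i < j → A i j = 0)
    (htns : TotallyNonSingular A)
    (k : ℕ) (hk : k ≤ n) :
    ∀ (x : Fin k → (Fin s → F)) (ℓ : ℕ) (hℓ : ℓ < k),
      (∀ i : Fin k, i.val < ℓ → x i = 0) → x ⟨ℓ, hℓ⟩ ≠ 0 →
      ((r : ℝ) / ((r : ℝ) + s)) * ((k : ℝ) - ℓ) <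
        ((Finset.univ.filter fun i : Fin k => ∃ t : Fin (r + s),
          (A.submatrix (Fin.castLE (Nat.mul_le_mul (le_refl (r + s)) hk))
              (Fin.castLE (Nat.mul_le_mul (le_refl (r + s)) hk))).mulVec
            (padBlocks r s k x) ⟨i.val * (r + s) + t.val, blockIdx_lt i t⟩ ≠ 0).card : ℝ) := by
  intro x ℓ hℓ hxz hxℓ
  set B := A.submatrix (Fin.castLE (Nat.mul_le_mul (le_refl (r + s)) hk))
    (Fin.castLE (Nat.mul_le_mul (le_refl (r + s)) hk))
  have hB := htns.submatrix_castLE (Nat.mul_le_mul (le_refl (r + s)) hk)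
  have hvanish := hB.mul_card_vanishing_blocks_lt
    (fun i j hij => hlow _ _ hij) (fun j hj => padBlocks_ne_zero hxz hj)
    (exists_padBlocks_ne_zero hxℓ)
  have hcover := sub_le_card_vanishing_blocks_add (B *ᵥ padBlocks r s k x) ℓ
  have hs : 0 < s := Nat.pos_of_mul_pos_right ((Nat.zero_le _).trans_lt hvanish)
  rw [div_mul_eq_mul_div, div_lt_iff₀ (by exact_mod_cast (show 0 < r + s by omega)),
    ← Nat.cast_sub hℓ.le]
  norm_cast
  nlinarith

/-- **MDS tree codes of distance `r/(r+s)` (Pudlák).** Let `r, s ≥ 1` and let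
`A ∈ F^{(r+s)n×(r+s)n}` be lower-triangular and totally non-singular.  The
`n`-truncated tree code `TC_{A,(s,r)} : (F^s)^(≤n) → (F^{r+s})^(≤n)`,
`x ↦ A^{((r+s)k)}x'` (output viewed as `k` blocks in `F^{r+s}`), has distance
greater than `r/(r+s)`: for every nonzero `x ∈ (F^s)^k` with split `ℓ`, the number of
blocks on which `A^{((r+s)k)}x'` is nonzero exceeds `(r/(r+s))·(k − ℓ)`. -/
theorem mds_tree_code_distance_r_over_r_plus_s
    {F : Type*} [Field F] [DecidableEq F] {n : ℕ} (r s : ℕ) (hr : 1 ≤ r) (hs : 1 ≤ s)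
    (A : Matrix (Fin ((r + s) * n)) (Fin ((r + s) * n)) F)
    (hlow : ∀ i j : Fin ((r + s) * n), i < j → A i j = 0)
    (htns : TotallyNonSingular A)
    (k : ℕ) (hk : k ≤ n) :
    ∀ (x : Fin k → (Fin s → F)) (ℓ : ℕ) (hℓ : ℓ < k),
      (∀ i : Fin k, i.val < ℓ → x i = 0) → x ⟨ℓ, hℓ⟩ ≠ 0 →
      ((r : ℝ) / ((r : ℝ) + s)) * ((k : ℝ) - ℓ) <
        ((Finset.univ.filter fun i : Fin k => ∃ t : Fin (r + s),
          (A.submatrix (Fin.castLE (Nat.mul_le_mul (le_refl (r + s)) hk))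
              (Fin.castLE (Nat.mul_le_mul (le_refl (r + s)) hk))).mulVec
            (padBlocks r s k x) ⟨i.val * (r + s) + t.val, blockIdx_lt i t⟩ ≠ 0).card : ℝ) :=
  mds_tree_code_distance_r_over_r_plus_s_general r s A hlow htns k hk
end

section
/- Let 0 ≤ a_1 < a_2 < ⋯ < a_n and 0 ≤ b_1 < b_2 < ⋯ < b_n be two strictly increasing sequences of nonnegative integers with a_i ≥ b_i for each i ∈ [n]. Then the n×n matrix M with entries M_{i,j} = C(a_i, b_j) (binomial coefficient) has strictly positive determinant: det(M) > 0. -/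
/-!
Induction on `n`. Since `C(a + 1, b + 1) (b + 1) = (a + 1) C(a, b)`, lowering all `a_i` and `b_j`
by `b_1` multiplies the determinant by a positive rational, so we may assume `b_1 = 0`. Then the
first column is `(1, 0, …, 0)` after subtracting from each row the previous one, and by the
hockey-stick identity the remaining minor has entries `∑_{a_i ≤ t < a_{i+1}} C(t, b_{j+1} - 1)`.
Expanding by multilinearity gives a sum of determinants of the same shape of size `n - 1`, one
for each choice `a_i ≤ t_i < a_{i+1}`: each is positive or zero by induction (zero when some
`t_i < b_{i+1} - 1`, by a pigeonhole argument on permutations), and the one with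
`t_i = a_{i+1} - 1` is positive.
-/

open Matrix Finset

theorem sum_Ico_choose_eq_sub (k : ℕ) {m n : ℕ} (h : m ≤ n) :
    ∑ t ∈ Ico m n, (t.choose k : ℤ) = n.choose (k + 1) - m.choose (k + 1) := by
  induction n, h using Nat.le_induction with
  | base => simp
  | succ n hmn ih =>
    rw [sum_Ico_succ_top hmn, ih, Nat.choose_succ_succ' n]
    push_cast
    ring

theorem Equiv.Perm.exists_le_and_apply_le {α : Type*} [LinearOrder α] [LocallyFiniteOrderTop α]
    (σ : Equiv.Perm α) (k : α) : ∃ j, k ≤ j ∧ σ j ≤ k := by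
  by_contra! h
  have hmaps : Set.MapsTo σ (Ici k) (Ioi k) := fun j hj => by
    simpa using h j (by simpa using hj)
  have := card_le_card_of_injOn σ hmaps σ.injective.injOn
  rw [card_Ioi_eq_card_Ici_sub_one] at this
  have : 0 < #(Ici k) := card_pos.2 nonempty_Ici
  omega

theorem Matrix.det_of_sum_rows {n ι R : Type*} [Fintype n] [DecidableEq n]
    [CommRing R] (s : n → Finset ι) (v : ι → n → R) :
    (Matrix.of fun i => ∑ t ∈ s i, v t).det =
      ∑ r ∈ Fintype.piFinset s, (Matrix.of fun i => v (r i)).det :=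
  (detRowAlternating : (n → R) [⋀^n]→ₗ[R] R).toMultilinearMap.map_sum_finset (fun _ => v) s

def binomMatrix {m n : Type*} (a : m → ℕ) (b : n → ℕ) : Matrix m n ℤ :=
  Matrix.of fun i j => ((a i).choose (b j) : ℤ)

theorem det_binomMatrix_eq_zero_of_lt {n : ℕ} {a b : Fin n → ℕ} (ha : Monotone a)
    (hb : Monotone b) {k : Fin n} (hk : a k < b k) : (binomMatrix a b).det = 0 := by
  refine (det_apply _).trans (sum_eq_zero fun σ _ => ?_)
  obtain ⟨j, hkj, hjk⟩ := σ.exists_le_and_apply_le k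
  have hzero : (a (σ j)).choose (b j) = 0 :=
    Nat.choose_eq_zero_of_lt ((ha hjk).trans_lt (hk.trans_le (hb hkj)))
  rw [prod_eq_zero (mem_univ j) (by simp [binomMatrix, hzero]), smul_zero]

theorem det_binomMatrix_eq_det_sub {n : ℕ} (a b : Fin (n + 1) → ℕ) (hb : b 0 = 0) :
    (binomMatrix a b).det = (Matrix.of fun i j : Fin n =>
      ((a i.succ).choose (b j.succ) - (a i.castSucc).choose (b j.succ) : ℤ)).det := by
  let B : Matrix (Fin (n + 1)) (Fin (n + 1)) ℤ := Matrix.of fun i j => Fin.cases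
    (binomMatrix a b 0 j) (fun i => binomMatrix a b i.succ j - binomMatrix a b i.castSucc j) i
  have hB : (binomMatrix a b).det = B.det :=
    det_eq_of_forall_row_eq_smul_add_pred (fun _ => 1) (fun _ => rfl) (fun i j => by simp [B])
  rw [hB, det_succ_column_zero, Fin.sum_univ_succ]
  simp [B, binomMatrix, hb, submatrix]

theorem det_binomMatrix_eq_sum {n : ℕ} {a b : Fin (n + 1) → ℕ} (c : Fin n → ℕ)
    (ha : Monotone a) (hb0 : b 0 = 0) (hbc : ∀ j, b j.succ = c j + 1) :
    (binomMatrix a b).det =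
      ∑ r ∈ Fintype.piFinset fun i : Fin n => Ico (a i.castSucc) (a i.succ),
        (binomMatrix r c).det := by
  rw [det_binomMatrix_eq_det_sub a b hb0]
  refine (congrArg det ?_).trans (det_of_sum_rows _ fun (t : ℕ) j => (t.choose (c j) : ℤ))
  ext i j
  simp [hbc, sum_Ico_choose_eq_sub _ (ha (Fin.castSucc_le_succ i))]

theorem strictMono_of_mem_piFinset_Ico {n : ℕ} {a : Fin (n + 1) → ℕ} (ha : Monotone a)
    {r : Fin n → ℕ}
    (hr : r ∈ Fintype.piFinset fun i : Fin n => Ico (a i.castSucc) (a i.succ)) : StrictMono r := by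
  intro i j hij
  simp only [Fintype.mem_piFinset, mem_Ico] at hr
  calc r i < a i.succ := (hr i).2
    _ ≤ a j.castSucc := ha (Fin.succ_le_castSucc_iff.2 hij)
    _ ≤ r j := (hr j).1

theorem det_binomMatrix_pos_of_apply_zero_eq_zero {n : ℕ}
    (ih : ∀ a b : Fin n → ℕ, StrictMono a → StrictMono b → (∀ i, b i ≤ a i) →
      0 < (binomMatrix a b).det)
    {a b : Fin (n + 1) → ℕ} (ha : StrictMono a) (hb : StrictMono b) (hab : ∀ i, b i ≤ a i)
    (hb0 : b 0 = 0) : 0 < (binomMatrix a b).det := by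
  obtain ⟨c, hbc⟩ : ∃ c : Fin n → ℕ, ∀ j, b j.succ = c j + 1 :=
    ⟨fun j => b j.succ - 1, fun j => by have := hb (Fin.succ_pos j); dsimp only; omega⟩
  have hc : StrictMono c := fun i j hij => by
    have := hb (Fin.succ_lt_succ_iff.2 hij); have := hbc i; have := hbc j; omega
  rw [det_binomMatrix_eq_sum c ha.monotone hb0 hbc]
  refine sum_pos' (fun r hr => ?_) ⟨fun i => a i.succ - 1, ?_, ih _ _ ?_ hc ?_⟩
  · have hr := strictMono_of_mem_piFinset_Ico ha.monotone hr
    by_cases hcr : ∀ i, c i ≤ r i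
    · exact (ih r c hr hc hcr).le
    · push Not at hcr
      obtain ⟨k, hk⟩ := hcr
      exact (det_binomMatrix_eq_zero_of_lt hr.monotone hc.monotone hk).ge
  · simp only [Fintype.mem_piFinset, mem_Ico]
    intro i
    have := ha (Fin.castSucc_lt_succ (i := i))
    omega
  · intro i j hij
    show a i.succ - 1 < a j.succ - 1
    have := ha (Fin.succ_lt_succ_iff.2 hij)
    have := ha (Fin.succ_pos i)
    omega
  · intro i
    have := hab i.succ; have := hbc i
    omega

theorem det_binomMatrix_add_one_mul {n : Type*} [Fintype n] [DecidableEq n] (a b : n → ℕ) :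
    (binomMatrix (a · + 1) (b · + 1)).det * ∏ j, ((b j : ℤ) + 1) =
      (∏ i, ((a i : ℤ) + 1)) * (binomMatrix a b).det := by
  have h : binomMatrix (a · + 1) (b · + 1) * diagonal (fun j => (b j : ℤ) + 1) =
      diagonal (fun i => (a i : ℤ) + 1) * binomMatrix a b := by
    ext i j
    rw [mul_diagonal, diagonal_mul]
    simp only [binomMatrix, of_apply]
    exact_mod_cast (Nat.add_one_mul_choose_eq (a i) (b j)).symm
  simpa only [det_mul, det_diagonal] using congrArg det h

theorem det_binomMatrix_add_pos {n : Type*} [Fintype n] [DecidableEq n] {a b : n → ℕ}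
    (h : 0 < (binomMatrix a b).det) (k : ℕ) : 0 < (binomMatrix (a · + k) (b · + k)).det := by
  induction k with
  | zero => exact h
  | succ k ih =>
    have hscale := det_binomMatrix_add_one_mul (a · + k) (b · + k)
    refine pos_of_mul_pos_left (hscale ▸ mul_pos (prod_pos fun i _ => ?_) ih)
      (prod_nonneg fun j _ => ?_) <;> positivity

theorem det_binomMatrix_pos_of_sub {n : Type*} [Fintype n] [DecidableEq n] {a b : n → ℕ} {k : ℕ}
    (ha : ∀ i, k ≤ a i) (hb : ∀ j, k ≤ b j) (h : 0 < (binomMatrix (a · - k) (b · - k)).det) :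
    0 < (binomMatrix a b).det := by
  have hak : (fun i => a i - k + k) = a := funext fun i => Nat.sub_add_cancel (ha i)
  have hbk : (fun j => b j - k + k) = b := funext fun j => Nat.sub_add_cancel (hb j)
  simpa only [hak, hbk] using det_binomMatrix_add_pos h k

/-- **Gessel–Viennot (Corollary 2).** If `0 ≤ a₁ < a₂ < ⋯ < a_n` and
`0 ≤ b₁ < b₂ < ⋯ < b_n` are nonnegative integers with `a_i ≥ b_i` for every `i`,
then the matrix `M` with `M_{i,j} = C(a_i, b_j)` has strictly positive determinant. -/
theorem gessel_viennot_binomial_det_pos {n : ℕ} (a b : Fin n → ℕ)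
    (ha : StrictMono a) (hb : StrictMono b) (hab : ∀ i : Fin n, b i ≤ a i) :
    0 < (Matrix.of fun i j : Fin n => ((a i).choose (b j) : ℤ)).det := by
  induction n with
  | zero => simp
  | succ n ih =>
    have hb0 : ∀ j, b 0 ≤ b j := fun j => hb.monotone (Fin.zero_le j)
    refine det_binomMatrix_pos_of_sub (fun i => (hb0 i).trans (hab i)) hb0 ?_
    refine det_binomMatrix_pos_of_apply_zero_eq_zero ih (fun i j hij => ?_) (fun i j hij => ?_)
      (fun i => ?_) (Nat.sub_self _)
    · have := ha hij; have := hb0 i; have := hab i; omega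
    · have := hb hij; have := hb0 i; omega
    · have := hab i; omega
end

section
/- The Pascal matrix is totally non-singular: for every n, every r ≥ 1, and all index sets I = {i_1 < ⋯ < i_r} and J = {j_1 < ⋯ < j_r} of nonnegative integers with i_s ≥ j_s for all s ∈ [r], the r×r matrix with (s,t)-entry C(i_s, j_t) is non-singular (its determinant is nonzero; in fact positive). -/
open Matrix Finset

private def pent (i a j : ℕ) : ℤ := if a ≤ j then ((i.choose (j - a) : ℕ) : ℤ) else 0

private lemma pent_succ (i a j : ℕ) : pent (i + 1) a j = pent i a j + pent i (a + 1) j := by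
  unfold pent
  rcases lt_trichotomy j a with h | h | h
  · rw [if_neg (by omega), if_neg (by omega), if_neg (by omega)]; ring
  · subst h
    rw [if_pos le_rfl, if_pos le_rfl, if_neg (by omega)]
    simp
  · rw [if_pos (by omega), if_pos (by omega), if_pos (by omega)]
    obtain ⟨k, hk⟩ : ∃ k, j - a = k + 1 := ⟨j - a - 1, by omega⟩
    have hk2 : j - (a + 1) = k := by omega
    rw [hk, hk2, Nat.choose_succ_succ]
    push_cast
    ring

private def pmat {r : ℕ} (I J a : Fin r → ℕ) : Matrix (Fin r) (Fin r) ℤ :=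
  Matrix.of fun s t => pent (I s) (a s) (J t)

private lemma det_split {r : ℕ} (I J a : Fin r → ℕ) (p : Fin r) (hp : 1 ≤ I p) :
    (pmat I J a).det =
      (pmat (Function.update I p (I p - 1)) J a).det +
      (pmat (Function.update I p (I p - 1)) J (Function.update a p (a p + 1))).det := by
  set I' := Function.update I p (I p - 1) with hI'
  have key : ∀ (b : Fin r → ℕ) (bp : ℕ), (pmat I' J (Function.update b p bp)) =
      (pmat I' J b).updateRow p (fun t => pent (I p - 1) bp (J t)) := by
    intro b bp
    ext s t
    by_cases h : s = p
    · subst h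
      simp [pmat, Matrix.updateRow_self, hI']
    · simp [pmat, Matrix.updateRow_ne h, Function.update_of_ne h]
  have h0 : pmat I J a =
      (pmat I' J a).updateRow p
        ((fun t => pent (I p - 1) (a p) (J t)) + fun t => pent (I p - 1) (a p + 1) (J t)) := by
    ext s t
    by_cases h : s = p
    · subst h
      have : I s = (I s - 1) + 1 := by omega
      simp only [pmat, Matrix.updateRow_self, Pi.add_apply, Matrix.of_apply]
      conv_lhs => rw [this, pent_succ]
    · simp [pmat, Matrix.updateRow_ne h, Function.update_of_ne h, hI']
  rw [h0, Matrix.det_updateRow_add]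
  have h1 : (pmat I' J a).updateRow p (fun t => pent (I p - 1) (a p) (J t)) = pmat I' J a := by
    have := key a (a p)
    rw [Function.update_eq_self] at this
    exact this.symm
  rw [h1, ← key a (a p + 1)]

private lemma monotone_update {r : ℕ} {f : Fin r → ℕ} (hf : Monotone f) (p : Fin r) (v : ℕ)
    (h1 : ∀ s, s < p → f s ≤ v) (h2 : ∀ s, p < s → v ≤ f s) :
    Monotone (Function.update f p v) := by
  intro x y hxy
  by_cases hx : x = p <;> by_cases hy : y = p
  · rw [hx, hy]
  · have hlt : p < y := lt_of_le_of_ne (hx ▸ hxy) (Ne.symm hy)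
    rw [hx]
    simp only [Function.update_self, Function.update_of_ne hy]
    exact h2 y hlt
  · have hlt : x < p := lt_of_le_of_ne (hy ▸ hxy) hx
    rw [hy]
    simp only [Function.update_self, Function.update_of_ne hx]
    exact h1 x hlt
  · simp only [Function.update_of_ne hx, Function.update_of_ne hy]
    exact hf hxy

private lemma strictMono_update {r : ℕ} {f : Fin r → ℕ} (hf : StrictMono f) (p : Fin r) (v : ℕ)
    (h1 : ∀ s, s < p → f s < v) (h2 : ∀ s, p < s → v < f s) :
    StrictMono (Function.update f p v) := by
  intro x y hxy
  by_cases hx : x = p <;> by_cases hy : y = p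
  · exact absurd (hx.trans hy.symm) (ne_of_lt hxy)
  · rw [hx]
    simp only [Function.update_self, Function.update_of_ne hy]
    exact h2 y (hx ▸ hxy)
  · rw [hy]
    simp only [Function.update_self, Function.update_of_ne hx]
    exact h1 x (hy ▸ hxy)
  · simp only [Function.update_of_ne hx, Function.update_of_ne hy]
    exact hf hxy

private lemma sum_update_le {r : ℕ} (I : Fin r → ℕ) (p : Fin r) (hp : 1 ≤ I p) :
    (∑ s, Function.update I p (I p - 1) s) + 1 = ∑ s, I s := by
  rw [Finset.sum_update_of_mem (Finset.mem_univ p)]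
  have h2 : ∑ s, I s = I p + ∑ s ∈ Finset.univ \ {p}, I s := by
    rw [← Finset.sum_eq_add_sum_sdiff_singleton_of_mem (Finset.mem_univ p)]
  omega

private lemma pmat_det_nonneg : ∀ (N : ℕ) {r : ℕ} (I J a : Fin r → ℕ),
    (∑ s, I s) + r ≤ N → Monotone a → Monotone (fun s => I s + a s) → StrictMono J →
    0 ≤ (pmat I J a).det := by
  intro N
  induction N with
  | zero =>
    intro r I J a hle _ _ _
    have hr : r = 0 := by omega
    subst hr
    rw [Matrix.det_fin_zero]
    norm_num
  | succ N ih =>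
    intro r I J a hle ha hg hJ
    match r with
    | 0 =>
      rw [Matrix.det_fin_zero]; norm_num
    | n + 1 =>
      by_cases hdup : ∃ s t : Fin (n + 1), s ≠ t ∧ I s = I t ∧ a s = a t
      · obtain ⟨s, t, hst, hIst, hast⟩ := hdup
        have : (pmat I J a).det = 0 := by
          apply Matrix.det_zero_of_row_eq hst
          funext u
          simp [pmat, hIst, hast]
        rw [this]
      · push_neg at hdup
        set g : Fin (n + 1) → ℕ := fun s => I s + a s with hgdef
        set L : Fin (n + 1) := Fin.last n with hL
        set S : Finset (Fin (n + 1)) := Finset.univ.filter (fun s => g s = g L) with hS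
        have hSne : S.Nonempty := ⟨L, by simp [hS]⟩
        set p := S.min' hSne with hpdef
        have hpS : g p = g L := by
          have := S.min'_mem hSne
          simp only [hS, Finset.mem_filter] at this
          exact this.2
        have hmin : ∀ s, g s = g L → p ≤ s := by
          intro s hs
          exact S.min'_le s (by simp [hS, hs])
        have hplat : ∀ s, p ≤ s → g s = g p := by
          intro s hs
          have h1 : g s ≤ g L := hg (Fin.le_last s)
          have h2 : g p ≤ g s := hg hs
          omega
        have hstrictbelow : ∀ s, s < p → g s < g p := by
          intro s hs
          have h1 : g s ≤ g p := hg hs.le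
          rcases lt_or_eq_of_le h1 with h | h
          · exact h
          · exact absurd (hmin s (h.trans hpS)) (not_le.2 hs)
        have haplat : ∀ s, p < s → a p < a s := by
          intro s hs
          have h1 : a p ≤ a s := ha hs.le
          rcases lt_or_eq_of_le h1 with h | h
          · exact h
          · exfalso
            have hgs : g s = g p := hplat s hs.le
            have : I p = I s := by simp only [hgdef] at hgs; omega
            exact hdup p s (ne_of_lt hs) this h
        by_cases hIp : I p = 0
        · -- p must be the last index
          have hpL : p = L := by
            by_contra h
            have hpltL : p < L := lt_of_le_of_ne (Fin.le_last p) h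
            have h1 : a p < a L := haplat L hpltL
            have h2 : g L = g p := hplat L hpltL.le
            simp only [hgdef] at h2
            omega
          have hIL : I L = 0 := hpL ▸ hIp
          have hgL : g L = a L := by simp [hgdef, hIL]
          rcases lt_trichotomy (J L) (a L) with h | h | h
          · -- row L is zero
            have : (pmat I J a).det = 0 := by
              apply Matrix.det_eq_zero_of_row_eq_zero L
              intro t
              have hJt : J t ≤ J L := hJ.monotone (Fin.le_last t)
              simp only [pmat, Matrix.of_apply, pent, hIL]
              rw [if_neg (by omega)]
            rw [this]
          · -- Laplace expansion along the last column
            have hcolzero : ∀ s : Fin (n + 1), s ≠ L → pmat I J a s L = 0 := by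
              intro s hs
              have hsL : s < L := lt_of_le_of_ne (Fin.le_last s) hs
              have h1 : g s < g L := hpL ▸ hstrictbelow s (hpL ▸ hsL)
              simp only [pmat, Matrix.of_apply, pent]
              by_cases hc : a s ≤ J L
              · rw [if_pos hc]
                have : I s < J L - a s := by simp only [hgdef] at h1 hgL; omega
                rw [Nat.choose_eq_zero_of_lt this]
                norm_num
              · rw [if_neg hc]
            have hdiag : pmat I J a L L = 1 := by
              simp only [pmat, Matrix.of_apply, pent, hIL]
              rw [if_pos h.ge, ← h]
              simp
            rw [Matrix.det_succ_column (pmat I J a) L]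
            rw [Finset.sum_eq_single L]
            · have hsub : (pmat I J a).submatrix (Fin.last n).succAbove (Fin.last n).succAbove =
                  pmat (I ∘ Fin.castSucc) (J ∘ Fin.castSucc) (a ∘ Fin.castSucc) := by
                ext s t
                simp [pmat, Fin.succAbove_last]
              rw [hdiag, hsub]
              have hpos : 0 ≤ (pmat (I ∘ Fin.castSucc) (J ∘ Fin.castSucc) (a ∘ Fin.castSucc)).det := by
                apply ih
                · have hsum : ∑ s : Fin (n + 1), I s =
                      (∑ s : Fin n, I (Fin.castSucc s)) + I L := by
                    rw [Fin.sum_univ_castSucc]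
                  simp only [Function.comp]
                  omega
                · exact ha.comp Fin.strictMono_castSucc.monotone
                · exact hg.comp Fin.strictMono_castSucc.monotone
                · exact hJ.comp Fin.strictMono_castSucc
              have : ((-1 : ℤ)) ^ ((L : ℕ) + (L : ℕ)) = 1 := by
                rw [← two_mul, pow_mul]
                norm_num
              rw [this]
              linarith
            · intro b _ hb
              rw [hcolzero b hb]
              ring
            · intro h'
              exact absurd (Finset.mem_univ L) h'
          · -- column L is zero
            have : (pmat I J a).det = 0 := by
              apply Matrix.det_eq_zero_of_column_eq_zero L
              intro s
              by_cases hs : s = L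
              · subst hs
                simp only [pmat, Matrix.of_apply, pent, hIL]
                rw [if_pos h.le]
                rw [Nat.choose_eq_zero_of_lt (by omega)]
                norm_num
              · have hsL : s < L := lt_of_le_of_ne (Fin.le_last s) hs
                have h1 : g s < g L := hpL ▸ hstrictbelow s (hpL ▸ hsL)
                simp only [pmat, Matrix.of_apply, pent]
                by_cases hc : a s ≤ J L
                · rw [if_pos hc]
                  have : I s < J L - a s := by simp only [hgdef] at h1 hgL; omega
                  rw [Nat.choose_eq_zero_of_lt this]
                  norm_num
                · rw [if_neg hc]
            rw [this]
        · -- I p ≥ 1 : split the determinant at row p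
          have hp1 : 1 ≤ I p := by omega
          rw [det_split I J a p hp1]
          have hd1 : 0 ≤ (pmat (Function.update I p (I p - 1)) J a).det := by
            apply ih
            · have := sum_update_le I p hp1
              omega
            · exact ha
            · have heq : (fun s => Function.update I p (I p - 1) s + a s) =
                  Function.update g p (g p - 1) := by
                funext s
                by_cases hsp : s = p
                · subst hsp
                  simp only [Function.update_self, hgdef]
                  omega
                · simp only [Function.update_of_ne hsp, hgdef]
              rw [heq]
              apply monotone_update hg
              · intro s hs
                have := hstrictbelow s hs
                omega
              · intro s hs
                have := hg hs.le
                omega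
            · exact hJ
          have hd2 : 0 ≤ (pmat (Function.update I p (I p - 1)) J
              (Function.update a p (a p + 1))).det := by
            apply ih
            · have := sum_update_le I p hp1
              omega
            · apply monotone_update ha
              · intro s hs
                have := ha hs.le
                omega
              · intro s hs
                exact haplat s hs
            · have heq : (fun s => Function.update I p (I p - 1) s +
                  Function.update a p (a p + 1) s) = g := by
                funext s
                by_cases hsp : s = p
                · subst hsp
                  simp only [Function.update_self, hgdef]
                  omega
                · simp only [Function.update_of_ne hsp, hgdef]
              rw [heq]
              exact hg
            · exact hJ
          linarith

private lemma pmat_det_ge_one : ∀ (N : ℕ) {r : ℕ} (I J a : Fin r → ℕ),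
    (∑ s, I s) ≤ N → Monotone a → (∀ s, a s ≤ J s) → (∀ s, J s ≤ I s + a s) →
    StrictMono (fun s => I s + a s) → StrictMono J →
    1 ≤ (pmat I J a).det := by
  intro N
  induction N with
  | zero =>
    intro r I J a hle ha haJ hJg hg hJ
    -- all I s = 0 and then a = J, the matrix is the identity
    have hI0 : ∀ s, I s = 0 := by
      intro s
      have : I s ≤ ∑ t, I t := Finset.single_le_sum (fun t _ => Nat.zero_le (I t)) (Finset.mem_univ s)
      omega
    have haJ' : ∀ s, a s = J s := by
      intro s
      have := hJg s
      have := haJ s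
      have := hI0 s
      omega
    have hone : pmat I J a = 1 := by
      ext s t
      simp only [pmat, Matrix.of_apply, pent, hI0, haJ', Matrix.one_apply]
      by_cases hst : s = t
      · subst hst
        simp
      · have : J s ≠ J t := fun h => hst (hJ.injective h)
        by_cases hc : J s ≤ J t
        · rw [if_pos hc, if_neg hst]
          rw [Nat.choose_eq_zero_of_lt (by omega)]
          norm_num
        · rw [if_neg hc, if_neg hst]
    rw [hone, Matrix.det_one]
  | succ N ih =>
    intro r I J a hle ha haJ hJg hg hJ
    by_cases hA : ∃ s, a s < J s
    · -- phase A: there is a row where a < J; pick the largest such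
      set S : Finset (Fin r) := Finset.univ.filter (fun s => a s < J s) with hS
      have hSne : S.Nonempty := by
        obtain ⟨s, hs⟩ := hA
        exact ⟨s, by simp [hS, hs]⟩
      set p := S.max' hSne with hpdef
      have hpP : a p < J p := by
        have := S.max'_mem hSne
        simp only [hS, Finset.mem_filter] at this
        exact this.2
      have hmax : ∀ s, p < s → a s = J s := by
        intro s hs
        by_contra h
        have h2 : a s < J s := lt_of_le_of_ne (haJ s) h
        have : s ≤ p := S.le_max' s (by simp [hS, h2])
        exact absurd hs (not_lt.2 this)
      have hp1 : 1 ≤ I p := by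
        have := hJg p
        omega
      rw [det_split I J a p hp1]
      -- discarded branch is nonnegative
      have hd1 : 0 ≤ (pmat (Function.update I p (I p - 1)) J a).det := by
        apply pmat_det_nonneg ((∑ s, Function.update I p (I p - 1) s) + r) _ _ _ le_rfl ha
        · have heq : (fun s => Function.update I p (I p - 1) s + a s) =
              Function.update (fun s => I s + a s) p (I p + a p - 1) := by
            funext s
            by_cases hsp : s = p
            · subst hsp; simp only [Function.update_self]; omega
            · simp only [Function.update_of_ne hsp]
          rw [heq]
          apply monotone_update hg.monotone
          · intro s hs
            have h' : I s + a s < I p + a p := hg hs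
            omega
          · intro s hs
            have h' : I p + a p < I s + a s := hg hs
            omega
        · exact hJ
      -- kept branch: a p increases by one
      have hd2 : 1 ≤ (pmat (Function.update I p (I p - 1)) J
          (Function.update a p (a p + 1))).det := by
        apply ih
        · have := sum_update_le I p hp1
          omega
        · apply monotone_update ha
          · intro s hs
            have := ha hs.le
            omega
          · intro s hs
            have h1 : a s = J s := hmax s hs
            have h2 : J p < J s := hJ hs
            omega
        · intro s
          by_cases hsp : s = p
          · subst hsp; simp only [Function.update_self]; omega
          · simp only [Function.update_of_ne hsp]; exact haJ s
        · intro s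
          have heq : Function.update I p (I p - 1) s + Function.update a p (a p + 1) s
              = I s + a s := by
            by_cases hsp : s = p
            · subst hsp; simp only [Function.update_self]; omega
            · simp only [Function.update_of_ne hsp]
          rw [heq]
          exact hJg s
        · have heq : (fun s => Function.update I p (I p - 1) s +
              Function.update a p (a p + 1) s) = fun s => I s + a s := by
            funext s
            by_cases hsp : s = p
            · subst hsp; simp only [Function.update_self]; omega
            · simp only [Function.update_of_ne hsp]
          rw [heq]
          exact hg
        · exact hJ
      linarith
    · -- phase B: a = J everywhere
      push_neg at hA
      have haJ' : ∀ s, a s = J s := fun s => le_antisymm (haJ s) (hA s)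
      by_cases hB : ∃ s, 1 ≤ I s
      · set S : Finset (Fin r) := Finset.univ.filter (fun s => 1 ≤ I s) with hS
        have hSne : S.Nonempty := by
          obtain ⟨s, hs⟩ := hB
          exact ⟨s, by simp [hS, hs]⟩
        set p := S.min' hSne with hpdef
        have hpP : 1 ≤ I p := by
          have := S.min'_mem hSne
          simp only [hS, Finset.mem_filter] at this
          exact this.2
        have hminp : ∀ s, s < p → I s = 0 := by
          intro s hs
          by_contra h
          have : p ≤ s := S.min'_le s (by simp [hS]; omega)
          exact absurd hs (not_lt.2 this)
        rw [det_split I J a p hpP]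
        -- discarded branch (type 2) is nonnegative
        have hd2 : 0 ≤ (pmat (Function.update I p (I p - 1)) J
            (Function.update a p (a p + 1))).det := by
          apply pmat_det_nonneg ((∑ s, Function.update I p (I p - 1) s) + r) _ _ _ le_rfl
          · apply monotone_update ha
            · intro s hs
              have := ha hs.le
              omega
            · intro s hs
              have h2 : J p < J s := hJ hs
              have := haJ' s
              have := haJ' p
              omega
          · have heq : (fun s => Function.update I p (I p - 1) s +
                Function.update a p (a p + 1) s) = fun s => I s + a s := by
              funext s
              by_cases hsp : s = p
              · subst hsp; simp only [Function.update_self]; omega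
              · simp only [Function.update_of_ne hsp]
            rw [heq]
            exact hg.monotone
          · exact hJ
        -- kept branch (type 1)
        have hd1 : 1 ≤ (pmat (Function.update I p (I p - 1)) J a).det := by
          apply ih
          · have := sum_update_le I p hpP
            omega
          · exact ha
          · exact haJ
          · intro s
            by_cases hsp : s = p
            · subst hsp
              simp only [Function.update_self]
              have := haJ' p
              have := hpP
              omega
            · simp only [Function.update_of_ne hsp]
              exact hJg s
          · have heq : (fun s => Function.update I p (I p - 1) s + a s) =
                Function.update (fun s => I s + a s) p (I p + a p - 1) := by
              funext s
              by_cases hsp : s = p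
              · subst hsp; simp only [Function.update_self]; omega
              · simp only [Function.update_of_ne hsp]
            rw [heq]
            apply strictMono_update hg
            · intro s hs
              -- s < p : I s = 0 so I s + a s = J s < J p ≤ I p + a p - 1
              have h1 : I s = 0 := hminp s hs
              have h2 : J s < J p := hJ hs
              have h3 : J p ≤ I p + a p := hJg p
              have h4 := haJ' s
              have h5 := haJ' p
              show I s + a s < I p + a p - 1
              omega
            · intro s hs
              have h' : I p + a p < I s + a s := hg hs
              show I p + a p - 1 < I s + a s
              omega
          · exact hJ
        linarith
      · -- base: all I s = 0
        push_neg at hB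
        have hI0 : ∀ s, I s = 0 := fun s => by have := hB s; omega
        have hone : pmat I J a = 1 := by
          ext s t
          simp only [pmat, Matrix.of_apply, pent, hI0, haJ', Matrix.one_apply]
          by_cases hst : s = t
          · subst hst
            simp
          · have : J s ≠ J t := fun h => hst (hJ.injective h)
            by_cases hc : J s ≤ J t
            · rw [if_pos hc, if_neg hst]
              rw [Nat.choose_eq_zero_of_lt (by omega)]
              norm_num
            · rw [if_neg hc, if_neg hst]
        rw [hone, Matrix.det_one]

/-- **The Pascal matrix is totally non-singular.** For every `r ≥ 1` and index sets
`I = {i₁ < ⋯ < i_r}`, `J = {j₁ < ⋯ < j_r}` of nonnegative integers with `i_s ≥ j_s`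
for all `s`, the `r×r` matrix with `(s,t)`-entry `C(i_s, j_t)` is non-singular;
in fact its determinant is positive. -/
theorem pascal_matrix_totally_nonsingular {r : ℕ} (hr : 1 ≤ r) (I J : Fin r → ℕ)
    (hI : StrictMono I) (hJ : StrictMono J) (hIJ : ∀ s : Fin r, J s ≤ I s) :
    (Matrix.of fun s t : Fin r => ((I s).choose (J t) : ℤ)).det ≠ 0 ∧
    0 < (Matrix.of fun s t : Fin r => ((I s).choose (J t) : ℤ)).det := by
  have hmm : (Matrix.of fun s t : Fin r => ((I s).choose (J t) : ℤ)) =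
      pmat I J (fun _ => 0) := by
    ext s t
    simp [pmat, pent]
  have key : 1 ≤ (pmat I J (fun _ => 0)).det := by
    apply pmat_det_ge_one (∑ s, I s) I J _ le_rfl monotone_const
      (fun s => Nat.zero_le _) (fun s => by simpa using hIJ s) (by simpa using hI) hJ
  rw [hmm]
  constructor
  · intro h
    rw [h] at key
    norm_num at key
  · linarith
end

section
/- If a lower-triangular matrix A ∈ F^{n×n} over a field F is totally-non-singular, then A is invertible and its inverse A^{-1} (which is again lower-triangular) is also totally-non-singular. -/
open Finset

namespace Matrix

variable {m α β R : Type*} [Fintype m] [DecidableEq m] [Fintype α] [DecidableEq α]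
  [Fintype β] [DecidableEq β] [CommRing R]

theorem det_mul_det_toBlocks₁₁_of_mul_eq_one {P Q : Matrix (α ⊕ β) (α ⊕ β) R} (h : Q * P = 1) :
    Q.det * P.toBlocks₁₁.det = Q.toBlocks₂₂.det := by
  rw [← fromBlocks_toBlocks P, ← fromBlocks_toBlocks Q, fromBlocks_multiply, ← fromBlocks_one,
    fromBlocks_inj] at h
  obtain ⟨h₁₁, -, h₂₁, -⟩ := h
  have hQP : Q * fromBlocks P.toBlocks₁₁ 0 P.toBlocks₂₁ 1 =
      fromBlocks 1 Q.toBlocks₁₂ 0 Q.toBlocks₂₂ := by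
    conv_lhs => rw [← fromBlocks_toBlocks Q]
    rw [fromBlocks_multiply, h₁₁, h₂₁]
    simp
  simpa [det_fromBlocks_zero₁₂, det_fromBlocks_zero₂₁] using congrArg det hQP

theorem det_inv_submatrix_ne_zero {A : Matrix m m R} (hA : IsUnit A.det) (e e' : α ⊕ β ≃ m)
    (h : (A.submatrix (e' ∘ Sum.inr) (e ∘ Sum.inr)).det ≠ 0) :
    (A⁻¹.submatrix (e ∘ Sum.inl) (e' ∘ Sum.inl)).det ≠ 0 := by
  have hQP : A.submatrix e' e * A⁻¹.submatrix e e' = 1 := by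
    rw [submatrix_mul_equiv, mul_nonsing_inv A hA, submatrix_one_equiv]
  exact right_ne_zero_of_mul (det_mul_det_toBlocks₁₁_of_mul_eq_one hQP ▸ h)

end Matrix

theorem Equiv.card_filter_comp_inl_add_card_filter_comp_inr {α β γ : Type*} [Fintype α]
    [Fintype β] [Fintype γ] (e : α ⊕ β ≃ γ) (p : γ → Prop) [DecidablePred p] :
    #{a | p (e (.inl a))} + #{b | p (e (.inr b))} = #{c | p c} := by
  simp only [card_filter]
  rw [← Fintype.sum_sum_type (fun x => if p (e x) then 1 else 0)]
  exact e.sum_comp fun c => if p c then 1 else 0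

theorem Monotone.forall_le_iff_card_filter_le {γ : Type*} [LinearOrder γ] {r : ℕ}
    {f g : Fin r → γ} (hf : Monotone f) (hg : Monotone g) :
    (∀ s, f s ≤ g s) ↔ ∀ x, #{s | g s ≤ x} ≤ #{s | f s ≤ x} := by
  refine ⟨fun h x => card_le_card fun s hs => ?_, fun h s => ?_⟩
  · simp only [mem_filter, mem_univ, true_and] at hs ⊢
    exact (h s).trans hs
  · by_contra! hlt
    have hf_le : #{t | f t ≤ g s} ≤ s := by
      refine (card_le_card fun t ht => ?_).trans (Fin.card_Iio s).le
      simp only [mem_filter, mem_univ, true_and, mem_Iio] at ht ⊢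
      by_contra! hst
      exact (hlt.trans_le (hf hst)).not_ge ht
    have hg_ge : s + 1 ≤ #{t | g t ≤ g s} := by
      refine (Fin.card_Iic s).ge.trans (card_le_card fun t ht => ?_)
      simp only [mem_filter, mem_univ, true_and, mem_Iic] at ht ⊢
      exact hg ht
    have := h (g s)
    omega

namespace StrictMono

variable {r n : ℕ} {I J : Fin r → Fin n}

noncomputable def sumComplEquiv (hI : StrictMono I) : Fin r ⊕ Fin (n - r) ≃ Fin n :=
  finSumEquivOfFinset (s := univ.image I) (by rw [card_image_of_injective _ hI.injective, card_fin])
    (by rw [card_compl, card_image_of_injective _ hI.injective, Fintype.card_fin, card_fin])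

theorem sumComplEquiv_inl (hI : StrictMono I) (s : Fin r) : hI.sumComplEquiv (.inl s) = I s :=
  (congrFun (orderEmbOfFin_unique (by simp [card_image_of_injective _ hI.injective])
    (fun s => mem_image_of_mem I (mem_univ s)) hI) s).symm

noncomputable def compl (hI : StrictMono I) : Fin (n - r) → Fin n :=
  hI.sumComplEquiv ∘ Sum.inr

theorem strictMono_compl (hI : StrictMono I) : StrictMono hI.compl :=
  (orderEmbOfFin _ (by simp [card_compl, card_image_of_injective _ hI.injective])).strictMono

theorem card_filter_le_add_card_filter_compl_le (hI : StrictMono I) (x : Fin n) :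
    #{s | I s ≤ x} + #{t | hI.compl t ≤ x} = x + 1 := by
  rw [← Fin.card_Iic, ← filter_ge_eq_Iic,
    ← hI.sumComplEquiv.card_filter_comp_inl_add_card_filter_comp_inr]
  simp only [sumComplEquiv_inl]
  rfl

theorem compl_le_compl (hI : StrictMono I) (hJ : StrictMono J) (h : ∀ s, J s ≤ I s)
    (t : Fin (n - r)) : hI.compl t ≤ hJ.compl t := by
  rw [hJ.monotone.forall_le_iff_card_filter_le hI.monotone] at h
  revert t
  rw [hI.strictMono_compl.monotone.forall_le_iff_card_filter_le hJ.strictMono_compl.monotone]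
  intro x
  have := h x
  have := hI.card_filter_le_add_card_filter_compl_le x
  have := hJ.card_filter_le_add_card_filter_compl_le x
  omega

end StrictMono

/-- If a lower-triangular matrix over a field is totally non-singular, then it is invertible,
and its inverse is again lower-triangular and totally non-singular. -/
theorem inverse_totally_nonsingular {F : Type*} [Field F] {n : ℕ}
    (A : Matrix (Fin n) (Fin n) F)
    (hlow : ∀ i j : Fin n, i < j → A i j = 0)
    (htns : TotallyNonSingular A) :
    IsUnit A ∧ (∀ i j : Fin n, i < j → A⁻¹ i j = 0) ∧ TotallyNonSingular A⁻¹ := by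
  have hdet : IsUnit A.det := by
    simpa using htns n id id strictMono_id strictMono_id fun _ => le_rfl
  let _ := A.invertibleOfIsUnitDet hdet
  refine ⟨(A.isUnit_iff_isUnit_det).mpr hdet,
    fun i j hij => Matrix.blockTriangular_inv_of_blockTriangular
      (b := OrderDual.toDual) (fun i j => hlow i j) hij, ?_⟩
  intro r I J hI hJ hJI
  have := Matrix.det_inv_submatrix_ne_zero hdet hI.sumComplEquiv hJ.sumComplEquiv
    (htns (n - r) hJ.compl hI.compl hJ.strictMono_compl hI.strictMono_compl
      (hI.compl_le_compl hJ hJI))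
  simpa only [Function.comp_def, StrictMono.sumComplEquiv_inl] using this
end

section
/- Define TC_ℤ mapping a string (a_0,…,a_n) of nonnegative integers to the string of pairs ((a_0,…,a_n) ↦ (a_i, Σ_{j≤i} C(i,j)·a_j)_{i=0}^n). Then TC_ℤ is a tree code over the integers with distance at least 1/2: for every n and distinct strings a, a' ∈ ℤ_{≥0}^{n+1} with ℓ = split(a,a'), the number of indices i with (a_i, Σ_{j≤i} C(i,j)a_j) ≠ (a'_i, Σ_{j≤i} C(i,j)a'_j) is at least (n+1−ℓ)/2. Moreover, for every i ≤ n, the second coordinate satisfies Σ_{j≤i} C(i,j)·a_j ≤ 2^n · max_j |a_j|. -/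
/-!
Put `d = a - a'`, supported on a set `K` whose least element is the split `ℓ`. The second
coordinates of the two encodings agree at `i` exactly when `P(i) = ∑ₖ dₖ C(i,k)` vanishes, and
`P` is a combination of the `|K|` binomials `C(·,k)`, `k ∈ K`. A discrete Descartes rule of signs
shows that such a sum has at most `|K|` zeros at integers `≥ min K`: after dividing by
`C(y, min K)` the sum has a constant term, which the forward difference kills, so (discrete Rolle)
`N + 1` weak sign alternations of the sum give `N` alternations of a sum with one binomial fewer.
Hence among the positions `≥ ℓ` at most `|K|` agree, while at least `|K|` disagree already in the
first coordinate. The bound on the entries is `∑ⱼ C(i,j) ≤ ∑ⱼ C(n,j) = 2ⁿ`.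
-/

open Finset

noncomputable def binomialSum (K : Finset ℕ) (c : ℕ → ℝ) (y : ℕ) : ℝ :=
  ∑ k ∈ K, c k * y.choose k

def SignAlternates (f : ℕ → ℝ) {N : ℕ} (t : Fin N → ℕ) : Prop :=
  ∀ i : Fin N, 0 ≤ (-1) ^ (i : ℕ) * f (t i)

section SubConst

variable {K : Finset ℕ} {m : ℕ}

lemma injOn_sub_const (hK : ∀ k ∈ K, m ≤ k) : Set.InjOn (· - m) K := fun a ha b hb hab => by
  have := hK a ha
  have := hK b hb
  simp only at hab
  omega

lemma sum_image_sub_const {M : Type*} [AddCommMonoid M] (hK : ∀ k ∈ K, m ≤ k) (f : ℕ → M) :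
    ∑ j ∈ K.image (· - m), f j = ∑ k ∈ K, f (k - m) :=
  sum_image (injOn_sub_const hK)

lemma card_image_sub_const (hK : ∀ k ∈ K, m ≤ k) : #(K.image (· - m)) = #K :=
  card_image_of_injOn (injOn_sub_const hK)

lemma isLeast_image_sub_const {k₀ : ℕ} (h : IsLeast (K : Set ℕ) k₀) :
    IsLeast (K.image (· - m) : Set ℕ) (k₀ - m) := by
  rw [coe_image]
  exact (show Monotone (· - m) from fun _ _ hab => Nat.sub_le_sub_right hab m).map_isLeast h

end SubConst

lemma binomialSum_sub_binomialSum_succ (K : Finset ℕ) (c : ℕ → ℝ) (y : ℕ) :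
    binomialSum K c y - binomialSum K c (y + 1) =
      binomialSum ((K.erase 0).image (· - 1)) (fun j => -c (j + 1)) y := by
  have hpos : ∀ k ∈ K.erase 0, 1 ≤ k := fun k hk => Nat.one_le_iff_ne_zero.2 (ne_of_mem_erase hk)
  rw [binomialSum, binomialSum, binomialSum, sum_image_sub_const hpos, ← sum_sub_distrib,
    ← sum_erase K (a := 0)
      (f := fun k => c k * (y.choose k : ℝ) - c k * ((y + 1).choose k : ℝ)) (by simp)]
  refine sum_congr rfl fun k hk => ?_
  obtain ⟨j, rfl⟩ := Nat.exists_eq_add_one_of_ne_zero (ne_of_mem_erase hk)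
  simp only [Nat.choose_succ_succ', Nat.add_sub_cancel, Nat.cast_add]
  ring

lemma binomialSum_eq_of_lt {K : Finset ℕ} (c : ℕ → ℝ) {y : ℕ} (h0 : 0 ∈ K)
    (hy : ∀ k ∈ K.erase 0, y < k) : binomialSum K c y = c 0 := by
  rw [binomialSum, sum_eq_single_of_mem 0 h0 fun k hk hk0 => by
    rw [Nat.choose_eq_zero_of_lt (hy k (mem_erase.2 ⟨hk0, hk⟩)), Nat.cast_zero, mul_zero]]
  simp

lemma binomialSum_eq_choose_mul {K : Finset ℕ} (c : ℕ → ℝ) {k₀ : ℕ} (hK : ∀ k ∈ K, k₀ ≤ k)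
    (y : ℕ) : binomialSum K c y = y.choose k₀ *
      binomialSum (K.image (· - k₀)) (fun j => c (j + k₀) / (j + k₀).choose k₀) (y - k₀) := by
  rw [binomialSum, binomialSum, sum_image_sub_const hK, mul_sum]
  refine sum_congr rfl fun k hk => ?_
  rw [Nat.sub_add_cancel (hK k hk)]
  have hpos : (0 : ℝ) < k.choose k₀ := by exact_mod_cast Nat.choose_pos (hK k hk)
  have hmul : (y.choose k * k.choose k₀ : ℝ) = y.choose k₀ * (y - k₀).choose (k - k₀) := by
    exact_mod_cast Nat.choose_mul (hK k hk)
  field_simp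
  linear_combination c k * hmul

lemma exists_succ_le_of_nonneg_of_nonpos {g : ℕ → ℝ} {a b : ℕ} (hab : a < b) (ha : 0 ≤ g a)
    (hb : g b ≤ 0) : ∃ s, a ≤ s ∧ s < b ∧ g (s + 1) ≤ g s := by
  by_contra! h
  have hlt : ∀ m, a < m → m ≤ b → g a < g m := by
    intro m ham hmb
    induction m, ham using Nat.le_induction with
    | base => exact h a le_rfl (by omega)
    | succ m ham ih => exact (ih (by omega)).trans (h m (by omega) (by omega))
  linarith [hlt b hab le_rfl]

namespace SignAlternates

variable {f : ℕ → ℝ} {N : ℕ}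

lemma eq_zero_of_apply_eq {t : Fin (N + 2) → ℕ} (hf : SignAlternates f t)
    (h : f (t 0) = f (t 1)) : f (t 0) = 0 := by
  have h0 := hf 0
  have h1 := hf 1
  simp only [Fin.val_zero, Fin.val_one, pow_zero, pow_one, one_mul, neg_one_mul] at h0 h1
  linarith

lemma exists_sub_succ {t : Fin (N + 2) → ℕ} (ht : StrictMono t) (hf : SignAlternates f t) :
    ∃ s : Fin (N + 1) → ℕ, StrictMono s ∧ (∀ i, t i.castSucc ≤ s i) ∧
      SignAlternates (fun y => f y - f (y + 1)) s := by
  have key : ∀ i : Fin (N + 1), ∃ s, t i.castSucc ≤ s ∧ s < t i.succ ∧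
      0 ≤ (-1) ^ (i : ℕ) * (f s - f (s + 1)) := by
    intro i
    obtain ⟨s, h1, h2, h3⟩ := exists_succ_le_of_nonneg_of_nonpos
      (g := fun y => (-1) ^ (i : ℕ) * f y) (ht i.castSucc_lt_succ)
      (by simpa using hf i.castSucc) (by simpa [pow_succ] using hf i.succ)
    exact ⟨s, h1, h2, by rw [mul_sub]; linarith⟩
  choose s hts hst hs using key
  refine ⟨s, Fin.strictMono_iff_lt_succ.2 fun i => ?_, hts, hs⟩
  calc s i.castSucc < t i.castSucc.succ := hst _
    _ = t i.succ.castSucc := by rw [Fin.succ_castSucc]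
    _ ≤ s i.succ := hts _

lemma max_const {t : Fin (N + 2) → ℕ} (ht : StrictMono t) (hf : SignAlternates f t) {m : ℕ}
    (hm : m < t 1) (hconst : ∀ y ≤ m, f y = f m) :
    StrictMono (fun i => max (t i) m) ∧ SignAlternates f (fun i => max (t i) m) := by
  refine ⟨fun i j hij => ?_, fun i => ?_⟩
  · have h1j : (1 : Fin (N + 2)) ≤ j := by
      simp only [Fin.le_def, Fin.lt_def, Fin.val_one] at hij ⊢
      omega
    have hmj : m < t j := hm.trans_le (ht.monotone h1j)
    simp only [max_eq_left hmj.le]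
    exact max_lt (ht hij) hmj
  · rcases le_total (t i) m with h | h
    · simpa only [max_eq_right h, ← hconst _ h] using hf i
    · simpa only [max_eq_left h] using hf i

lemma binomialSum_normalize {K : Finset ℕ} {c : ℕ → ℝ} {k₀ : ℕ} {t : Fin N → ℕ}
    (hK : ∀ k ∈ K, k₀ ≤ k) (ht : ∀ i, k₀ ≤ t i) (hf : SignAlternates (binomialSum K c) t) :
    SignAlternates (binomialSum (K.image (· - k₀)) (fun j => c (j + k₀) / (j + k₀).choose k₀))
      (fun i => t i - k₀) := by
  intro i
  have hpos : (0 : ℝ) < (t i).choose k₀ := by exact_mod_cast Nat.choose_pos (ht i)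
  have := hf i
  rw [binomialSum_eq_choose_mul c hK, mul_left_comm] at this
  exact (mul_nonneg_iff_of_pos_left hpos).1 this

end SignAlternates

lemma not_signAlternates_binomialSum_of_zero_mem {N : ℕ}
    (ih : ∀ {K : Finset ℕ} {c : ℕ → ℝ} {k₀ : ℕ} {t : Fin (N + 1) → ℕ}, #K = N →
      IsLeast (K : Set ℕ) k₀ → (∀ k ∈ K, c k ≠ 0) → StrictMono t → (∀ i, k₀ ≤ t i) →
      ¬ SignAlternates (binomialSum K c) t)
    {K : Finset ℕ} {c : ℕ → ℝ} {t : Fin (N + 2) → ℕ} (hN : #K = N + 1) (h0 : 0 ∈ K)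
    (hc : ∀ k ∈ K, c k ≠ 0) (ht : StrictMono t) : ¬ SignAlternates (binomialSum K c) t := by
  intro hf
  obtain ⟨k, hk, hkt⟩ : ∃ k ∈ K.erase 0, k ≤ t 1 := by
    by_contra! hlt
    have ht01 : t 0 < t 1 := ht Fin.zero_lt_one
    refine hc 0 h0 ?_
    rw [← binomialSum_eq_of_lt c h0 fun k hk => ht01.trans (hlt k hk)]
    exact hf.eq_zero_of_apply_eq <| by
      rw [binomialSum_eq_of_lt c h0 fun k hk => ht01.trans (hlt k hk),
        binomialSum_eq_of_lt c h0 hlt]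
  -- Below the second exponent `k₁` the sum is the constant `c 0`, so raising the points to at
  -- least `k₁ - 1` keeps the alternation and puts them above the least exponent of the difference.
  set k₁ := (K.erase 0).min' ⟨k, hk⟩
  have hk₁ : IsLeast (K.erase 0 : Set ℕ) k₁ := isLeast_min' _ _
  have hk₁pos : k₁ ≠ 0 := ne_of_mem_erase hk₁.1
  have hconst : ∀ y < k₁, binomialSum K c y = c 0 := fun y hy =>
    binomialSum_eq_of_lt c h0 fun k hk => hy.trans_le (hk₁.2 hk)
  obtain ⟨ht', hf'⟩ := hf.max_const ht (m := k₁ - 1)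
    (by have := min'_le _ _ hk; omega) fun y hy => by
      rw [hconst y (by omega), hconst (k₁ - 1) (by omega)]
  obtain ⟨s, hs, hts, hfs⟩ := hf'.exists_sub_succ ht'
  have hpos : ∀ k ∈ K.erase 0, 1 ≤ k := fun k hk => Nat.one_le_iff_ne_zero.2 (ne_of_mem_erase hk)
  refine ih (c := fun j => -c (j + 1))
    (by rw [card_image_sub_const hpos, card_erase_of_mem h0, hN, Nat.add_sub_cancel])
    (isLeast_image_sub_const hk₁) ?_ hs (fun i => (le_max_right _ _).trans (hts i)) ?_
  · intro j hj
    obtain ⟨k, hk, rfl⟩ := mem_image.1 hj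
    rw [Nat.sub_add_cancel (hpos k hk)]
    exact neg_ne_zero.2 (hc k (mem_of_mem_erase hk))
  · simpa only [binomialSum_sub_binomialSum_succ] using hfs

theorem not_signAlternates_binomialSum (N : ℕ) :
    ∀ {K : Finset ℕ} {c : ℕ → ℝ} {k₀ : ℕ} {t : Fin (N + 1) → ℕ}, #K = N →
      IsLeast (K : Set ℕ) k₀ → (∀ k ∈ K, c k ≠ 0) → StrictMono t → (∀ i, k₀ ≤ t i) →
      ¬ SignAlternates (binomialSum K c) t := by
  induction N with
  | zero =>
    intro K c k₀ t hN hK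
    obtain rfl := card_eq_zero.1 hN
    exact absurd hK.1 (by simp)
  | succ N ih =>
    intro K c k₀ t hN hK hc ht htk hf
    refine not_signAlternates_binomialSum_of_zero_mem ih
      ((card_image_sub_const hK.2).trans hN) (mem_image.2 ⟨k₀, hK.1, Nat.sub_self _⟩) ?_ ?_
      (hf.binomialSum_normalize hK.2 htk)
    · intro j hj
      obtain ⟨k, hk, rfl⟩ := mem_image.1 hj
      rw [Nat.sub_add_cancel (hK.2 hk)]
      exact div_ne_zero (hc k hk) (Nat.cast_ne_zero.2 (Nat.choose_pos (hK.2 hk)).ne')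
    · intro i j hij
      have := ht hij
      have := htk i
      show t i - k₀ < t j - k₀
      omega

theorem card_le_card_of_binomialSum_eq_zero {K : Finset ℕ} {c : ℕ → ℝ} {k₀ : ℕ}
    (hK : IsLeast (K : Set ℕ) k₀) (hc : ∀ k ∈ K, c k ≠ 0) {S : Finset ℕ}
    (hS : ∀ y ∈ S, k₀ ≤ y ∧ binomialSum K c y = 0) : #S ≤ #K := by
  by_contra! h
  let t := (Fin.castLEOrderEmb h).trans (S.orderEmbOfFin rfl)
  have hmem : ∀ i, t i ∈ S := fun i => S.orderEmbOfFin_mem rfl _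
  exact not_signAlternates_binomialSum (#K) rfl hK hc (OrderEmbedding.strictMono t)
    (fun i => (hS _ (hmem i)).1) fun i => by rw [(hS _ (hmem i)).2, mul_zero]

/-- The encoding `TC_ℤ`. -/
def pascalCode {m : ℕ} (a : Fin m → ℕ) (i : Fin m) : ℕ × ℕ :=
  (a i, ∑ j : Fin m, (i.val).choose j.val * a j)

section PascalCode

variable {m : ℕ} (a a' : Fin m → ℕ)

lemma binomialSum_extend_sub (y : ℕ) :
    binomialSum (({i | a i ≠ a' i} : Finset (Fin m)).map Fin.valEmbedding)
        (Function.extend Fin.val (fun j => (a j : ℝ) - a' j) 0) y =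
      ((∑ j : Fin m, y.choose j.val * a j : ℕ) : ℝ) -
        (∑ j : Fin m, y.choose j.val * a' j : ℕ) := by
  simp only [binomialSum, sum_map, Fin.valEmbedding_apply, Fin.val_injective.extend_apply]
  rw [sum_filter_of_ne (p := fun j => a j ≠ a' j) fun j _ h hj => h (by simp [hj])]
  push_cast
  rw [← sum_sub_distrib]
  exact sum_congr rfl fun j _ => by ring

lemma card_pascalCode_snd_eq_le {ℓ : ℕ} (hℓ : ℓ < m) (hpre : ∀ i : Fin m, i.val < ℓ → a i = a' i)
    (hdiff : a ⟨ℓ, hℓ⟩ ≠ a' ⟨ℓ, hℓ⟩) :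
    #{i : Fin m | ℓ ≤ i.val ∧ (pascalCode a i).2 = (pascalCode a' i).2} ≤ #{i | a i ≠ a' i} := by
  have hK : IsLeast (({i | a i ≠ a' i} : Finset (Fin m)).map Fin.valEmbedding : Set ℕ) ℓ := by
    refine ⟨mem_map.2 ⟨⟨ℓ, hℓ⟩, by simpa using hdiff, rfl⟩, fun k hk => ?_⟩
    obtain ⟨i, hi, rfl⟩ := mem_map.1 hk
    by_contra! hlt
    exact (mem_filter.1 hi).2 (hpre i hlt)
  rw [← card_map Fin.valEmbedding, ← card_map Fin.valEmbedding (s := {i | a i ≠ a' i})]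
  refine card_le_card_of_binomialSum_eq_zero
    (c := Function.extend Fin.val (fun j => (a j : ℝ) - a' j) 0) hK (fun k hk => ?_) fun y hy => ?_
  · obtain ⟨i, hi, rfl⟩ := mem_map.1 hk
    rw [Fin.valEmbedding_apply, Fin.val_injective.extend_apply, sub_ne_zero, Ne, Nat.cast_inj]
    exact (mem_filter.1 hi).2
  · obtain ⟨i, hi, rfl⟩ := mem_map.1 hy
    obtain ⟨hℓi, hi⟩ := (mem_filter.1 hi).2
    refine ⟨hℓi, ?_⟩
    rw [binomialSum_extend_sub, sub_eq_zero, Nat.cast_inj]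
    exact hi

lemma sub_le_two_mul_hammingDist_pascalCode {ℓ : ℕ} (hℓ : ℓ < m)
    (hpre : ∀ i : Fin m, i.val < ℓ → a i = a' i) (hdiff : a ⟨ℓ, hℓ⟩ ≠ a' ⟨ℓ, hℓ⟩) :
    m - ℓ ≤ 2 * hammingDist (pascalCode a) (pascalCode a') := by
  set A : Finset (Fin m) := {i | ℓ ≤ i.val ∧ (pascalCode a i).2 = (pascalCode a' i).2}
  set D : Finset (Fin m) := {i | pascalCode a i ≠ pascalCode a' i}
  have hA : #A ≤ #{i | a i ≠ a' i} := card_pascalCode_snd_eq_le a a' hℓ hpre hdiff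
  have hne : #{i | a i ≠ a' i} ≤ #D := card_le_card fun i hi => by
    simp only [D, mem_filter, mem_univ, true_and] at hi ⊢
    exact fun h => hi (congrArg Prod.fst h)
  have hcover : m ≤ min m ℓ + (#A + #D) :=
    calc m = #(univ : Finset (Fin m)) := (card_fin m).symm
      _ ≤ #(({i : Fin m | i.val < ℓ} : Finset (Fin m)) ∪ (A ∪ D)) := card_le_card fun i _ => by
          simp only [A, D, mem_union, mem_filter, mem_univ, true_and]
          by_cases h : pascalCode a i = pascalCode a' i
          · exact (lt_or_ge i.val ℓ).imp id fun hi => .inl ⟨hi, congrArg Prod.snd h⟩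
          · exact .inr (.inr h)
      _ ≤ #{i : Fin m | i.val < ℓ} + (#A + #D) :=
          (card_union_le _ _).trans (Nat.add_le_add_left (card_union_le _ _) _)
      _ = min m ℓ + (#A + #D) := by rw [Fin.card_filter_val_lt]
  change m - ℓ ≤ 2 * #D
  omega

end PascalCode

lemma sum_choose_mul_le_two_pow_mul_sup {n k : ℕ} (hk : k ≤ n) (a : Fin (n + 1) → ℕ) :
    ∑ j : Fin (n + 1), k.choose j.val * a j ≤ 2 ^ n * univ.sup a :=
  calc ∑ j : Fin (n + 1), k.choose j.val * a j
      ≤ ∑ j : Fin (n + 1), n.choose j.val * univ.sup a :=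
        sum_le_sum fun j _ => Nat.mul_le_mul (Nat.choose_le_choose _ hk) (le_sup (mem_univ j))
    _ = 2 ^ n * univ.sup a := by
        rw [← sum_mul, Fin.sum_univ_eq_sum_range (fun j => n.choose j), Nat.sum_range_choose]

/-- The tree code over the integers obtained from the Pascal matrix:
`TC_ℤ(a)_i = (a_i, Σ_j C(i,j)·a_j)` (note `C(i,j) = 0` for `j > i`, so the sum
effectively ranges over `j ≤ i` and the encoding is online).
(a) For any two distinct strings `a, a' ∈ ℤ_{≥0}^{n+1}` with split `ℓ`, the encodings
differ in at least `(n+1−ℓ)/2` positions (distance at least `1/2`).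
(b) Each output integer is bounded: `Σ_j C(i,j)·a_j ≤ 2^n · max_j a_j`. -/
theorem integer_tree_code (n : ℕ) :
    (∀ (a a' : Fin (n + 1) → ℕ) (ℓ : ℕ) (hℓ : ℓ < n + 1),
      (∀ i : Fin (n + 1), i.val < ℓ → a i = a' i) → a ⟨ℓ, hℓ⟩ ≠ a' ⟨ℓ, hℓ⟩ →
      ((n : ℝ) + 1 - ℓ) / 2 ≤
        (hammingDist
          (fun i : Fin (n + 1) => (a i, ∑ j : Fin (n + 1), (i.val).choose j.val * a j))
          (fun i : Fin (n + 1) => (a' i, ∑ j : Fin (n + 1), (i.val).choose j.val * a' j)) : ℝ))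
    ∧
    (∀ (a : Fin (n + 1) → ℕ) (i : Fin (n + 1)),
      ∑ j : Fin (n + 1), (i.val).choose j.val * a j ≤ 2 ^ n * Finset.univ.sup a) := by
  refine ⟨fun a a' ℓ hℓ hpre hdiff => ?_,
    fun a i => sum_choose_mul_le_two_pow_mul_sup (Nat.lt_succ_iff.1 i.isLt) a⟩
  have h : ((n + 1 - ℓ : ℕ) : ℝ) ≤ 2 * hammingDist (pascalCode a) (pascalCode a') := by
    exact_mod_cast sub_le_two_mul_hammingDist_pascalCode a a' hℓ hpre hdiff
  rw [Nat.cast_sub hℓ.le] at h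
  push_cast at h
  change _ ≤ (hammingDist (pascalCode a) (pascalCode a') : ℝ)
  linarith
end

section
/- For every positive integer s, there exists an s-truncated tree code TC^(s) over input alphabet {0,1}^s and output alphabet {0,1}^{3s} (i.e., a family of online encoding maps sending, for each k ≤ s, strings in ({0,1}^s)^k to strings in ({0,1}^{3s})^k) whose distance is at least 1/2. -/
/-!
Take a random linear online code over `𝔽₂`: the `i`-th output block is `∑_{j ≤ i} M i j x_j`
with independent uniform `3s × s` matrices `M i j`. By linearity, two inputs that split at `ℓ`
have equal output blocks exactly where the encoding of their difference `d` vanishes, and `d` is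
zero before `ℓ` and nonzero at `ℓ`. For fixed `d` and a set `A` of positions `≥ ℓ` the blocks at
`A` are independent and uniform, since the uniform block `M i ℓ` multiplies `d ℓ ≠ 0`; so they all
vanish with probability `2^(-3s|A|)`. A union bound over the `s²` intervals `[ℓ, k]`, the
`2^(sm)` words supported on an interval of length `m` and the `C(m, m/2 + 1) ≤ 2^(m-1)` sets `A`
of size `m/2 + 1` in it leaves probability `< 1` that some interval carries more than `m/2` zeros.
-/

open Finset Matrix

theorem AddMonoidHom.card_filter_eq_zero_mul_card {G H : Type*} [AddGroup G] [Fintype G]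
    [AddGroup H] [Fintype H] [DecidableEq H] (f : G →+ H) (hf : Function.Surjective f) :
    #{g | f g = 0} * Fintype.card H = Fintype.card G := by
  have := f.ker.card_mul_index
  rw [AddSubgroup.index_ker, AddMonoidHom.range_eq_top.2 hf] at this
  simpa [Nat.card_eq_fintype_card, Fintype.card_subtype] using this

theorem Nat.sq_mul_choose_mul_two_pow_lt {s m : ℕ} (hm : m ≤ s) :
    s ^ 2 * (m.choose (m / 2 + 1) * 2 ^ (s * m)) < 2 ^ (3 * s * (m / 2 + 1)) := by
  have hchoose : m.choose (m / 2 + 1) ≤ 2 ^ (m - 1) := by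
    cases m with
    | zero => simp
    | succ m => exact choose_succ_le_two_pow _ _
  have hsq : s ^ 2 < 2 ^ (2 * s) := by
    rw [pow_mul']
    exact Nat.pow_lt_pow_left s.lt_two_pow_self two_ne_zero
  have hexp : 2 * s + (m - 1 + s * m) ≤ 3 * s * (m / 2 + 1) := by
    have hhalf : m - 1 ≤ s * (m / 2) := by
      rcases (m / 2).eq_zero_or_pos with h | h
      · omega
      · exact (Nat.le_mul_of_pos_right s h).trans' (by omega)
    have hodd : s * m ≤ 2 * (s * (m / 2)) + s := by
      calc s * m ≤ s * (2 * (m / 2) + 1) := Nat.mul_le_mul_left _ (by omega)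
        _ = _ := by ring
    have : 3 * s * (m / 2 + 1) = 3 * (s * (m / 2)) + 3 * s := by ring
    omega
  calc s ^ 2 * (m.choose (m / 2 + 1) * 2 ^ (s * m)) ≤ s ^ 2 * 2 ^ (m - 1 + s * m) := by
        rw [pow_add]
        gcongr
    _ < 2 ^ (2 * s) * 2 ^ (m - 1 + s * m) := Nat.mul_lt_mul_of_pos_right hsq (by positivity)
    _ ≤ 2 ^ (3 * s * (m / 2 + 1)) := by
        rw [← pow_add]
        exact Nat.pow_le_pow_right two_pos hexp

theorem Fin.card_filter_ne_le_hammingDist_castLE {β : Type*} [DecidableEq β] {k n : ℕ}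
    (hk : k ≤ n) (f g : Fin n → β) {S : Finset (Fin n)} (hS : ∀ i ∈ S, (i : ℕ) < k) :
    #{i ∈ S | f i ≠ g i} ≤
      hammingDist (fun i => f (Fin.castLE hk i)) (fun i => g (Fin.castLE hk i)) :=
  calc #{i ∈ S | f i ≠ g i}
      ≤ #(({i | f (Fin.castLE hk i) ≠ g (Fin.castLE hk i)} : Finset (Fin k)).map
          (Fin.castLEEmb hk)) :=
        card_le_card fun i hi =>
          mem_map.2 ⟨⟨i, hS i (mem_filter.1 hi).1⟩, by simpa using (mem_filter.1 hi).2, rfl⟩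
    _ = _ := card_map _

namespace LinearTreeCode

def zeroExtend {α : Type*} [Zero α] {m n : ℕ} (x : Fin m → α) : Fin n → α :=
  fun j => if h : (j : ℕ) < m then x ⟨j, h⟩ else 0

theorem zeroExtend_of_lt {α : Type*} [Zero α] {m n : ℕ} (x : Fin m → α) {j : Fin n}
    (h : (j : ℕ) < m) : zeroExtend x j = x ⟨j, h⟩ :=
  dif_pos h

abbrev Word (F : Type*) (n a : ℕ) := Fin n → Fin a → F

abbrev Generator (F : Type*) (n a b : ℕ) := Fin n → Fin n → Matrix (Fin b) (Fin a) F

variable {F : Type*} [Field F] {n a b : ℕ}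

def encode (M : Generator F n a b) (d : Word F n a) (i : Fin n) : Fin b → F :=
  ∑ j ∈ Iic i, M i j *ᵥ d j

theorem encode_congr (M : Generator F n a b) {d d' : Word F n a} {i : Fin n}
    (h : ∀ j ≤ i, d j = d' j) : encode M d i = encode M d' i :=
  sum_congr rfl fun j hj => by rw [h j (mem_Iic.1 hj)]

theorem encode_sub (M : Generator F n a b) (d d' : Word F n a) (i : Fin n) :
    encode M (d - d') i = encode M d i - encode M d' i := by
  simp only [encode, Pi.sub_apply, mulVec_sub, sum_sub_distrib]

theorem encode_add_left (M M' : Generator F n a b) (d : Word F n a) (i : Fin n) :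
    encode (M + M') d i = encode M d i + encode M' d i := by
  simp only [encode, Pi.add_apply, add_mulVec, sum_add_distrib]

def encodeAt (d : Word F n a) (A : Finset (Fin n)) :
    Generator F n a b →+ (A → Fin b → F) where
  toFun M i := encode M d i
  map_zero' := by ext; simp [encode]
  map_add' M M' := by ext; simp [encode_add_left]

theorem encodeAt_surjective {d : Word F n a} {ℓ : Fin n} (hd : d ℓ ≠ 0)
    {A : Finset (Fin n)} (hA : ∀ i ∈ A, ℓ ≤ i) :
    Function.Surjective (encodeAt (b := b) d A) := by
  obtain ⟨c, hc⟩ := Function.ne_iff.1 hd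
  intro t
  -- each row block `i ∈ A` reads off column `c` of `d ℓ` and rescales it to `t i`
  let M : Generator F n a b := fun i => Pi.single ℓ
    (vecMulVec (if h : i ∈ A then t ⟨i, h⟩ else 0) (Pi.single c (d ℓ c)⁻¹))
  refine ⟨M, funext fun ⟨i, hi⟩ => ?_⟩
  have hsingle : encode M d i = M i ℓ *ᵥ d ℓ :=
    sum_eq_single_of_mem ℓ (mem_Iic.2 (hA i hi)) fun j _ hj => by
      simp only [M, Pi.single_eq_of_ne hj, zero_mulVec]
  change encode M d i = t ⟨i, hi⟩
  rw [hsingle]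
  simp [M, hi, vecMulVec_mulVec, single_dotProduct, inv_mul_cancel₀ hc]

section Support

variable [Fintype F]

def supportedOn (ℓ k : Fin n) : Finset (Word F n a) :=
  Fintype.piFinset fun j => if j ∈ Icc ℓ k then univ else {0}

theorem mem_supportedOn {ℓ k : Fin n} {d : Word F n a} :
    d ∈ supportedOn ℓ k ↔ ∀ j ∉ Icc ℓ k, d j = 0 := by
  simp only [supportedOn, Fintype.mem_piFinset]
  refine forall_congr' fun j => ?_
  split_ifs with hj <;> simp [hj]

theorem card_supportedOn (ℓ k : Fin n) :
    #(supportedOn ℓ k : Finset (Word F n a)) = Fintype.card F ^ (a * #(Icc ℓ k)) := by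
  simp only [supportedOn, Fintype.card_piFinset, apply_ite card, card_univ, card_singleton,
    Fintype.prod_ite_mem, prod_const, Fintype.card_fun, Fintype.card_fin, pow_mul]

end Support

variable [DecidableEq F]

/-- `d` stands for the difference of two inputs that split at `ℓ`. -/
def HasHalfDistance (M : Generator F n a b) : Prop :=
  ∀ (ℓ k : Fin n) (d : Word F n a), (∀ j < ℓ, d j = 0) → d ℓ ≠ 0 →
    #{i ∈ Icc ℓ k | encode M d i = 0} ≤ #(Icc ℓ k) / 2

theorem HasHalfDistance.card_Icc_sub_half_le {M : Generator F n a b} (hM : HasHalfDistance M)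
    {X X' : Word F n a} {ℓ : Fin n} (hpre : ∀ j < ℓ, X j = X' j) (hℓ : X ℓ ≠ X' ℓ)
    (k : Fin n) :
    #(Icc ℓ k) - #(Icc ℓ k) / 2 ≤ #{i ∈ Icc ℓ k | encode M X i ≠ encode M X' i} := by
  have hzeros := hM ℓ k (X - X') (fun j hj => sub_eq_zero.2 (hpre j hj)) (sub_ne_zero.2 hℓ)
  simp only [encode_sub, sub_eq_zero] at hzeros
  have := card_filter_add_card_filter_not (s := Icc ℓ k)
    (p := fun i => encode M X i = encode M X' i)
  simp only [ne_eq] at this ⊢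
  omega

theorem HasHalfDistance.sub_half_le_hammingDist {M : Generator F n a b}
    (hM : HasHalfDistance M) {k : ℕ} (hk : k ≤ n) {X X' : Word F n a} {ℓ : Fin n}
    (hℓ : (ℓ : ℕ) < k) (hpre : ∀ j < ℓ, X j = X' j) (hdiff : X ℓ ≠ X' ℓ) :
    k - ℓ - (k - ℓ) / 2 ≤
      hammingDist (fun i => encode M X (Fin.castLE hk i))
        (fun i => encode M X' (Fin.castLE hk i)) := by
  let k' : Fin n := ⟨k - 1, by omega⟩
  have hIcc : #(Icc ℓ k') = k - ℓ := by simp only [Fin.card_Icc, k']; omega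
  simpa only [hIcc] using (hM.card_Icc_sub_half_le hpre hdiff k').trans
    (Fin.card_filter_ne_le_hammingDist_castLE hk _ _ fun i hi => by
      simp only [mem_Icc, Fin.le_def, k'] at hi; omega)

section Counting

variable [Fintype F]

theorem card_filter_encode_eq_zero_mul {d : Word F n a} {ℓ : Fin n} (hd : d ℓ ≠ 0)
    {A : Finset (Fin n)} (hA : ∀ i ∈ A, ℓ ≤ i) :
    #{M : Generator F n a b | ∀ i ∈ A, encode M d i = 0} * Fintype.card F ^ (b * #A) =
      Fintype.card (Generator F n a b) := by
  rw [← (encodeAt d A).card_filter_eq_zero_mul_card (encodeAt_surjective hd hA)]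
  congr 2
  · ext M
    simp [encodeAt, funext_iff]
  · simp [pow_mul]

def badAt (ℓ k : Fin n) : Finset (Generator F n a b) :=
  {M | ∃ d : Word F n a, (∀ j < ℓ, d j = 0) ∧ d ℓ ≠ 0 ∧
    #(Icc ℓ k) / 2 < #{i ∈ Icc ℓ k | encode M d i = 0}}

theorem badAt_subset (ℓ k : Fin n) :
    badAt ℓ k ⊆ (powersetCard (#(Icc ℓ k) / 2 + 1) (Icc ℓ k)).biUnion fun A =>
      {d ∈ (supportedOn ℓ k : Finset (Word F n a)) | d ℓ ≠ 0}.biUnion fun d =>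
        ({M | ∀ i ∈ A, encode M d i = 0} : Finset (Generator F n a b)) := by
  intro M hM
  obtain ⟨d, hlow, hdℓ, hcard⟩ := (mem_filter.1 hM).2
  obtain ⟨A, hA, hAcard⟩ := exists_subset_card_eq (Nat.succ_le_of_lt hcard)
  obtain ⟨i₀, hi₀⟩ := card_pos.1 (hcard.trans_le' (Nat.zero_le _))
  have hℓk : ℓ ≤ k := by
    obtain ⟨hℓi, hik⟩ := mem_Icc.1 (mem_filter.1 hi₀).1
    exact hℓi.trans hik
  -- truncating `d` after `k` keeps the output symbols at positions `≤ k`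
  let d' : Word F n a := fun j => if j ≤ k then d j else 0
  have hsupp : d' ∈ supportedOn ℓ k := mem_supportedOn.2 fun j hj => by
    rw [mem_Icc, not_and_or, not_le, not_le] at hj
    rcases hj with hj | hj
    · simp [d', hlow j hj]
    · simp [d', hj.not_ge]
  refine mem_biUnion.2 ⟨A, mem_powersetCard.2 ⟨hA.trans (filter_subset _ _), hAcard⟩,
    mem_biUnion.2 ⟨d', mem_filter.2 ⟨hsupp, by simpa [d', hℓk] using hdℓ⟩,
      mem_filter.2 ⟨mem_univ _, fun i hi => ?_⟩⟩⟩
  obtain ⟨hiIcc, hi⟩ := mem_filter.1 (hA hi)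
  rw [← hi]
  exact encode_congr M fun j hj => if_pos (hj.trans (mem_Icc.1 hiIcc).2)

theorem card_badAt_mul_le (ℓ k : Fin n) :
    #(badAt ℓ k : Finset (Generator F n a b)) * Fintype.card F ^ (b * (#(Icc ℓ k) / 2 + 1)) ≤
      (#(Icc ℓ k)).choose (#(Icc ℓ k) / 2 + 1) * Fintype.card F ^ (a * #(Icc ℓ k)) *
        Fintype.card (Generator F n a b) := by
  set P := powersetCard (#(Icc ℓ k) / 2 + 1) (Icc ℓ k)
  set D := {d ∈ (supportedOn ℓ k : Finset (Word F n a)) | d ℓ ≠ 0}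
  calc #(badAt ℓ k : Finset (Generator F n a b)) * Fintype.card F ^ (b * (#(Icc ℓ k) / 2 + 1))
      ≤ (∑ A ∈ P, ∑ d ∈ D,
          #({M | ∀ i ∈ A, encode M d i = 0} : Finset (Generator F n a b))) *
          Fintype.card F ^ (b * (#(Icc ℓ k) / 2 + 1)) := by
        gcongr
        exact (card_le_card (badAt_subset ℓ k)).trans
          (card_biUnion_le.trans (sum_le_sum fun _ _ => card_biUnion_le))
    _ = ∑ A ∈ P, ∑ d ∈ D, Fintype.card (Generator F n a b) := by
        simp only [sum_mul]
        refine sum_congr rfl fun A hA => sum_congr rfl fun d hd => ?_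
        obtain ⟨hAIcc, hAcard⟩ := mem_powersetCard.1 hA
        rw [← hAcard]
        exact card_filter_encode_eq_zero_mul (mem_filter.1 hd).2 fun i hi =>
          (mem_Icc.1 (hAIcc hi)).1
    _ = #P * #D * Fintype.card (Generator F n a b) := by
        simp only [sum_const, smul_eq_mul, mul_assoc]
    _ ≤ _ := by
        gcongr
        · exact (card_powersetCard _ _).trans_le (by rw [Fin.card_Icc])
        · exact (card_filter_le _ _).trans (card_supportedOn ℓ k).le

theorem sq_mul_card_badAt_lt
    (h : ∀ m ≤ n, n ^ 2 * (m.choose (m / 2 + 1) * Fintype.card F ^ (a * m)) <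
      Fintype.card F ^ (b * (m / 2 + 1))) (ℓ k : Fin n) :
    n ^ 2 * #(badAt ℓ k : Finset (Generator F n a b)) < Fintype.card (Generator F n a b) := by
  have hm : #(Icc ℓ k) ≤ n := card_le_univ _ |>.trans_eq (Fintype.card_fin n)
  refine Nat.lt_of_mul_lt_mul_right (a := Fintype.card F ^ (b * (#(Icc ℓ k) / 2 + 1))) ?_
  calc n ^ 2 * #(badAt ℓ k : Finset (Generator F n a b)) *
        Fintype.card F ^ (b * (#(Icc ℓ k) / 2 + 1))
      ≤ n ^ 2 * ((#(Icc ℓ k)).choose (#(Icc ℓ k) / 2 + 1) *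
          Fintype.card F ^ (a * #(Icc ℓ k))) * Fintype.card (Generator F n a b) := by
        rw [mul_assoc, mul_assoc (n ^ 2)]
        exact Nat.mul_le_mul_left _ (card_badAt_mul_le ℓ k)
    _ < _ := Nat.mul_lt_mul_of_pos_right (h _ hm) Fintype.card_pos
    _ = _ := mul_comm _ _

theorem exists_hasHalfDistance
    (h : ∀ m ≤ n, n ^ 2 * (m.choose (m / 2 + 1) * Fintype.card F ^ (a * m)) <
      Fintype.card F ^ (b * (m / 2 + 1))) :
    ∃ M : Generator F n a b, HasHalfDistance M := by
  rcases n.eq_zero_or_pos with rfl | hn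
  · exact ⟨0, fun ℓ => ℓ.elim0⟩
  by_contra hnone
  have hcover : (univ : Finset (Generator F n a b)) ⊆
      (univ : Finset (Fin n × Fin n)).biUnion fun p => badAt p.1 p.2 := by
    intro M _
    have hM : ¬HasHalfDistance M := fun hM => hnone ⟨M, hM⟩
    simp only [HasHalfDistance, not_forall, not_le, exists_prop] at hM
    obtain ⟨ℓ, k, hbad⟩ := hM
    exact mem_biUnion.2 ⟨(ℓ, k), mem_univ _, mem_filter.2 ⟨mem_univ _, hbad⟩⟩
  have hsum := (card_le_card hcover).trans card_biUnion_le
  rw [card_univ] at hsum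
  have : n ^ 2 * ∑ p : Fin n × Fin n, #(badAt p.1 p.2 : Finset (Generator F n a b)) <
      n ^ 2 * Fintype.card (Generator F n a b) := by
    calc _ = ∑ p : Fin n × Fin n, n ^ 2 * #(badAt p.1 p.2 : Finset (Generator F n a b)) :=
          mul_sum _ _ _
      _ < ∑ _p : Fin n × Fin n, Fintype.card (Generator F n a b) :=
          sum_lt_sum_of_nonempty ⟨(⟨0, hn⟩, ⟨0, hn⟩), mem_univ _⟩ fun p _ =>
            sq_mul_card_badAt_lt h p.1 p.2
      _ = _ := by simp [sq]
  exact absurd (Nat.lt_of_mul_lt_mul_left this) hsum.not_gt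

end Counting

end LinearTreeCode

open LinearTreeCode in
theorem truncated_tree_code_large_alphabet_general (s : ℕ) :
    ∃ φ : (i : Fin s) → (Fin (i.val + 1) → (Fin s → Bool)) → (Fin (3 * s) → Bool),
      ∀ (k : ℕ) (hk : k ≤ s) (x x' : Fin k → (Fin s → Bool)) (ℓ : ℕ) (hℓ : ℓ < k),
        (∀ i : Fin k, i.val < ℓ → x i = x' i) → x ⟨ℓ, hℓ⟩ ≠ x' ⟨ℓ, hℓ⟩ →
        ((k : ℝ) - ℓ) / 2 ≤
          (hammingDist
            (fun i : Fin k => φ ⟨i.val, lt_of_lt_of_le i.isLt hk⟩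
              (fun j => x ⟨j.val, lt_of_le_of_lt (Nat.lt_succ_iff.mp j.isLt) i.isLt⟩))
            (fun i : Fin k => φ ⟨i.val, lt_of_lt_of_le i.isLt hk⟩
              (fun j => x' ⟨j.val, lt_of_le_of_lt (Nat.lt_succ_iff.mp j.isLt) i.isLt⟩)) : ℝ) := by
  obtain ⟨M, hM⟩ := exists_hasHalfDistance (F := ZMod 2) (n := s) (a := s) (b := 3 * s)
    fun m hm => by rw [ZMod.card]; exact Nat.sq_mul_choose_mul_two_pow_lt hm
  let e : ZMod 2 ≃ Bool := Fintype.equivOfCardEq rfl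
  let φ (i : Fin s) (p : Fin (i + 1) → Fin s → Bool) : Fin (3 * s) → Bool :=
    e ∘ encode M (zeroExtend fun j => e.symm ∘ p j) i
  refine ⟨φ, fun k hk x x' ℓ hℓ hpre hsplit => ?_⟩
  have hφ (y : Fin k → Fin s → Bool) (i : Fin k) :
      φ ⟨i, lt_of_lt_of_le i.isLt hk⟩
          (fun j => y ⟨j, lt_of_le_of_lt (Nat.lt_succ_iff.mp j.isLt) i.isLt⟩) =
        e ∘ encode M (zeroExtend fun j => e.symm ∘ y j) (Fin.castLE hk i) :=
    congrArg (e ∘ ·) <| encode_congr M fun j hj => by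
      rw [zeroExtend_of_lt _ (Nat.lt_succ_of_le hj),
        zeroExtend_of_lt _ (Nat.lt_of_le_of_lt hj i.isLt)]
  simp only [hφ]
  rw [hammingDist_comp (fun _ => (e ∘ ·)) fun _ => e.injective.comp_left]
  have hdist := hM.sub_half_le_hammingDist hk (ℓ := ⟨ℓ, hℓ.trans_le hk⟩)
    (X := zeroExtend fun j => e.symm ∘ x j) (X' := zeroExtend fun j => e.symm ∘ x' j) hℓ
    (fun j hj => by
      rw [zeroExtend_of_lt _ (lt_trans hj hℓ), zeroExtend_of_lt _ (lt_trans hj hℓ), hpre _ hj])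
    (by
      rw [zeroExtend_of_lt _ hℓ, zeroExtend_of_lt _ hℓ]
      exact fun h => hsplit (e.symm.injective.comp_left h))
  have := (Nat.cast_le (α := ℝ)).2
    ((show k - ℓ ≤ 2 * (k - ℓ - (k - ℓ) / 2) by omega).trans (Nat.mul_le_mul_left 2 hdist))
  push_cast [Nat.cast_sub hℓ.le] at this
  linarith

/-- **Tree code over a large alphabet.** For every positive integer `s` there exists an
`s`-truncated tree code with input alphabet `{0,1}^s` and output alphabet `{0,1}^{3s}`,
given by its online encoding functions `φ i : ({0,1}^s)^{i+1} → {0,1}^{3s}`, whose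
distance is at least `1/2`: for every `k ≤ s` and distinct `x, x' ∈ ({0,1}^s)^k`
with split `ℓ`, the encodings differ in at least `(k − ℓ)/2` positions. -/
theorem truncated_tree_code_large_alphabet (s : ℕ) (hs : 0 < s) :
    ∃ φ : (i : Fin s) → (Fin (i.val + 1) → (Fin s → Bool)) → (Fin (3 * s) → Bool),
      ∀ (k : ℕ) (hk : k ≤ s) (x x' : Fin k → (Fin s → Bool)) (ℓ : ℕ) (hℓ : ℓ < k),
        (∀ i : Fin k, i.val < ℓ → x i = x' i) → x ⟨ℓ, hℓ⟩ ≠ x' ⟨ℓ, hℓ⟩ →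
        ((k : ℝ) - ℓ) / 2 ≤
          (hammingDist
            (fun i : Fin k => φ ⟨i.val, lt_of_lt_of_le i.isLt hk⟩
              (fun j => x ⟨j.val, lt_of_le_of_lt (Nat.lt_succ_iff.mp j.isLt) i.isLt⟩))
            (fun i : Fin k => φ ⟨i.val, lt_of_lt_of_le i.isLt hk⟩
              (fun j => x' ⟨j.val, lt_of_le_of_lt (Nat.lt_succ_iff.mp j.isLt) i.isLt⟩)) : ℝ) :=
  truncated_tree_code_large_alphabet_general s
end

section
/- Let δ ∈ [0,1), let a ∈ ℕ, let s be a positive integer, and suppose ℓ ≥ a·s. Let TC^(s) be an s-truncated tree code from ({0,1}^s)^(≤s) to ({0,1}^{3s})^(≤s) with distance at least 1/2, and let C : {0,1}^{3s} → ({0,1}^{c})^s be a code with relative distance at least δ. Define the composed s²-truncated code TC^(s)_{Lag ℓ} : {0,1}^(≤s²) → ({0,1}^{c})^(≤s²) as follows: given x ∈ {0,1}^k (k ≤ s²), group x into consecutive blocks of s bits forming x' ∈ ({0,1}^s)^{⌊k/s⌋} (discarding leftover bits), set y' = TC^(s)(x'), and write, for 1 ≤ j ≤ ⌊k/s⌋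 and 1 ≤ i ≤ s with js+i−1 ≤ k, the output symbol at position js+i−1 to be the i-th symbol of C(y'_j). Then TC^(s)_{Lag ℓ} is online and has ℓ-lagged distance at least δ·(1/2 − 3/(2a)): for all k ≤ s² and all u, v ∈ {0,1}^k with b = k − split(u,v) ≥ ℓ, Δ(TC^(s)_{Lag ℓ}(u), TC^(s)_{Lag ℓ}(v)) ≥ δ·(1/2 − 3/(2a))·b. -/
/-- Group a bit string `x ∈ {0,1}^k` into `⌊k/s⌋` consecutive blocks of `s` bits
(discarding leftover bits). -/
def toBlocks (s k : ℕ) (x : Fin k → Bool) : Fin (k / s) → (Fin s → Bool) :=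
  fun j t => x ⟨j.val * s + t.val,
    calc j.val * s + t.val < j.val * s + s := Nat.add_lt_add_left t.isLt _
      _ = (j.val + 1) * s := by ring
      _ ≤ (k / s) * s := Nat.mul_le_mul_right _ j.isLt
      _ ≤ k := Nat.div_mul_le_self k s⟩

/-- The encoding map of a truncated tree code given by online encoding functions `φ`. -/
def tcEncode {σ γ : Type} {s : ℕ}
    (φ : (i : Fin s) → (Fin (i.val + 1) → σ) → γ)
    {k : ℕ} (hk : k ≤ s) (x : Fin k → σ) : Fin k → γ :=
  fun i => φ ⟨i.val, lt_of_lt_of_le i.isLt hk⟩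
    (fun j => x ⟨j.val, lt_of_le_of_lt (Nat.lt_succ_iff.mp j.isLt) i.isLt⟩)

/-- The composed code `TC^{(s)}_{Lag ℓ}`: group the input `x ∈ {0,1}^k` into consecutive
blocks of `s` bits (discarding leftovers), encode the resulting block string with the
truncated tree code `φ`, encode each output symbol with the code `C`, and write the
`t`-th symbol of the encoding of the (0-based) `j`-th block at output position
`(j+1)·s − 1 + t` (0-based); the first `s − 1` output symbols are empty (`none`). -/
def composedCode (s c : ℕ) (hs : 0 < s)
    (φ : (i : Fin s) → (Fin (i.val + 1) → (Fin s → Bool)) → (Fin (3 * s) → Bool))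
    (C : (Fin (3 * s) → Bool) → (Fin s → (Fin c → Bool)))
    (k : ℕ) (hk : k ≤ s * s) (x : Fin k → Bool) : Fin k → Option (Fin c → Bool) :=
  fun p =>
    if h : s ≤ p.val + 1 then
      have hq1 : 1 ≤ (p.val + 1) / s := (Nat.one_le_div_iff hs).mpr h
      have hqk : (p.val + 1) / s ≤ k / s := Nat.div_le_div_right p.isLt
      have hks : k / s ≤ s := by
        calc k / s ≤ s * s / s := Nat.div_le_div_right hk
          _ = s := Nat.mul_div_cancel_left s hs
      have hmle : (p.val + 1) / s - 1 + 1 ≤ k / s := by omega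
      some (C (φ ⟨(p.val + 1) / s - 1, by omega⟩
          (fun m => toBlocks s k x ⟨m.val, Nat.lt_of_lt_of_le m.isLt hmle⟩))
        ⟨(p.val + 1) % s, Nat.mod_lt _ hs⟩)
    else none

lemma phi_congr {σ γ : Type} {s : ℕ} (φ : (i : Fin s) → (Fin (i.val + 1) → σ) → γ)
    {a b : ℕ} (ha : a < s) (hb : b < s) (hab : a = b)
    (f : Fin (a + 1) → σ) (g : Fin (b + 1) → σ)
    (hfg : ∀ (i : ℕ) (h : i < a + 1) (h' : i < b + 1), f ⟨i, h⟩ = g ⟨i, h'⟩) :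
    φ ⟨a, ha⟩ f = φ ⟨b, hb⟩ g := by
  subst hab
  have : f = g := funext fun i => hfg i.1 i.2 i.2
  rw [this]

lemma composed_eval (s c : ℕ) (hs : 0 < s)
    (φ : (i : Fin s) → (Fin (i.val + 1) → (Fin s → Bool)) → (Fin (3 * s) → Bool))
    (C : (Fin (3 * s) → Bool) → (Fin s → (Fin c → Bool)))
    (k : ℕ) (hk : k ≤ s * s) (x : Fin k → Bool) (hK : k / s ≤ s)
    (p : Fin k) (j t : ℕ) (ht : t < s) (hj : j < k / s)
    (hp : p.val + 1 = (j + 1) * s + t) :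
    composedCode s c hs φ C k hk x p =
      some (C (tcEncode φ hK (toBlocks s k x) ⟨j, hj⟩) ⟨t, ht⟩) := by
  have hss : s ≤ (j + 1) * s := Nat.le_mul_of_pos_left s (Nat.succ_pos j)
  have hsle : s ≤ p.val + 1 := hp ▸ le_trans hss (Nat.le_add_right _ _)
  have hdiv : (p.val + 1) / s = j + 1 := by
    rw [hp, mul_comm, Nat.mul_add_div hs, Nat.div_eq_of_lt ht, add_zero]
  have hmod : (p.val + 1) % s = t := by
    rw [hp, mul_comm, Nat.mul_add_mod, Nat.mod_eq_of_lt ht]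
  simp only [composedCode, dif_pos hsle, tcEncode]
  congr 1
  rw [show ((⟨(p.val + 1) % s, Nat.mod_lt _ hs⟩ : Fin s)) = ⟨t, ht⟩ from Fin.ext hmod]
  apply congrFun
  apply congrArg
  apply phi_congr
  · omega
  · intro i h h'
    rfl

/-- **Step 1: the composed truncated code has `ℓ`-lagged distance `δ(1/2 − 3/(2a))`.**
If `φ` is an `s`-truncated tree code `({0,1}^s)^(≤s) → ({0,1}^{3s})^(≤s)` of distance at
least `1/2` and `C : {0,1}^{3s} → ({0,1}^c)^s` is a code of relative distance at least `δ`,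
and `ℓ ≥ a·s`, then the composed `s²`-truncated code is online and, for all `u, v ∈ {0,1}^k`
(`k ≤ s²`) with `b = k − split(u,v) ≥ ℓ`, its encodings of `u` and `v` differ in at least
`δ·(1/2 − 3/(2a))·b` positions. -/
theorem composed_code_online_and_lagged_distance
    (δ : ℝ) (hδ0 : 0 ≤ δ) (hδ1 : δ < 1)
    (a s c : ℕ) (ha : 0 < a) (hs : 0 < s)
    (ℓ : ℕ) (hℓ : a * s ≤ ℓ)
    (φ : (i : Fin s) → (Fin (i.val + 1) → (Fin s → Bool)) → (Fin (3 * s) → Bool))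
    (hφ : ∀ (k : ℕ) (hk : k ≤ s) (x x' : Fin k → (Fin s → Bool)) (m : ℕ) (hm : m < k),
      (∀ i : Fin k, i.val < m → x i = x' i) → x ⟨m, hm⟩ ≠ x' ⟨m, hm⟩ →
      ((k : ℝ) - m) / 2 ≤ (hammingDist (tcEncode φ hk x) (tcEncode φ hk x') : ℝ))
    (C : (Fin (3 * s) → Bool) → (Fin s → (Fin c → Bool)))
    (hCinj : Function.Injective C)
    (hCdist : ∀ u v : Fin (3 * s) → Bool, u ≠ v →
      δ * s ≤ (hammingDist (C u) (C v) : ℝ)) :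
    (∀ (k : ℕ) (hk : k ≤ s * s) (x x' : Fin k → Bool) (p : Fin k),
      (∀ q : Fin k, q ≤ p → x q = x' q) →
      composedCode s c hs φ C k hk x p = composedCode s c hs φ C k hk x' p) ∧
    (∀ (k : ℕ) (hk : k ≤ s * s) (u v : Fin k → Bool) (m : ℕ) (hm : m < k),
      (∀ i : Fin k, i.val < m → u i = v i) → u ⟨m, hm⟩ ≠ v ⟨m, hm⟩ →
      ℓ ≤ k - m →
      δ * (1 / 2 - 3 / (2 * (a : ℝ))) * ((k : ℝ) - m) ≤
        (hammingDist (composedCode s c hs φ C k hk u) (composedCode s c hs φ C k hk v) : ℝ)) := by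
  constructor
  · -- online
    intro k hk x x' p hx
    by_cases h : s ≤ p.val + 1
    · simp only [composedCode, dif_pos h]
      have hq1 : 1 ≤ (p.val + 1) / s := (Nat.one_le_div_iff hs).mpr h
      congr 1
      apply congrFun
      apply congrArg
      apply congrArg
      funext mm
      funext tt
      simp only [toBlocks]
      apply hx
      rw [Fin.le_def]
      show mm.val * s + tt.val ≤ p.val
      have hmm : mm.val + 1 ≤ (p.val + 1) / s :=
        le_trans (Nat.succ_le_succ (Nat.lt_succ_iff.mp mm.isLt))
          (le_of_eq (Nat.sub_add_cancel hq1))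
      have hchain : mm.val * s + tt.val + 1 ≤ p.val + 1 := by
        calc mm.val * s + tt.val + 1 ≤ mm.val * s + s := Nat.add_le_add_left tt.isLt _
          _ = (mm.val + 1) * s := by ring
          _ ≤ ((p.val + 1) / s) * s := Nat.mul_le_mul_right _ hmm
          _ ≤ p.val + 1 := Nat.div_mul_le_self _ _
      exact Nat.succ_le_succ_iff.mp hchain
    · simp only [composedCode, dif_neg h]
  · -- lagged distance
    intro k hk u v m hm huv hneq hb
    have hK : k / s ≤ s := by
      calc k / s ≤ s * s / s := Nat.div_le_div_right hk
        _ = s := Nat.mul_div_cancel_left s hs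
    have has : s ≤ k - m :=
      le_trans (le_trans (Nat.le_mul_of_pos_left s ha) hℓ) hb
    have hmsk : m + s ≤ k := by omega
    have hj0s : (m / s) * s ≤ m := Nat.div_mul_le_self m s
    have hj0K : m / s < k / s := by
      have h1 : (m / s + 1) * s ≤ k := by
        rw [Nat.succ_mul]
        exact le_trans (Nat.add_le_add_right hj0s s) hmsk
      exact (Nat.le_div_iff_mul_le hs).mpr h1
    -- block strings
    set yu := tcEncode φ hK (toBlocks s k u) with hyu
    set yv := tcEncode φ hK (toBlocks s k v) with hyv
    have hagree : ∀ i : Fin (k / s), i.val < m / s → toBlocks s k u i = toBlocks s k v i := by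
      intro i hi
      funext t
      simp only [toBlocks]
      apply huv
      show i.val * s + t.val < m
      have : i.val * s + t.val + 1 ≤ m := by
        calc i.val * s + t.val + 1 ≤ i.val * s + s := Nat.add_le_add_left t.isLt _
          _ = (i.val + 1) * s := by ring
          _ ≤ (m / s) * s := Nat.mul_le_mul_right _ hi
          _ ≤ m := hj0s
      omega
    have hveq : (m / s) * s + m % s = m := by
      rw [mul_comm]; exact Nat.div_add_mod m s
    have hdiff : toBlocks s k u ⟨m / s, hj0K⟩ ≠ toBlocks s k v ⟨m / s, hj0K⟩ := by
      intro hEq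
      apply hneq
      have h2 := congrFun hEq ⟨m % s, Nat.mod_lt _ hs⟩
      simp only [toBlocks] at h2
      rw [show (⟨m, hm⟩ : Fin k) = ⟨(m / s) * s + m % s, by rw [hveq]; exact hm⟩ from Fin.ext hveq.symm]
      exact h2
    have hTree : (((k / s : ℕ) : ℝ) - (m / s : ℕ)) / 2 ≤ (hammingDist yu yv : ℝ) :=
      hφ (k / s) hK (toBlocks s k u) (toBlocks s k v) (m / s) hj0K hagree hdiff
    -- the set of "good" differing blocks
    set J : Finset (Fin (k / s)) :=
      Finset.univ.filter (fun j : Fin (k / s) => yu j ≠ yv j ∧ j.val + 2 ≤ k / s) with hJ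
    have hJcard : hammingDist yu yv ≤ J.card + 1 := by
      have hKpos : 0 < k / s := lt_of_le_of_lt (Nat.zero_le _) hj0K
      have hsub : Finset.univ.filter (fun j : Fin (k / s) => yu j ≠ yv j) ⊆
          J ∪ {⟨k / s - 1, by omega⟩} := by
        intro j hj
        rw [Finset.mem_filter] at hj
        rw [Finset.mem_union, hJ, Finset.mem_filter, Finset.mem_singleton]
        by_cases h2 : j.val + 2 ≤ k / s
        · exact Or.inl ⟨Finset.mem_univ _, hj.2, h2⟩
        · exact Or.inr (Fin.ext (show j.val = k / s - 1 by have := j.isLt; omega))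
      calc hammingDist yu yv
          = (Finset.univ.filter (fun j : Fin (k / s) => yu j ≠ yv j)).card := rfl
        _ ≤ (J ∪ {⟨k / s - 1, by omega⟩}).card := Finset.card_le_card hsub
        _ ≤ J.card + 1 := le_trans (Finset.card_union_le _ _) (by simp)
    -- output positions attached to a block
    set Fu := composedCode s c hs φ C k hk u with hFu
    set Fv := composedCode s c hs φ C k hk v with hFv
    set g : Fin (k / s) → Finset (Fin k) := fun j =>
      Finset.univ.filter (fun p : Fin k => (p.val + 1) / s = j.val + 1 ∧ Fu p ≠ Fv p) with hg
    have hKs : (k / s) * s ≤ k := Nat.div_mul_le_self k s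
    have hcard_le : ∀ j ∈ J, hammingDist (C (yu j)) (C (yv j)) ≤ (g j).card := by
      intro j hj
      rw [hJ, Finset.mem_filter] at hj
      obtain ⟨-, hne, hj2⟩ := hj
      have hjk2 : j.val * s + 2 * s ≤ k := by
        have h1 : (j.val + 2) * s ≤ (k / s) * s := Nat.mul_le_mul_right _ hj2
        rw [show (j.val + 2) * s = j.val * s + 2 * s from by ring] at h1
        omega
      have hemb : ∀ t : Fin s, j.val * s + (s - 1) + t.val < k := by
        intro t
        have := t.isLt
        omega
      have hembval : ∀ t : Fin s, (j.val * s + (s - 1) + t.val) + 1 = (j.val + 1) * s + t.val := by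
        intro t
        have e : (j.val + 1) * s = j.val * s + s := by ring
        omega
      have heval : ∀ (w : Fin k → Bool) (t : Fin s),
          composedCode s c hs φ C k hk w ⟨j.val * s + (s - 1) + t.val, hemb t⟩ =
            some (C (tcEncode φ hK (toBlocks s k w) j) t) := by
        intro w t
        exact composed_eval s c hs φ C k hk w hK _ j.val t.val t.isLt j.isLt (hembval t)
      have hmaps : ∀ t ∈ Finset.univ.filter (fun t : Fin s => C (yu j) t ≠ C (yv j) t),
          (⟨j.val * s + (s - 1) + t.val, hemb t⟩ : Fin k) ∈ g j := by
        intro t htmem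
        rw [Finset.mem_filter] at htmem
        rw [hg, Finset.mem_filter]
        refine ⟨Finset.mem_univ _, ?_, ?_⟩
        · show ((j.val * s + (s - 1) + t.val) + 1) / s = j.val + 1
          rw [hembval t, mul_comm, Nat.mul_add_div hs, Nat.div_eq_of_lt t.isLt, add_zero]
        · rw [hFu, hFv, heval u t, heval v t]
          intro hsome
          exact htmem.2 (Option.some.inj hsome ▸ rfl)
      have hinj : Set.InjOn (fun t : Fin s => (⟨j.val * s + (s - 1) + t.val, hemb t⟩ : Fin k))
          (Finset.univ.filter (fun t : Fin s => C (yu j) t ≠ C (yv j) t)) := by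
        intro t1 _ t2 _ heq
        have := congrArg Fin.val heq
        simp only at this
        exact Fin.ext (by omega)
      exact Finset.card_le_card_of_injOn _ hmaps hinj
    have hdisj : ∀ j₁ ∈ J, ∀ j₂ ∈ J, j₁ ≠ j₂ → Disjoint (g j₁) (g j₂) := by
      intro j₁ _ j₂ _ hne12
      rw [Finset.disjoint_left]
      intro p hp1 hp2
      rw [hg, Finset.mem_filter] at hp1 hp2
      exact hne12 (Fin.ext (by omega))
    have hbsub : J.biUnion g ⊆ Finset.univ.filter (fun p : Fin k => Fu p ≠ Fv p) := by
      intro p hp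
      rw [Finset.mem_biUnion] at hp
      obtain ⟨j, -, hpj⟩ := hp
      rw [hg, Finset.mem_filter] at hpj
      rw [Finset.mem_filter]
      exact ⟨Finset.mem_univ _, hpj.2.2⟩
    have hsum : ∑ j ∈ J, hammingDist (C (yu j)) (C (yv j)) ≤ hammingDist Fu Fv := by
      calc ∑ j ∈ J, hammingDist (C (yu j)) (C (yv j))
          ≤ ∑ j ∈ J, (g j).card := Finset.sum_le_sum hcard_le
        _ = (J.biUnion g).card := (Finset.card_biUnion hdisj).symm
        _ ≤ (Finset.univ.filter (fun p : Fin k => Fu p ≠ Fv p)).card :=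
            Finset.card_le_card hbsub
        _ = hammingDist Fu Fv := rfl
    have hlow : (J.card : ℝ) * (δ * s) ≤
        ∑ j ∈ J, (hammingDist (C (yu j)) (C (yv j)) : ℝ) := by
      have := Finset.card_nsmul_le_sum J
        (fun j => (hammingDist (C (yu j)) (C (yv j)) : ℝ)) (δ * s)
        (fun j hj => by
          rw [hJ, Finset.mem_filter] at hj
          exact hCdist _ _ hj.2.1)
      rwa [nsmul_eq_mul] at this
    have hcast : ∑ j ∈ J, (hammingDist (C (yu j)) (C (yv j)) : ℝ) =
        ((∑ j ∈ J, hammingDist (C (yu j)) (C (yv j)) : ℕ) : ℝ) := by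
      push_cast
      rfl
    -- real-number facts
    have hF3 : (J.card : ℝ) * (δ * s) ≤ (hammingDist Fu Fv : ℝ) := by
      rw [hcast] at hlow
      exact le_trans hlow (Nat.cast_le.mpr hsum)
    have hF2 : (hammingDist yu yv : ℝ) ≤ (J.card : ℝ) + 1 := by
      have := (Nat.cast_le (α := ℝ)).mpr hJcard
      push_cast at this
      linarith
    have hkKs : k + 1 ≤ (k / s) * s + s := by
      have h1 := Nat.div_add_mod k s
      have h2 : k % s < s := Nat.mod_lt k hs
      have h3 : s * (k / s) = (k / s) * s := by ring
      omega
    have hF4 : (k : ℝ) + 1 ≤ ((k / s : ℕ) : ℝ) * s + s := by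
      have := (Nat.cast_le (α := ℝ)).mpr hkKs
      push_cast at this
      linarith
    have hF5 : ((m / s : ℕ) : ℝ) * s ≤ (m : ℝ) := by
      have := (Nat.cast_le (α := ℝ)).mpr hj0s
      push_cast at this
      linarith
    have hF6 : (a : ℝ) * s ≤ (k : ℝ) - m := by
      have h1 : a * s ≤ k - m := le_trans hℓ hb
      have h2 : a * s + m ≤ k := by omega
      have := (Nat.cast_le (α := ℝ)).mpr h2
      push_cast at this
      linarith
    have ha' : (0 : ℝ) < a := by exact_mod_cast ha
    have hs' : (0 : ℝ) < s := by exact_mod_cast hs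
    -- main arithmetic
    have hq : 3 / (2 * (a : ℝ)) * ((a : ℝ) * s) = 3 * s / 2 := by
      field_simp
    have h8 : 3 * (s : ℝ) / 2 ≤ 3 / (2 * (a : ℝ)) * ((k : ℝ) - m) := by
      rw [← hq]
      exact mul_le_mul_of_nonneg_left hF6 (by positivity)
    have key : ((k : ℝ) - m) / 2 - 3 / (2 * (a : ℝ)) * ((k : ℝ) - m) ≤
        (s : ℝ) * ((((k / s : ℕ) : ℝ) - ((m / s : ℕ) : ℝ)) / 2 - 1) := by
      linarith [hF4, hF5, h8]
    have h11 : (s : ℝ) * ((((k / s : ℕ) : ℝ) - ((m / s : ℕ) : ℝ)) / 2 - 1) * δ ≤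
        δ * s * (J.card : ℝ) := by
      have hD : (((k / s : ℕ) : ℝ) - ((m / s : ℕ) : ℝ)) / 2 - 1 ≤ (J.card : ℝ) := by
        linarith [hTree, hF2]
      have hmul := mul_le_mul_of_nonneg_left hD (mul_nonneg hδ0 hs'.le)
      linarith [hmul]
    calc δ * (1 / 2 - 3 / (2 * (a : ℝ))) * ((k : ℝ) - m)
        = δ * (((k : ℝ) - m) / 2 - 3 / (2 * (a : ℝ)) * ((k : ℝ) - m)) := by ring
      _ ≤ δ * ((s : ℝ) * ((((k / s : ℕ) : ℝ) - ((m / s : ℕ) : ℝ)) / 2 - 1)) :=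
          mul_le_mul_of_nonneg_left key hδ0
      _ = (s : ℝ) * ((((k / s : ℕ) : ℝ) - ((m / s : ℕ) : ℝ)) / 2 - 1) * δ := by ring
      _ ≤ δ * s * (J.card : ℝ) := h11
      _ = (J.card : ℝ) * (δ * s) := by ring
      _ ≤ (hammingDist Fu Fv : ℝ) := hF3
end

section
/- Let s be a positive even integer and ℓ ≤ s², and let TC^(s)_{Lag ℓ} : {0,1}^(≤s²) → Γ^(≤s²) be an s²-truncated tree code with ℓ-lagged distance at least δ' whose first s−1 output symbols are empty. Define the (untruncated) tree code TC_{Lag ℓ} : {0,1}^* → (Γ×Γ)^* by, for x ∈ {0,1}^k and position i = j·(s²/2) + r with 0 ≤ r < s²/2, setting TC_{Lag ℓ}(x)_i = (TC^(s)_{Lag ℓ}(x|_{[(j−1)s²/2, i]}), TC^(s)_{Lag ℓ}(x|_{[j·s²/2, i]})) (interleaving fresh copies of the truncated code at intervals of length s²/2). Then TC_{Lag ℓ} is online and has (ℓ, s²/2)-lagged distance at least δ': for all k and all u, v ∈ {0,1}^k with ℓ ≤ k − split(u,v) ≤ s²/2, Δ(TC_{Lag ℓ}(u), TC_{Lag ℓ}(v))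 ≥ δ'·(k − split(u,v)). -/
/-!
A disagreement starting at position `m` lies in the block `[jH, (j+1)H)` with `j = m / H`. The
copy of the truncated code started at `jH` sees the whole suffix `[jH, n)`, of length at most
`2H = s²`, and each of its output symbols reappears in the interleaved code: as the second
coordinate in its own block and as the first coordinate in the next one. So the interleaved
codewords differ in at least as many positions as the two outputs of that copy, and the
`ℓ`-lagged distance of the copy applies to a split lying `n - m` before the end.
-/

/-- **The interleaved (untruncated) code `TC_{Lag ℓ}`.**  Fresh copies of the `s²`-truncated
code `T` are started at every multiple of `H = s²/2`; at position `i`, writing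
`i = j·H + r` with `r < H`, the output is the pair consisting of the current symbol of the
copy started at `(j−1)·H` (or `none` when `j = 0`) and the current symbol of the copy
started at `j·H`. -/
def interleaved (s H : ℕ) (hH : 0 < H) (hHs : 2 * H = s * s) {Γ : Type}
    (T : (k : ℕ) → k ≤ s * s → (Fin k → Bool) → (Fin k → Γ))
    (n : ℕ) (x : Fin n → Bool) : Fin n → Option Γ × Γ :=
  fun i =>
    have hjr : i.val / H * H + i.val % H = i.val := by rw [Nat.mul_comm]; exact Nat.div_add_mod i.val H
    have hrH : i.val % H < H := Nat.mod_lt _ hH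
    have hr1 : i.val % H + 1 ≤ s * s := by omega
    have hHr1 : H + i.val % H + 1 ≤ s * s := by omega
    (if hj : 1 ≤ i.val / H then
        have hsub : (i.val / H - 1) * H + H = i.val / H * H := by
          calc (i.val / H - 1) * H + H = (i.val / H - 1 + 1) * H := by ring
            _ = i.val / H * H := by rw [Nat.sub_add_cancel hj]
        some (T (H + i.val % H + 1) hHr1
          (fun q => x ⟨(i.val / H - 1) * H + q.val, by
            have hq := q.isLt
            have hi := i.isLt
            omega⟩)
          ⟨H + i.val % H, Nat.lt_succ_self _⟩)
      else none,
     T (i.val % H + 1) hr1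
       (fun q => x ⟨i.val / H * H + q.val, by
          have hq := q.isLt
          have hi := i.isLt
          omega⟩)
       ⟨i.val % H, Nat.lt_succ_self _⟩)

theorem Nat.mul_add_div_of_lt {a b c : ℕ} (hc : c < b) : (a * b + c) / b = a := by
  rw [Nat.add_comm, Nat.add_mul_div_right _ _ (by omega), Nat.div_eq_of_lt hc, Nat.zero_add]

theorem hammingDist_le_hammingDist_of_embedding {ι κ : Type*} [Fintype ι] [Fintype κ]
    {β γ : Type*} [DecidableEq β] [DecidableEq γ] {x y : ι → β} {x' y' : κ → γ} (e : ι ↪ κ)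
    (h : ∀ i, x i ≠ y i → x' (e i) ≠ y' (e i)) :
    hammingDist x y ≤ hammingDist x' y' :=
  Finset.card_le_card_of_injOn e (fun i hi => by simpa using h i (by simpa using hi))
    e.injective.injOn

def window {α : Type*} {n : ℕ} (x : Fin n → α) (a k : ℕ) (h : a + k ≤ n) : Fin k → α :=
  fun q => x ⟨a + q, by omega⟩

def TruncatedOnline (s : ℕ) {Γ : Type}
    (T : (k : ℕ) → k ≤ s * s → (Fin k → Bool) → (Fin k → Γ)) : Prop :=
  ∀ (k₁ k₂ : ℕ) (h₁ : k₁ ≤ s * s) (h₂ : k₂ ≤ s * s)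
    (x₁ : Fin k₁ → Bool) (x₂ : Fin k₂ → Bool) (p : ℕ) (hp₁ : p < k₁) (hp₂ : p < k₂),
    (∀ (q : ℕ) (hq : q ≤ p),
      x₁ ⟨q, lt_of_le_of_lt hq hp₁⟩ = x₂ ⟨q, lt_of_le_of_lt hq hp₂⟩) →
    T k₁ h₁ x₁ ⟨p, hp₁⟩ = T k₂ h₂ x₂ ⟨p, hp₂⟩

namespace interleaved

variable {s H : ℕ} {hH : 0 < H} {hHs : 2 * H = s * s} {Γ : Type}
  {T : (k : ℕ) → k ≤ s * s → (Fin k → Bool) → (Fin k → Γ)}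

theorem snd_eq_window (hT : TruncatedOnline s T) {n : ℕ} (x : Fin n → Bool) (i : Fin n)
    {a k : ℕ} (ha : i.val / H * H = a) (hk : k ≤ s * s) (hik : i.val % H < k)
    (hkn : a + k ≤ n) :
    (interleaved s H hH hHs T n x i).2 = T k hk (window x a k hkn) ⟨i.val % H, hik⟩ := by
  subst ha
  exact hT _ _ _ _ _ _ _ _ _ fun _ _ => rfl

theorem fst_eq_window (hT : TruncatedOnline s T) {n : ℕ} (x : Fin n → Bool) (i : Fin n)
    (hi : H ≤ i.val) {a k : ℕ} (ha : (i.val / H - 1) * H = a) (hk : k ≤ s * s)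
    (hik : H + i.val % H < k) (hkn : a + k ≤ n) :
    (interleaved s H hH hHs T n x i).1 =
      some (T k hk (window x a k hkn) ⟨H + i.val % H, hik⟩) := by
  subst ha
  have hj : 1 ≤ i.val / H := (Nat.one_le_div_iff hH).2 hi
  simp only [interleaved, dif_pos hj]
  exact congrArg some (hT _ _ _ _ _ _ _ _ _ fun _ _ => rfl)

theorem fst_eq_none {n : ℕ} (x : Fin n → Bool) (i : Fin n) (hi : i.val < H) :
    (interleaved s H hH hHs T n x i).1 = none := by
  have hj : ¬1 ≤ i.val / H := by rw [Nat.one_le_div_iff hH]; omega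
  simp only [interleaved, dif_neg hj]

theorem apply_eq_of_prefix_eq (hT : TruncatedOnline s T) {n : ℕ} {x x' : Fin n → Bool}
    (i : Fin n) (hxx' : ∀ q ≤ i, x q = x' q) :
    interleaved s H hH hHs T n x i = interleaved s H hH hHs T n x' i := by
  have hjr : i.val / H * H + i.val % H = i.val := Nat.div_add_mod' i.val H
  have hrH : i.val % H < H := Nat.mod_lt _ hH
  refine Prod.ext ?_ ?_
  · by_cases hi : H ≤ i.val
    · have hj : 1 ≤ i.val / H := (Nat.one_le_div_iff hH).2 hi
      have hsub : (i.val / H - 1) * H + H = i.val / H * H := by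
        rw [← Nat.succ_mul, Nat.succ_eq_add_one, Nat.sub_add_cancel hj]
      have hk : H + i.val % H + 1 ≤ s * s := by omega
      have hkn : (i.val / H - 1) * H + (H + i.val % H + 1) ≤ n := by omega
      rw [fst_eq_window hT x i hi rfl hk (by omega) hkn,
        fst_eq_window hT x' i hi rfl hk (by omega) hkn]
      exact congrArg some (hT _ _ _ _ _ _ _ _ _ fun q hq =>
        hxx' _ (Fin.mk_le_of_le_val (by omega)))
    · rw [fst_eq_none x i (by omega), fst_eq_none x' i (by omega)]
  · have hk : i.val % H + 1 ≤ s * s := by omega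
    have hkn : i.val / H * H + (i.val % H + 1) ≤ n := by omega
    rw [snd_eq_window hT x i rfl hk (by omega) hkn, snd_eq_window hT x' i rfl hk (by omega) hkn]
    exact hT _ _ _ _ _ _ _ _ _ fun q hq => hxx' _ (Fin.mk_le_of_le_val (by omega))

theorem ne_of_window_ne (hT : TruncatedOnline s T) {n : ℕ} {u v : Fin n → Bool} {j K : ℕ}
    (hK : K ≤ s * s) (hKn : j * H + K ≤ n) (p : Fin K)
    (hne : T K hK (window u (j * H) K hKn) p ≠ T K hK (window v (j * H) K hKn) p) :
    interleaved s H hH hHs T n u ⟨j * H + p, by omega⟩ ≠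
      interleaved s H hH hHs T n v ⟨j * H + p, by omega⟩ := by
  intro heq
  apply hne
  by_cases hpH : p.val < H
  · have hdiv := Nat.mul_add_div_of_lt (a := j) hpH
    have hmod := Nat.mul_add_mod_of_lt (a := j) hpH
    have hik : (j * H + p.val) % H < K := by rw [hmod]; exact p.isLt
    have h2 := congrArg Prod.snd heq
    rwa [snd_eq_window hT u _ (by rw [hdiv]) hK hik hKn,
      snd_eq_window hT v _ (by rw [hdiv]) hK hik hKn,
      show (⟨_, hik⟩ : Fin K) = p from Fin.ext hmod] at h2
  · have hrH : p.val - H < H := by have := p.isLt; omega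
    have hpos : j * H + p.val = (j + 1) * H + (p.val - H) := by rw [Nat.succ_mul]; omega
    have hdiv := Nat.mul_add_div_of_lt (a := j + 1) hrH
    have hmod := Nat.mul_add_mod_of_lt (a := j + 1) hrH
    rw [← hpos] at hdiv hmod
    have hik : H + (j * H + p.val) % H < K := by rw [hmod]; omega
    have hj : (j * H + p.val) / H - 1 = j := by rw [hdiv, Nat.add_sub_cancel]
    have h1 := congrArg Prod.fst heq
    have hi : H ≤ j * H + p.val := by omega
    rwa [fst_eq_window hT u _ hi (by rw [hj]) hK hik hKn,
      fst_eq_window hT v _ hi (by rw [hj]) hK hik hKn, Option.some_inj,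
      show (⟨_, hik⟩ : Fin K) = p from Fin.ext (show H + (j * H + p.val) % H = p by omega)] at h1

theorem hammingDist_window_le [DecidableEq Γ] (hT : TruncatedOnline s T) {n : ℕ}
    (u v : Fin n → Bool) {j K : ℕ} (hK : K ≤ s * s) (hKn : j * H + K ≤ n) :
    hammingDist (T K hK (window u (j * H) K hKn)) (T K hK (window v (j * H) K hKn)) ≤
      hammingDist (interleaved s H hH hHs T n u) (interleaved s H hH hHs T n v) :=
  hammingDist_le_hammingDist_of_embedding ((Fin.natAddEmb (j * H)).trans (Fin.castLEEmb hKn))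
    (ne_of_window_ne hT hK hKn)

end interleaved

theorem interleaved_code_online_and_lagged_distance_general
    (s H : ℕ) (hH : 0 < H) (hHs : 2 * H = s * s)
    {Γ : Type} [DecidableEq Γ]
    (ℓ : ℕ) (δ' : ℝ)
    (T : (k : ℕ) → k ≤ s * s → (Fin k → Bool) → (Fin k → Γ))
    (honline : ∀ (k₁ k₂ : ℕ) (h₁ : k₁ ≤ s * s) (h₂ : k₂ ≤ s * s)
      (x₁ : Fin k₁ → Bool) (x₂ : Fin k₂ → Bool) (p : ℕ) (hp₁ : p < k₁) (hp₂ : p < k₂),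
      (∀ (q : ℕ) (hq : q ≤ p),
        x₁ ⟨q, lt_of_le_of_lt hq hp₁⟩ = x₂ ⟨q, lt_of_le_of_lt hq hp₂⟩) →
      T k₁ h₁ x₁ ⟨p, hp₁⟩ = T k₂ h₂ x₂ ⟨p, hp₂⟩)
    (hlag : ∀ (k : ℕ) (hk : k ≤ s * s) (x x' : Fin k → Bool) (m : ℕ) (hm : m < k),
      (∀ i : Fin k, i.val < m → x i = x' i) → x ⟨m, hm⟩ ≠ x' ⟨m, hm⟩ → ℓ ≤ k - m →
      δ' * ((k : ℝ) - m) ≤ (hammingDist (T k hk x) (T k hk x') : ℝ)) :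
    (∀ (n : ℕ) (x x' : Fin n → Bool) (i : Fin n),
      (∀ q : Fin n, q ≤ i → x q = x' q) →
      interleaved s H hH hHs T n x i = interleaved s H hH hHs T n x' i) ∧
    (∀ (n : ℕ) (u v : Fin n → Bool) (m : ℕ) (hm : m < n),
      (∀ i : Fin n, i.val < m → u i = v i) → u ⟨m, hm⟩ ≠ v ⟨m, hm⟩ →
      ℓ ≤ n - m → n - m ≤ H →
      δ' * ((n : ℝ) - m) ≤
        (hammingDist (interleaved s H hH hHs T n u) (interleaved s H hH hHs T n v) : ℝ)) := by
  refine ⟨fun n x x' i hxx' => interleaved.apply_eq_of_prefix_eq honline i hxx', ?_⟩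
  intro n u v m hm hagree hne hℓ hmH
  have hjr : m / H * H + m % H = m := Nat.div_add_mod' m H
  have hrH : m % H < H := Nat.mod_lt m hH
  have hK : n - m / H * H ≤ s * s := by omega
  have hKn : m / H * H + (n - m / H * H) ≤ n := by omega
  have hlen : ((n - m / H * H : ℕ) : ℝ) - (m % H : ℕ) = n - m := by
    have hm' : (m : ℝ) = (m / H * H : ℕ) + (m % H : ℕ) := by exact_mod_cast hjr.symm
    rw [Nat.cast_sub (by omega), hm']; ring
  calc δ' * ((n : ℝ) - m) = δ' * (((n - m / H * H : ℕ) : ℝ) - (m % H : ℕ)) := by rw [hlen]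
    _ ≤ hammingDist (T _ hK (window u _ _ hKn)) (T _ hK (window v _ _ hKn)) :=
      hlag _ hK _ _ (m % H) (by omega) (fun i hi => hagree _ (show m / H * H + i.val < m by omega))
        (by simpa only [window, hjr] using hne) (by omega)
    _ ≤ _ := by exact_mod_cast interleaved.hammingDist_window_le honline u v hK hKn

/-- **Step 2: interleaving gives an untruncated `(ℓ, s²/2)`-lagged code.**
Let `s` be a positive even integer, `H = s²/2` (i.e. `2H = s²`), and `ℓ ≤ s²`.  If `T` is an
`s²`-truncated tree code (online, with cross-length-consistent encoding functions) whose
first `s − 1` output symbols are empty (independent of the input) and whose `ℓ`-lagged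
distance is at least `δ'`, then the interleaved code is online and has
`(ℓ, s²/2)`-lagged distance at least `δ'`. -/
theorem interleaved_code_online_and_lagged_distance
    (s H : ℕ) (hs : 0 < s) (hseven : 2 ∣ s) (hH : 0 < H) (hHs : 2 * H = s * s)
    {Γ : Type} [DecidableEq Γ]
    (ℓ : ℕ) (hℓs : ℓ ≤ s * s) (δ' : ℝ)
    (T : (k : ℕ) → k ≤ s * s → (Fin k → Bool) → (Fin k → Γ))
    (honline : ∀ (k₁ k₂ : ℕ) (h₁ : k₁ ≤ s * s) (h₂ : k₂ ≤ s * s)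
      (x₁ : Fin k₁ → Bool) (x₂ : Fin k₂ → Bool) (p : ℕ) (hp₁ : p < k₁) (hp₂ : p < k₂),
      (∀ (q : ℕ) (hq : q ≤ p),
        x₁ ⟨q, lt_of_le_of_lt hq hp₁⟩ = x₂ ⟨q, lt_of_le_of_lt hq hp₂⟩) →
      T k₁ h₁ x₁ ⟨p, hp₁⟩ = T k₂ h₂ x₂ ⟨p, hp₂⟩)
    (hempty : ∀ (k : ℕ) (hk : k ≤ s * s) (x x' : Fin k → Bool) (p : Fin k),
      p.val + 1 < s → T k hk x p = T k hk x' p)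
    (hlag : ∀ (k : ℕ) (hk : k ≤ s * s) (x x' : Fin k → Bool) (m : ℕ) (hm : m < k),
      (∀ i : Fin k, i.val < m → x i = x' i) → x ⟨m, hm⟩ ≠ x' ⟨m, hm⟩ → ℓ ≤ k - m →
      δ' * ((k : ℝ) - m) ≤ (hammingDist (T k hk x) (T k hk x') : ℝ)) :
    (∀ (n : ℕ) (x x' : Fin n → Bool) (i : Fin n),
      (∀ q : Fin n, q ≤ i → x q = x' q) →
      interleaved s H hH hHs T n x i = interleaved s H hH hHs T n x' i) ∧
    (∀ (n : ℕ) (u v : Fin n → Bool) (m : ℕ) (hm : m < n),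
      (∀ i : Fin n, i.val < m → u i = v i) → u ⟨m, hm⟩ ≠ v ⟨m, hm⟩ →
      ℓ ≤ n - m → n - m ≤ H →
      δ' * ((n : ℝ) - m) ≤
        (hammingDist (interleaved s H hH hHs T n u) (interleaved s H hH hHs T n v) : ℝ)) :=
  interleaved_code_online_and_lagged_distance_general s H hH hHs ℓ δ' T honline hlag
end

section
/- Let TC_1, …, TC_j be tree codes over input alphabet {0,1}, where TC_m has (ℓ_m, L_m)-lagged distance at least δ' and the intervals satisfy ℓ_1 ≤ 6s_0, L_m ≥ ℓ_{m+1} for all m < j, and L_j ≥ n. Define TC on strings x of length k ≤ n by TC(x)_i = (x|_{[i−6s_0, i]}, TC_1(x)_i, …, TC_j(x)_i) (the first coordinate recording the most recent 6s_0 input bits). Then TC is an n-truncated tree code with distance at least min(1, δ'): for all k ≤ n and distinct u, v ∈ {0,1}^k, Δ(TC(u), TC(v)) ≥ min(1, δ')·(k − split(u,v)). -/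
lemma hamming_mono_of_imp {ι : Type*} [Fintype ι] {α β : Type*} [DecidableEq α]
    [DecidableEq β] (f g : ι → α) (F G : ι → β) (h : ∀ i, f i ≠ g i → F i ≠ G i) :
    hammingDist f g ≤ hammingDist F G := by
  apply Finset.card_le_card
  intro i hi
  simp only [Finset.mem_filter, Finset.mem_univ, true_and] at *
  exact h i hi


/-- **Superimposition of lagged tree codes.**  Let `T 0, …, T (j−1)` be (online) tree codes
over input alphabet `{0,1}`, where `T m` has `(ℓ m, L m)`-lagged distance at least `δ'`,
with `ℓ 0 ≤ 6s₀`, `ℓ (m+1) ≤ L m` for all `m+1 < j`, and `L (j−1) ≥ n`.  The superimposed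
code `TC(x)_i = (x|_{[i−6s₀, i]}, T 0 (x)_i, …, T (j−1) (x)_i)` (the first coordinate
recording the most recent `6s₀` input bits, truncated at the boundary) is an `n`-truncated
tree code of distance at least `min(1, δ')`. -/
theorem superimposed_tree_code
    (j : ℕ) (hj : 0 < j) (s₀ n : ℕ) (δ' : ℝ)
    {Γ : Fin j → Type} [instD : ∀ m, DecidableEq (Γ m)]
    (T : (m : Fin j) → (k : ℕ) → (Fin k → Bool) → (Fin k → Γ m))
    (ℓ L : Fin j → ℕ)
    (honline : ∀ (m : Fin j) (k₁ k₂ : ℕ) (x₁ : Fin k₁ → Bool) (x₂ : Fin k₂ → Bool)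
      (p : ℕ) (hp₁ : p < k₁) (hp₂ : p < k₂),
      (∀ (q : ℕ) (hq : q ≤ p),
        x₁ ⟨q, lt_of_le_of_lt hq hp₁⟩ = x₂ ⟨q, lt_of_le_of_lt hq hp₂⟩) →
      T m k₁ x₁ ⟨p, hp₁⟩ = T m k₂ x₂ ⟨p, hp₂⟩)
    (hlag : ∀ (m : Fin j) (k : ℕ) (x x' : Fin k → Bool) (b : ℕ) (hb : b < k),
      (∀ i : Fin k, i.val < b → x i = x' i) → x ⟨b, hb⟩ ≠ x' ⟨b, hb⟩ →
      ℓ m ≤ k - b → k - b ≤ L m →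
      δ' * ((k : ℝ) - b) ≤ (hammingDist (T m k x) (T m k x') : ℝ))
    (hfirst : ℓ ⟨0, hj⟩ ≤ 6 * s₀)
    (hchain : ∀ (m : Fin j) (h : m.val + 1 < j), ℓ ⟨m.val + 1, h⟩ ≤ L m)
    (hlast : n ≤ L ⟨j - 1, by omega⟩) :
    ∀ (k : ℕ), k ≤ n → ∀ (u v : Fin k → Bool) (b : ℕ) (hb : b < k),
      (∀ i : Fin k, i.val < b → u i = v i) → u ⟨b, hb⟩ ≠ v ⟨b, hb⟩ →
      min 1 δ' * ((k : ℝ) - b) ≤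
        (hammingDist
          (fun i : Fin k =>
            ((fun t : Fin (6 * s₀ + 1) =>
                if 6 * s₀ ≤ i.val + t.val then
                  some (u ⟨i.val + t.val - 6 * s₀, by omega⟩) else none),
             fun m : Fin j => T m k u i))
          (fun i : Fin k =>
            ((fun t : Fin (6 * s₀ + 1) =>
                if 6 * s₀ ≤ i.val + t.val then
                  some (v ⟨i.val + t.val - 6 * s₀, by omega⟩) else none),
             fun m : Fin j => T m k v i)) : ℝ) := by
  intro k hk u v b hb hag hne
  set F : Fin k → (Fin (6 * s₀ + 1) → Option Bool) × ((m : Fin j) → Γ m) :=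
    fun i : Fin k =>
      ((fun t : Fin (6 * s₀ + 1) =>
          if 6 * s₀ ≤ i.val + t.val then
            some (u ⟨i.val + t.val - 6 * s₀, by omega⟩) else none),
       fun m : Fin j => T m k u i) with hF
  set G : Fin k → (Fin (6 * s₀ + 1) → Option Bool) × ((m : Fin j) → Γ m) :=
    fun i : Fin k =>
      ((fun t : Fin (6 * s₀ + 1) =>
          if 6 * s₀ ≤ i.val + t.val then
            some (v ⟨i.val + t.val - 6 * s₀, by omega⟩) else none),
       fun m : Fin j => T m k v i) with hG
  have hkb : (0:ℝ) ≤ (k : ℝ) - b := by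
    have : (b:ℝ) ≤ k := by exact_mod_cast hb.le
    linarith
  by_cases hd : k - b ≤ 6 * s₀ + 1
  · -- short lag: use the first coordinate
    have hsub : Finset.Ici (⟨b, hb⟩ : Fin k) ⊆
        Finset.filter (fun i => F i ≠ G i) Finset.univ := by
      intro i hi
      rw [Finset.mem_Ici, Fin.le_def] at hi
      have hbi : b ≤ i.val := by simpa using hi
      simp only [Finset.mem_filter, Finset.mem_univ, true_and]
      intro hFG
      have hik : i.val ≤ b + 6 * s₀ := by omega
      have hc : 6 * s₀ ≤ i.val + (6 * s₀ + b - i.val) := by omega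
      have h1 : (if 6 * s₀ ≤ i.val + (6 * s₀ + b - i.val) then
            some (u ⟨i.val + (6 * s₀ + b - i.val) - 6 * s₀, by omega⟩) else none) =
          (if 6 * s₀ ≤ i.val + (6 * s₀ + b - i.val) then
            some (v ⟨i.val + (6 * s₀ + b - i.val) - 6 * s₀, by omega⟩) else none) :=
        congrFun (congrArg Prod.fst hFG) ⟨6 * s₀ + b - i.val, by omega⟩
      rw [if_pos hc, if_pos hc] at h1
      have h2 := Option.some.inj h1
      apply hne
      have heq : (⟨i.val + (6 * s₀ + b - i.val) - 6 * s₀, by omega⟩ : Fin k) = ⟨b, hb⟩ :=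
        Fin.ext (by simp only [Fin.val_mk]; omega)
      rwa [heq] at h2
    have hcard : k - b ≤ hammingDist F G := by
      have h3 := Finset.card_le_card hsub
      rw [Fin.card_Ici] at h3
      exact h3
    calc min 1 δ' * ((k:ℝ) - b) ≤ 1 * ((k:ℝ) - b) :=
          mul_le_mul_of_nonneg_right (min_le_left _ _) hkb
      _ = ((k - b : ℕ) : ℝ) := by
          rw [one_mul, Nat.cast_sub hb.le]
      _ ≤ (hammingDist F G : ℝ) := by exact_mod_cast hcard
  · -- long lag: find m with ℓ m ≤ k - b ≤ L m
    have hexists : ∃ m : Fin j, ℓ m ≤ k - b ∧ k - b ≤ L m := by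
      have key : ∀ r : ℕ, ∀ m : Fin j, j - m.val ≤ r → ℓ m ≤ k - b →
          ∃ m' : Fin j, ℓ m' ≤ k - b ∧ k - b ≤ L m' := by
        intro r
        induction r with
        | zero => intro m hm; omega
        | succ r ih =>
          intro m hm hℓ
          by_cases hL : k - b ≤ L m
          · exact ⟨m, hℓ, hL⟩
          · have hm1 : m.val + 1 < j := by
              by_contra hcon
              have hlt := m.isLt
              have hmj : m = ⟨j - 1, by omega⟩ := Fin.ext (by simp only [Fin.val_mk]; omega)
              rw [hmj] at hL
              omega
            exact ih ⟨m.val + 1, hm1⟩ (by simp only [Fin.val_mk]; omega)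
              (le_trans (hchain m hm1) (by omega))
      exact key j ⟨0, hj⟩ (by simp only [Fin.val_mk]; omega) (le_trans hfirst (by omega))
    obtain ⟨m, hm1, hm2⟩ := hexists
    have hTlag := hlag m k u v b hb hag hne hm1 hm2
    have hmono : hammingDist (T m k u) (T m k v) ≤ hammingDist F G := by
      apply hamming_mono_of_imp
      intro i hi hFG
      apply hi
      have := congrFun (congrArg Prod.snd hFG) m
      simpa [F, G] using this
    calc min 1 δ' * ((k:ℝ) - b) ≤ δ' * ((k:ℝ) - b) :=
          mul_le_mul_of_nonneg_right (min_le_right _ _) hkb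
      _ ≤ (hammingDist (T m k u) (T m k v) : ℝ) := hTlag
      _ ≤ (hammingDist F G : ℝ) := by exact_mod_cast hmono
end
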